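/- arXiv:2501.16924 — 9 statements merged into one kernel-verified Lean document; each statement's English description precedes it below -/
import Mathlib

section
/- Let v₀ ∈ ℝⁿ and let F be a C^∞ real-valued function on an open neighbourhood U of (0,0,v₀) in ℝ² × ℝⁿ such that for every v with (0,0,v) ∈ U one has F(u₁,u₂,v) = o(‖(u₁,u₂)‖) as (u₁,u₂) → (0,0). Then there exist an open neighbourhood U′ ⊆ U of (0,0,v₀) and C^∞ functions F₁(u₁,u₂,v) and F₂(u₂,v) (the latter depending only on (u₂,v)) such that F(u₁,u₂,v) = u₁·F₁(u₁,u₂,v) + u₂²·F₂(u₂,v) for all (u₁,u₂,v) ∈ U′. -/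
/-
Cut `F` off with a bump function to get a smooth `G` on all of `ℝ × ℝ × ℝⁿ` that agrees with `F`
near `(0, 0, v₀)`. Hadamard's lemma in `u₁` gives `G = G(0, u₂, v) + u₁ F₁` with
`F₁ = ∫₀¹ ∂₁G(t u₁, u₂, v) dt`, and Taylor's formula with integral remainder in `u₂` gives
`G(0, u₂, v) = G(0, 0, v) + u₂ ∂₂G(0, 0, v) + u₂² F₂(u₂, v)`. Restricted to the line `u₁ = 0`,
the hypothesis `F = o(‖u‖)` forces `G(0, 0, v) = 0` and `∂₂G(0, 0, v) = 0`. Differentiation under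
the integral sign makes `F₁` and `F₂` smooth.
-/

open Topology Filter Asymptotics MeasureTheory Metric Set
open scoped ContDiff Interval

section ParametricIntegral

universe u

-- `H` and `F` share a universe so that the induction below can pass from `F` to `H →L[ℝ] F`.
variable {H F : Type u} [NormedAddCommGroup H] [NormedSpace ℝ H]
  [NormedAddCommGroup F] [NormedSpace ℝ F]

theorem ContDiff.uncurry_fderiv_left {m n : WithTop ℕ∞} {g : H → ℝ → F}
    (hg : ContDiff ℝ n (Function.uncurry g)) (hmn : m + 1 ≤ n) :
    ContDiff ℝ m (Function.uncurry fun x t => fderiv ℝ (fun y => g y t) x) :=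
  ContDiff.fderiv (f := fun (p : H × ℝ) y => g y p.2)
    (hg.comp (contDiff_snd.prodMk contDiff_fst.snd)) contDiff_fst hmn

theorem hasFDerivAt_parametric_intervalIntegral [ProperSpace H] [CompleteSpace F] {g : H → ℝ → F}
    (hg : ContDiff ℝ 1 (Function.uncurry g)) (a b : ℝ) (x₀ : H) :
    HasFDerivAt (fun x => ∫ t in a..b, g x t)
      (∫ t in a..b, fderiv ℝ (fun y => g y t) x₀) x₀ := by
  have hslice : ∀ t, ContDiff ℝ 1 (fun y => g y t) :=
    fun t => hg.comp (contDiff_id.prodMk contDiff_const)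
  have hg' : Continuous (Function.uncurry fun x t => fderiv ℝ (fun y => g y t) x) :=
    (hg.uncurry_fderiv_left (m := 0) (by simp)).continuous
  obtain ⟨C, hC⟩ := ((isCompact_closedBall x₀ 1).prod isCompact_uIcc).exists_bound_of_continuousOn
    hg'.continuousOn
  have hslice_cont : ∀ x, Continuous (g x) := fun x =>
    hg.continuous.comp (continuous_const.prodMk continuous_id)
  exact intervalIntegral.hasFDerivAt_integral_of_dominated_of_fderiv_le (bound := fun _ => C)
    (ball_mem_nhds x₀ one_pos)
    (Eventually.of_forall fun x => (hslice_cont x).aestronglyMeasurable)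
    ((hslice_cont x₀).intervalIntegrable _ _)
    (hg'.comp (continuous_const.prodMk continuous_id)).aestronglyMeasurable
    (Eventually.of_forall fun t ht x hx =>
      hC (x, t) ⟨ball_subset_closedBall hx, uIoc_subset_uIcc ht⟩)
    intervalIntegrable_const
    (Eventually.of_forall fun t _ x _ => ((hslice t).differentiable one_ne_zero x).hasFDerivAt)

theorem contDiff_parametric_intervalIntegral [ProperSpace H] [CompleteSpace F] {n : ℕ∞}
    {g : H → ℝ → F} (hg : ContDiff ℝ n (Function.uncurry g)) (a b : ℝ) :
    ContDiff ℝ n (fun x => ∫ t in a..b, g x t) := by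
  suffices ∀ m : ℕ, ∀ {G : Type u} [NormedAddCommGroup G] [NormedSpace ℝ G] [CompleteSpace G]
      (g : H → ℝ → G), ContDiff ℝ m (Function.uncurry g) →
      ContDiff ℝ m (fun x => ∫ t in a..b, g x t) from
    contDiff_iff_forall_nat_le.2 fun m hm => this m g (hg.of_le (mod_cast hm))
  intro m
  induction m with
  | zero =>
    intro G _ _ _ g hg
    exact contDiff_zero.2
      (intervalIntegral.continuous_parametric_intervalIntegral_of_continuous'
        (contDiff_zero.1 hg) a b)
  | succ m ih =>
    intro G _ _ _ g hg
    have hdiff : ∀ x, HasFDerivAt (fun x => ∫ t in a..b, g x t)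
        (∫ t in a..b, fderiv ℝ (fun y => g y t) x) x :=
      hasFDerivAt_parametric_intervalIntegral (hg.of_le (by norm_cast; omega)) a b
    push_cast
    refine contDiff_succ_iff_fderiv.2 ⟨fun x => (hdiff x).differentiableAt,
      fun h => absurd h (by exact_mod_cast WithTop.natCast_ne_top m), ?_⟩
    rw [funext fun x => (hdiff x).fderiv]
    exact ih _ (hg.uncurry_fderiv_left (by push_cast; rfl))

end ParametricIntegral

theorem exists_contDiff_eqOn_ball {E F : Type*} [NormedAddCommGroup E] [NormedSpace ℝ E]
    [FiniteDimensional ℝ E] [NormedAddCommGroup F] [NormedSpace ℝ F] {n : ℕ∞}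
    {U : Set E} (hU : IsOpen U) {x₀ : E} (hx₀ : x₀ ∈ U) {f : E → F} (hf : ContDiffOn ℝ n f U) :
    ∃ g : E → F, ContDiff ℝ n g ∧ ∃ r > 0, ball x₀ r ⊆ U ∧ EqOn g f (ball x₀ r) := by
  obtain ⟨r, hr, hrU⟩ := nhds_basis_closedBall.mem_iff.1 (hU.mem_nhds hx₀)
  let χ : ContDiffBump x₀ := ⟨r / 2, r, half_pos hr, half_lt_self hr⟩
  refine ⟨fun x => χ x • f x, contDiff_iff_contDiffAt.2 fun x => ?_, r / 2, half_pos hr,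
    (ball_subset_closedBall.trans (closedBall_subset_closedBall (half_le_self hr.le))).trans hrU,
    fun x hx => by simp [χ.one_of_mem_closedBall (ball_subset_closedBall hx)]⟩
  by_cases hx : x ∈ tsupport χ
  · rw [χ.tsupport_eq] at hx
    exact χ.contDiff.contDiffAt.smul (hf.contDiffAt (hU.mem_nhds (hrU hx)))
  · refine contDiffAt_const (c := 0).congr_of_eventuallyEq ?_
    filter_upwards [notMem_tsupport_iff_eventuallyEq.1 hx] with y hy
    simp [hy]

section PartialDeriv

variable {E F : Type*} [NormedAddCommGroup E] [NormedSpace ℝ E]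
  [NormedAddCommGroup F] [NormedSpace ℝ F]

noncomputable def partialDerivFst (G : ℝ × E → F) (p : ℝ × E) : F :=
  fderiv ℝ G p (1, 0)

theorem ContDiff.partialDerivFst {m n : WithTop ℕ∞} {G : ℝ × E → F} (hG : ContDiff ℝ n G)
    (hmn : m + 1 ≤ n) : ContDiff ℝ m (partialDerivFst G) :=
  (hG.fderiv_right hmn).clm_apply contDiff_const

theorem DifferentiableAt.hasDerivAt_partialDerivFst {G : ℝ × E → F} {s : ℝ} {x : E}
    (hG : DifferentiableAt ℝ G (s, x)) :
    HasDerivAt (fun t => G (t, x)) (partialDerivFst G (s, x)) s := by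
  simpa [partialDerivFst, Function.comp_def] using
    hG.hasFDerivAt.comp_hasDerivAt s ((hasDerivAt_id s).prodMk (hasDerivAt_const s x))

variable [CompleteSpace F]

theorem eq_add_smul_integral_partialDerivFst {G : ℝ × E → F} (hG : ContDiff ℝ 1 G) (s : ℝ) (x : E) :
    G (s, x) = G (0, x) + s • ∫ t in (0 : ℝ)..1, partialDerivFst G (t * s, x) := by
  have hderiv : ∀ t ∈ [[(0 : ℝ), 1]],
      HasDerivAt (fun t => G (t * s, x)) (s • partialDerivFst G (t * s, x)) t := fun t _ =>
    ((hG.differentiable one_ne_zero _).hasDerivAt_partialDerivFst.scomp t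
      (hasDerivAt_mul_const s))
  have hint : IntervalIntegrable (fun t => s • partialDerivFst G (t * s, x)) volume 0 1 :=
    ((hG.partialDerivFst (m := 0) (by simp)).continuous.comp (by fun_prop)).const_smul s
      |>.intervalIntegrable _ _
  have := intervalIntegral.integral_eq_sub_of_hasDerivAt hderiv hint
  rw [intervalIntegral.integral_smul] at this
  simp only [one_mul, zero_mul] at this
  rw [this, add_sub_cancel]

theorem eq_add_smul_add_sq_smul_integral {G : ℝ × E → F} (hG : ContDiff ℝ 2 G) (s : ℝ) (x : E) :
    G (s, x) = G (0, x) + s • partialDerivFst G (0, x) +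
      s ^ 2 • ∫ t in (0 : ℝ)..1, (1 - t) • partialDerivFst (partialDerivFst G) (t * s, x) := by
  have hG' : ContDiff ℝ 1 (partialDerivFst G) := hG.partialDerivFst (by norm_num)
  have hG'' : Continuous (partialDerivFst (partialDerivFst G)) :=
    (hG'.partialDerivFst (m := 0) (by simp)).continuous
  -- `ψ 1 = G (s, x)`, `ψ 0` is the first-order Taylor polynomial, and in `ψ'` the first-order
  -- terms cancel.
  let ψ : ℝ → F := fun t => G (t * s, x) + ((1 - t) * s) • partialDerivFst G (t * s, x)
  have hderiv : ∀ t ∈ [[(0 : ℝ), 1]], HasDerivAt ψ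
      (s ^ 2 • (1 - t) • partialDerivFst (partialDerivFst G) (t * s, x)) t := by
    intro t _
    have h₀ := (hG.differentiable two_ne_zero (t * s, x)).hasDerivAt_partialDerivFst.scomp t
      (hasDerivAt_mul_const s)
    have h₁ := (hG'.differentiable one_ne_zero (t * s, x)).hasDerivAt_partialDerivFst.scomp t
      (hasDerivAt_mul_const s)
    have h₂ : HasDerivAt (fun t : ℝ => (1 - t) * s) (-s) t := by
      simpa using ((hasDerivAt_id t).const_sub 1).mul_const s
    convert h₀.add (h₂.smul h₁) using 1
    · rfl
    · simp only [Function.comp_apply]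
      module
  have hint : IntervalIntegrable
      (fun t => s ^ 2 • (1 - t) • partialDerivFst (partialDerivFst G) (t * s, x)) volume 0 1 :=
    (continuous_const.smul ((continuous_const.sub continuous_id).smul
      (hG''.comp (by fun_prop)))).intervalIntegrable _ _
  have := intervalIntegral.integral_eq_sub_of_hasDerivAt hderiv hint
  rw [intervalIntegral.integral_smul] at this
  simp only [ψ, one_mul, zero_mul, sub_self, zero_smul, add_zero, sub_zero] at this
  rw [this]
  abel

end PartialDeriv

theorem Asymptotics.IsLittleO.comp_inr {F : Type*} [NormedAddCommGroup F] {f : ℝ × ℝ → F}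
    (h : f =o[𝓝 0] fun u => ‖u‖) : (fun t => f (0, t)) =o[𝓝 0] fun t => t := by
  refine isLittleO_norm_right.1 ?_
  simpa [Function.comp_def] using
    h.comp_tendsto ((continuous_const.prodMk continuous_id).tendsto' (0 : ℝ) (0 : ℝ × ℝ) rfl)

theorem eq_zero_and_partialDerivFst_eq_zero_of_isLittleO {E F : Type*} [NormedAddCommGroup E]
    [NormedSpace ℝ E] [NormedAddCommGroup F] [NormedSpace ℝ F] {H : ℝ × E → F} {v : E}
    (hH : DifferentiableAt ℝ H (0, v)) (h : (fun t => H (t, v)) =o[𝓝 0] fun t => t) :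
    H (0, v) = 0 ∧ partialDerivFst H (0, v) = 0 := by
  have h₀ : H (0, v) = 0 := mem_of_mem_nhds h.isBigO.eq_zero_imp rfl
  have h₁ : HasDerivAt (fun t => H (t, v)) 0 0 :=
    hasDerivAt_iff_isLittleO_nhds_zero.2 (by simpa [h₀] using h)
  exact ⟨h₀, hH.hasDerivAt_partialDerivFst.unique h₁⟩

/-- division lemma for smooth functions that are `o(‖(u₁,u₂)‖)`:
if `F` is `C^∞` on an open neighbourhood `U` of `(0,0,v₀)` in `ℝ² × ℝⁿ` and
`F(u₁,u₂,v) = o(‖(u₁,u₂)‖)` as `(u₁,u₂) → (0,0)` for every `v` with `(0,0,v) ∈ U`,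
then on some smaller open neighbourhood `U'` one can write
`F(u₁,u₂,v) = u₁·F₁(u₁,u₂,v) + u₂²·F₂(u₂,v)` with `F₁`, `F₂` of class `C^∞`,
`F₂` depending only on `(u₂,v)`. -/
theorem stmt_0 {n : ℕ} (v₀ : Fin n → ℝ) (U : Set (ℝ × ℝ × (Fin n → ℝ)))
    (hU : IsOpen U) (hU₀ : ((0 : ℝ), (0 : ℝ), v₀) ∈ U)
    (F : ℝ × ℝ × (Fin n → ℝ) → ℝ)
    (hF : ContDiffOn ℝ (⊤ : ℕ∞) F U)
    (hlittleo : ∀ v : Fin n → ℝ, ((0 : ℝ), (0 : ℝ), v) ∈ U →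
      (fun u : ℝ × ℝ => F (u.1, u.2, v)) =o[𝓝 (0 : ℝ × ℝ)] fun u => ‖u‖) :
    ∃ U' : Set (ℝ × ℝ × (Fin n → ℝ)), IsOpen U' ∧ ((0 : ℝ), (0 : ℝ), v₀) ∈ U' ∧ U' ⊆ U ∧
    ∃ V' : Set (ℝ × (Fin n → ℝ)), IsOpen V' ∧ ((0 : ℝ), v₀) ∈ V' ∧
    ∃ F₁ : ℝ × ℝ × (Fin n → ℝ) → ℝ, ∃ F₂ : ℝ × (Fin n → ℝ) → ℝ,
      ContDiffOn ℝ (⊤ : ℕ∞) F₁ U' ∧ ContDiffOn ℝ (⊤ : ℕ∞) F₂ V' ∧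
      ∀ p ∈ U', (p.2.1, p.2.2) ∈ V' ∧
        F p = p.1 * F₁ p + p.2.1 ^ 2 * F₂ (p.2.1, p.2.2) := by
  obtain ⟨G, hG, r, hr, hrU, hGF⟩ := exists_contDiff_eqOn_ball hU hU₀ hF
  let H : ℝ × (Fin n → ℝ) → ℝ := fun w => G (0, w)
  have hH : ContDiff ℝ ∞ H := hG.comp (contDiff_const.prodMk contDiff_id)
  have hball : ∀ {u₁ u₂ v}, ((u₁, u₂, v) ∈ ball ((0 : ℝ), (0 : ℝ), v₀) r ↔
      u₁ ∈ ball 0 r ∧ u₂ ∈ ball 0 r ∧ v ∈ ball v₀ r) := by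
    simp [← ball_prod_same]
  have hvanish : ∀ v ∈ ball v₀ r, H (0, v) = 0 ∧ partialDerivFst H (0, v) = 0 := by
    intro v hv
    refine eq_zero_and_partialDerivFst_eq_zero_of_isLittleO (hH.differentiable (by simp) _) ?_
    refine (hlittleo v (hrU (hball.2 ⟨mem_ball_self hr, mem_ball_self hr, hv⟩))).comp_inr.congr'
      ?_ EventuallyEq.rfl
    filter_upwards [ball_mem_nhds (0 : ℝ) hr] with t ht
    exact (hGF (hball.2 ⟨mem_ball_self hr, ht, hv⟩)).symm
  refine ⟨ball (0, 0, v₀) r, isOpen_ball, mem_ball_self hr, hrU, ball (0, v₀) r, isOpen_ball,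
    mem_ball_self hr, fun p => ∫ t in (0 : ℝ)..1, partialDerivFst G (t * p.1, p.2),
    fun w => ∫ t in (0 : ℝ)..1, (1 - t) • partialDerivFst (partialDerivFst H) (t * w.1, w.2),
    ?_, ?_, fun ⟨u₁, u₂, v⟩ hp => ?_⟩
  · exact (contDiff_parametric_intervalIntegral
      ((hG.partialDerivFst le_rfl).comp (by fun_prop)) 0 1).contDiffOn
  · exact (contDiff_parametric_intervalIntegral ((contDiff_const.sub contDiff_snd).smul
      (((hH.partialDerivFst le_rfl).partialDerivFst le_rfl).comp
        ((contDiff_snd.mul contDiff_fst.fst).prodMk contDiff_fst.snd))) 0 1).contDiffOn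
  · obtain ⟨-, hu₂, hv⟩ := hball.1 hp
    obtain ⟨hH₀, hH₁⟩ := hvanish v hv
    refine ⟨by rw [← ball_prod_same]; exact ⟨hu₂, hv⟩, ?_⟩
    rw [← hGF hp, eq_add_smul_integral_partialDerivFst (hG.of_le ENat.LEInfty.out) u₁ (u₂, v),
      show G (0, u₂, v) = H (u₂, v) from rfl,
      eq_add_smul_add_sq_smul_integral (hH.of_le ENat.LEInfty.out) u₂ v, hH₀, hH₁]
    simp only [smul_eq_mul]
    ring
end

section
/- Let (a₀,b₀) ∈ ℝ² with a₀ ≠ −2. For every neighbourhood W of the point (1, I₂, 0, a₀, b₀, 0, 0, 0) in ℝ × GL₂(ℝ) × ℝ² × ℝ⁵ there exists a neighbourhood N of X_{(a₀,b₀,0,0,0)} in the 12-dimensional coefficient space of planar quadratic polynomial vector fields such that every quadratic vector field Z ∈ N can be written as Z(p) = λ·A⁻¹·X_{(a,b,ε₀,ε₁,ε₂)}(A·p + v) for all p ∈ ℝ², for some (λ, A, v, a, b, ε₀, ε₁, ε₂) ∈ W. In other words, every quadratic system sufficiently close (in the topology of coefficients) to X_{(a₀,b₀,0,0,0)} with a₀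 ≠ −2 can be brought by an affine change of coordinates and a constant rescaling of time to the form X_{(a,b,ε₀,ε₁,ε₂)} with (a,b,ε₀,ε₁,ε₂) close to (a₀,b₀,0,0,0). -/
open Topology Filter Matrix

/-- Evaluation of a planar quadratic polynomial vector field from its vector of
12 coefficients (6 monomials `1, x, y, x², xy, y²` for each of the 2 components). -/
noncomputable def quadEval (c : Fin 2 → Fin 6 → ℝ) (p : Fin 2 → ℝ) : Fin 2 → ℝ := fun i =>
  c i 0 + c i 1 * p 0 + c i 2 * p 1 + c i 3 * (p 0) ^ 2 + c i 4 * (p 0 * p 1) + c i 5 * (p 1) ^ 2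

/-- The quadratic vector field `X_μ` for `μ = (a,b,ε₀,ε₁,ε₂)`. -/
noncomputable def Xmu (a b e0 e1 e2 : ℝ) (p : Fin 2 → ℝ) : Fin 2 → ℝ :=
  ![(b - 2) / 4 + e1 * p 0 + (1 - b) * p 1 + a * (p 0) ^ 2 + e2 * (p 0 * p 1) + b * (p 1) ^ 2,
    e0 - 2 * (p 0 * p 1)]

/-- The coefficient vector of `X_μ`. -/
noncomputable def XmuCoeff (a b e0 e1 e2 : ℝ) : Fin 2 → Fin 6 → ℝ :=
  ![![(b - 2) / 4, e1, 1 - b, a, e2, b], ![e0, 0, 0, 0, -2, 0]]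

/-!
The affine changes of coordinates `p ↦ A p + v` together with the time rescalings form a
`1 + 4 + 2 = 7`-dimensional group, and `X_μ` has `5` parameters: together they match the
`12` coefficients of a planar quadratic vector field. Hence it suffices to show that
`(λ, A, v, μ) ↦ λ A⁻¹ X_μ(A · + v)` has an invertible derivative at `(1, I₂, 0, (a₀, b₀, 0, 0, 0))`;
the inverse function theorem then makes it open there. Solving the linearized equations
coefficient by coefficient, the only place where a division is needed is the `x²`-coefficient
of the second component, which equals `-(a₀ + 2) δA₁₀`.
-/

open Function

theorem HasStrictFDerivAt.map_nhds_eq_of_injective {𝕜 E F : Type*} [NontriviallyNormedField 𝕜]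
    [CompleteSpace 𝕜] [NormedAddCommGroup E] [NormedSpace 𝕜 E] [FiniteDimensional 𝕜 E]
    [NormedAddCommGroup F] [NormedSpace 𝕜 F] [FiniteDimensional 𝕜 F]
    {f : E → F} {f' : E →L[𝕜] F} {a : E} (hf : HasStrictFDerivAt f f' a) (hinj : Injective f')
    (hdim : Module.finrank 𝕜 E = Module.finrank 𝕜 F) : map f (𝓝 a) = 𝓝 (f a) := by
  have := FiniteDimensional.complete 𝕜 E
  let e : E ≃L[𝕜] F := (f'.toLinearMap.linearEquivOfInjective hinj hdim).toContinuousLinearEquiv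
  have he : (e : E →L[𝕜] F) = f' := rfl
  exact (he ▸ hf).map_nhds_eq_of_equiv

namespace Matrix

variable {n K : Type*} [Fintype n] [DecidableEq n] [Field K]

open Classical in
noncomputable def toGLOrOne (M : Matrix n n K) : GL n K :=
  if h : M.det ≠ 0 then GeneralLinearGroup.mkOfDetNeZero M h else 1

theorem coe_toGLOrOne {M : Matrix n n K} (h : M.det ≠ 0) : (M.toGLOrOne : Matrix n n K) = M := by
  simp [toGLOrOne, h]

theorem continuousAt_toGLOrOne [TopologicalSpace K] [IsTopologicalDivisionRing K]
    [T1Space K] {M : Matrix n n K} (h : M.det ≠ 0) : ContinuousAt toGLOrOne M := by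
  rw [Units.isInducing_embedProduct.continuousAt_iff]
  have hinv : ContinuousAt Inv.inv M := by
    refine continuousAt_matrix_inv M ?_
    rw [Ring.inverse_eq_inv']
    exact continuousAt_inv₀ h
  refine (continuousAt_id.prodMk (MulOpposite.continuous_op.continuousAt.comp hinv)).congr ?_
  filter_upwards [(isOpen_compl_singleton.preimage continuous_id.matrix_det).mem_nhds h]
    with N (hN : N.det ≠ 0)
  simp [toGLOrOne, hN]

end Matrix

def quadLeftMul (B : Matrix (Fin 2) (Fin 2) ℝ) (c : Fin 2 → Fin 6 → ℝ) : Fin 2 → Fin 6 → ℝ :=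
  fun i j => B i 0 * c 0 j + B i 1 * c 1 j

theorem quadEval_quadLeftMul (B : Matrix (Fin 2) (Fin 2) ℝ) (c : Fin 2 → Fin 6 → ℝ)
    (p : Fin 2 → ℝ) : quadEval (quadLeftMul B c) p = B *ᵥ quadEval c p := by
  ext i
  simp only [quadEval, quadLeftMul, mulVec, dotProduct, Fin.sum_univ_two]
  ring

def quadCompAffine (c : Fin 2 → Fin 6 → ℝ) (A : Matrix (Fin 2) (Fin 2) ℝ) (v : Fin 2 → ℝ) :
    Fin 2 → Fin 6 → ℝ := fun i =>
  ![c i 0 + c i 1 * v 0 + c i 2 * v 1 + c i 3 * v 0 ^ 2 + c i 4 * (v 0 * v 1) + c i 5 * v 1 ^ 2,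
    c i 1 * A 0 0 + c i 2 * A 1 0 + 2 * c i 3 * A 0 0 * v 0 + c i 4 * (A 0 0 * v 1 + A 1 0 * v 0)
      + 2 * c i 5 * A 1 0 * v 1,
    c i 1 * A 0 1 + c i 2 * A 1 1 + 2 * c i 3 * A 0 1 * v 0 + c i 4 * (A 0 1 * v 1 + A 1 1 * v 0)
      + 2 * c i 5 * A 1 1 * v 1,
    c i 3 * A 0 0 ^ 2 + c i 4 * (A 0 0 * A 1 0) + c i 5 * A 1 0 ^ 2,
    2 * c i 3 * A 0 0 * A 0 1 + c i 4 * (A 0 0 * A 1 1 + A 0 1 * A 1 0) + 2 * c i 5 * A 1 0 * A 1 1,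
    c i 3 * A 0 1 ^ 2 + c i 4 * (A 0 1 * A 1 1) + c i 5 * A 1 1 ^ 2]

theorem quadEval_quadCompAffine (c : Fin 2 → Fin 6 → ℝ) (A : Matrix (Fin 2) (Fin 2) ℝ)
    (v p : Fin 2 → ℝ) : quadEval (quadCompAffine c A v) p = quadEval c (A *ᵥ p + v) := by
  ext i
  simp only [quadEval, quadCompAffine, mulVec_fin_two, Pi.add_apply, Fin.isValue, cons_val_zero,
    cons_val_one, cons_val, cons_val_fin_one]
  ring

theorem Xmu_eq_quadEval (a b e0 e1 e2 : ℝ) :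
    Xmu a b e0 e1 e2 = quadEval (XmuCoeff a b e0 e1 e2) := by
  ext p i
  fin_cases i <;>
    simp only [Xmu, XmuCoeff, quadEval, Fin.isValue, Fin.zero_eta, Fin.mk_one, cons_val',
      cons_val_zero, cons_val_one, cons_val, cons_val_fin_one]
  ring

/-- A point `(λ, M, v, μ)` stands for the affine map `p ↦ (1 + M) p + v`, the time scale `λ` and
the field `X_μ`; with `A = 1 + M`, `λ · adj A = (λ det A) A⁻¹` keeps the map polynomial. -/
abbrev NormalFormParam : Type :=
  ℝ × (Fin 2 → Fin 2 → ℝ) × (Fin 2 → ℝ) × (ℝ × ℝ × ℝ × ℝ × ℝ)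

noncomputable def normalFormCoeff (t : NormalFormParam) : Fin 2 → Fin 6 → ℝ :=
  quadLeftMul (t.1 • adjugate (1 + of t.2.1))
    (quadCompAffine (XmuCoeff t.2.2.2.1 t.2.2.2.2.1 t.2.2.2.2.2.1 t.2.2.2.2.2.2.1 t.2.2.2.2.2.2.2)
      (1 + of t.2.1) t.2.2.1)

theorem quadEval_normalFormCoeff (t : NormalFormParam) (p : Fin 2 → ℝ) :
    quadEval (normalFormCoeff t) p = t.1 • adjugate (1 + of t.2.1) *ᵥ
      Xmu t.2.2.2.1 t.2.2.2.2.1 t.2.2.2.2.2.1 t.2.2.2.2.2.2.1 t.2.2.2.2.2.2.2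
        ((1 + of t.2.1) *ᵥ p + t.2.2.1) := by
  rw [normalFormCoeff, quadEval_quadLeftMul, quadEval_quadCompAffine, Xmu_eq_quadEval,
    smul_mulVec]

theorem normalFormCoeff_base (a b : ℝ) :
    normalFormCoeff (1, 0, 0, a, b, 0, 0, 0) = XmuCoeff a b 0 0 0 := by
  ext i j
  fin_cases i <;> fin_cases j <;> simp [normalFormCoeff, quadLeftMul, quadCompAffine, XmuCoeff]

theorem contDiff_normalFormCoeff : ContDiff ℝ 1 normalFormCoeff := by
  refine contDiff_pi.2 fun i => contDiff_pi.2 fun j => ?_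
  fin_cases i <;> fin_cases j <;>
  · simp only [normalFormCoeff, quadLeftMul, quadCompAffine, XmuCoeff, adjugate_fin_two,
      Matrix.add_apply, Matrix.smul_apply, of_apply, one_apply_eq, one_apply_ne, ne_eq, zero_ne_one,
      one_ne_zero, not_false_eq_true, Fin.isValue, Fin.zero_eta, Fin.mk_one, Fin.reduceFinMk,
      cons_val', cons_val_zero, cons_val_one, cons_val, cons_val_fin_one, smul_eq_mul]
    fun_prop

/-- In terms of vector fields, the derivative of `normalFormCoeff` at `(1, 0, 0, (a, b, 0, 0, 0))`
in the direction `(l, M, u, δμ)` is `l X₀ + adj(M) X₀ + DX₀(p)(M p + u) + ∂_μ X · δμ`. -/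
noncomputable def normalFormLinearization (a b : ℝ) (w : NormalFormParam) :
    Fin 2 → Fin 6 → ℝ :=
  let l := w.1; let M := w.2.1; let u := w.2.2.1
  let α := w.2.2.2.1; let β := w.2.2.2.2.1
  let ε₀ := w.2.2.2.2.2.1; let ε₁ := w.2.2.2.2.2.2.1; let ε₂ := w.2.2.2.2.2.2.2
  ![![(l + M 1 1) * (b - 2) / 4 + (1 - b) * u 1 + β / 4,
      2 * a * u 0 + (1 - b) * M 1 0 + ε₁,
      (l + M 1 1) * (1 - b) + (1 - b) * M 1 1 + 2 * b * u 1 - β,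
      (l + M 1 1) * a + 2 * a * M 0 0 + α,
      2 * (a + 1) * M 0 1 + 2 * b * M 1 0 + ε₂,
      (l + M 1 1) * b + 2 * b * M 1 1 + β],
    ![-(b - 2) / 4 * M 1 0 + ε₀,
      -2 * u 1,
      -(1 - b) * M 1 0 - 2 * u 0,
      -(a + 2) * M 1 0,
      -2 * l - 4 * M 0 0 - 2 * M 1 1,
      -b * M 1 0 - 2 * M 0 1]]

set_option maxHeartbeats 1000000 in
theorem fderiv_normalFormCoeff (a b : ℝ) (w : NormalFormParam) :
    fderiv ℝ normalFormCoeff (1, 0, 0, a, b, 0, 0, 0) w = normalFormLinearization a b w := by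
  set x₀ : NormalFormParam := (1, 0, 0, a, b, 0, 0, 0)
  have hline : HasDerivAt (fun s : ℝ => normalFormCoeff (x₀ + s • w))
      (fderiv ℝ normalFormCoeff x₀ w) 0 :=
    (contDiff_normalFormCoeff.differentiable one_ne_zero _).hasFDerivAt.comp_hasDerivAt_of_eq 0
      (by simpa using ((hasDerivAt_id (0 : ℝ)).smul_const w).const_add x₀) (by simp)
  ext i j
  rw [← (hasDerivAt_pi.1 (hasDerivAt_pi.1 hline i) j).deriv]
  fin_cases i <;> fin_cases j <;>
  · simp only [x₀, normalFormCoeff, normalFormLinearization, quadLeftMul, quadCompAffine, XmuCoeff,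
      adjugate_fin_two, Prod.fst_add, Prod.snd_add, Prod.smul_fst, Prod.smul_snd, smul_eq_mul,
      Matrix.add_apply, Matrix.smul_apply, Pi.add_apply, Pi.smul_apply, Pi.zero_apply, of_apply,
      one_apply_eq, one_apply_ne, ne_eq, zero_ne_one, one_ne_zero, not_false_eq_true, Fin.isValue,
      Fin.zero_eta, Fin.mk_one, Fin.reduceFinMk, cons_val', cons_val_zero, cons_val_one,
      cons_val_fin_one, cons_val, sq, zero_add, add_zero, zero_mul, mul_zero]
    simp (disch := fun_prop) only [deriv_fun_add, deriv_fun_sub, deriv_fun_mul, deriv.fun_neg,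
      deriv_div_const, deriv_const, deriv_id'']
    ring

theorem normalFormLinearization_eq_zero {a b : ℝ} (ha : a ≠ -2) {w : NormalFormParam}
    (hw : normalFormLinearization a b w = 0) : w = 0 := by
  obtain ⟨l, M, u, α, β, ε₀, ε₁, ε₂⟩ := w
  have e : ∀ i j, normalFormLinearization a b (l, M, u, α, β, ε₀, ε₁, ε₂) i j = 0 :=
    fun i j => congrFun (congrFun hw i) j
  have e00 := e 0 0; have e01 := e 0 1; have e02 := e 0 2; have e03 := e 0 3
  have e04 := e 0 4; have e05 := e 0 5; have e10 := e 1 0; have e11 := e 1 1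
  have e12 := e 1 2; have e13 := e 1 3; have e14 := e 1 4; have e15 := e 1 5
  simp only [normalFormLinearization, cons_val', cons_val_zero, cons_val_one, cons_val,
    cons_val_fin_one, Fin.isValue] at e00 e01 e02 e03 e04 e05 e10 e11 e12 e13 e14 e15
  have hM10 : M 1 0 = 0 := by
    have : (a + 2) * M 1 0 = 0 := by linear_combination -e13
    exact (mul_eq_zero.1 this).resolve_left (fun h => ha (by linarith))
  have hu1 : u 1 = 0 := by linear_combination -e11 / 2
  have hu0 : u 0 = 0 := by linear_combination -e12 / 2 - (1 - b) / 2 * hM10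
  have hε₀ : ε₀ = 0 := by linear_combination e10 + (b - 2) / 4 * hM10
  have hM01 : M 0 1 = 0 := by linear_combination -e15 / 2 - b / 2 * hM10
  have hε₁ : ε₁ = 0 := by linear_combination e01 - 2 * a * hu0 - (1 - b) * hM10
  have hε₂ : ε₂ = 0 := by linear_combination e04 - 2 * (a + 1) * hM01 - 2 * b * hM10
  have hM11 : M 1 1 = 0 := by linear_combination (e05 + 2 * e02 + 4 * e00) / 2 - 2 * hu1
  have hl : l = 0 := by linear_combination -(e02 + 4 * e00) - b * hM11 + (4 - 2 * b) * hu1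
  have hβ : β = 0 := by
    linear_combination 4 * e00 - (b - 2) * hl - (b - 2) * hM11 - 4 * (1 - b) * hu1
  have hM00 : M 0 0 = 0 := by linear_combination -e14 / 4 - hl / 2 - hM11 / 2
  have hα : α = 0 := by linear_combination e03 - a * hl - a * hM11 - 2 * a * hM00
  have hM : M = 0 := by ext i j; fin_cases i <;> fin_cases j <;> assumption
  have hu : u = 0 := by ext i; fin_cases i <;> assumption
  subst hM hu hl hα hβ hε₀ hε₁ hε₂
  rfl

theorem map_nhds_normalFormCoeff {a : ℝ} (ha : a ≠ -2) (b : ℝ) :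
    map normalFormCoeff (𝓝 (1, 0, 0, a, b, 0, 0, 0)) = 𝓝 (XmuCoeff a b 0 0 0) := by
  have hinj : Injective (fderiv ℝ normalFormCoeff (1, 0, 0, a, b, 0, 0, 0)) := by
    refine (injective_iff_map_eq_zero _).2 fun w hw => normalFormLinearization_eq_zero (b := b) ha ?_
    rwa [← fderiv_normalFormCoeff]
  have hdim : Module.finrank ℝ NormalFormParam = Module.finrank ℝ (Fin 2 → Fin 6 → ℝ) := by
    simp [Module.finrank_prod, Module.finrank_pi_fintype]
  rw [← normalFormCoeff_base]
  exact ((contDiff_normalFormCoeff.contDiffAt).hasStrictFDerivAt one_ne_zero).map_nhds_eq_of_injective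
    hinj hdim

/-- every quadratic vector field sufficiently close (in the topology of
coefficients) to `X_{(a₀,b₀,0,0,0)}`, with `a₀ ≠ −2`, can be brought by an affine change
of coordinates `p ↦ A·p + v` and a constant rescaling of time `λ` to the form
`X_{(a,b,ε₀,ε₁,ε₂)}`, with `(λ,A,v,a,b,ε₀,ε₁,ε₂)` arbitrarily close to
`(1, I₂, 0, a₀, b₀, 0, 0, 0)`. -/
theorem stmt_1 (a₀ b₀ : ℝ) (h : a₀ ≠ -2) :
    ∀ W ∈ 𝓝 (((1 : ℝ), (1 : GL (Fin 2) ℝ), (0 : Fin 2 → ℝ),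
        (a₀, b₀, (0 : ℝ), (0 : ℝ), (0 : ℝ))) :
        ℝ × GL (Fin 2) ℝ × (Fin 2 → ℝ) × (ℝ × ℝ × ℝ × ℝ × ℝ)),
      ∃ N ∈ 𝓝 (XmuCoeff a₀ b₀ 0 0 0),
        ∀ c ∈ N, ∃ (lam : ℝ) (A : GL (Fin 2) ℝ) (v : Fin 2 → ℝ) (a b e0 e1 e2 : ℝ),
          (lam, A, v, (a, b, e0, e1, e2)) ∈ W ∧
          ∀ p : Fin 2 → ℝ,
            quadEval c p =
              lam • (↑(A⁻¹) : Matrix (Fin 2) (Fin 2) ℝ).mulVec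
                (Xmu a b e0 e1 e2 ((↑A : Matrix (Fin 2) (Fin 2) ℝ).mulVec p + v)) := by
  intro W hW
  set x₀ : NormalFormParam := (1, 0, 0, a₀, b₀, 0, 0, 0)
  let A : NormalFormParam → Matrix (Fin 2) (Fin 2) ℝ := fun t => 1 + of t.2.1
  let φ : NormalFormParam → ℝ × GL (Fin 2) ℝ × (Fin 2 → ℝ) × (ℝ × ℝ × ℝ × ℝ × ℝ) :=
    fun t => (t.1 * (A t).det, (A t).toGLOrOne, t.2.2.1, t.2.2.2)
  have hA : Continuous A := continuous_const.add continuous_snd.fst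
  have hdet₀ : (A x₀).det ≠ 0 := by simp [A, x₀]
  have hφ : ContinuousAt φ x₀ :=
    (continuous_fst.mul hA.matrix_det).continuousAt.prodMk
      (((continuousAt_toGLOrOne hdet₀).comp hA.continuousAt).prodMk continuous_snd.snd.continuousAt)
  have hφx₀ : φ x₀ = (1, 1, 0, a₀, b₀, 0, 0, 0) := by
    simp [φ, A, x₀, Units.ext_iff, coe_toGLOrOne]
  have hU : φ ⁻¹' W ∩ {t | (A t).det ≠ 0} ∈ 𝓝 x₀ :=
    inter_mem (hφ.preimage_mem_nhds (hφx₀ ▸ hW))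
      (hA.matrix_det.continuousAt.preimage_mem_nhds (isOpen_compl_singleton.mem_nhds hdet₀))
  refine ⟨normalFormCoeff '' _, map_nhds_normalFormCoeff h b₀ ▸ image_mem_map hU, ?_⟩
  rintro _ ⟨t, ⟨htW, hdet⟩, rfl⟩
  refine ⟨_, _, _, _, _, _, _, _, htW, fun p => ?_⟩
  rw [quadEval_normalFormCoeff, coe_units_inv, coe_toGLOrOne hdet, inv_def, Ring.inverse_eq_inv',
    smul_mulVec, smul_smul, mul_inv_cancel_right₀ hdet]
end

section
/- Let W be a subset of ℝ^N (with the induced topology), let ε > 0, n ∈ ℕ, and let F(s;μ) = Σ_{i=1}^{n} δ_i(μ)·f_i(s;μ) + f_{n+1}(s;μ), where f_i : (0,ε) × W → ℝ (for 1 ≤ i ≤ n+1) and δ_i : W → ℝ (for 1 ≤ i ≤ n) are continuous. Suppose μ⋆ ∈ V(δ₁,…,δ_n) satisfies: (a) for every ρ ∈ (0,ε), the function s ↦ F(s;μ⋆) is not identically zero on (0,ρ); (b) f_i(s;μ) > 0 for 1 ≤ i ≤ n for all (s,μ) in some neighbourhood of (0,μ⋆) in (0,ε) × W; (c) lim_{s→0}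 f_{i+1}(s;μ)/f_i(s;μ) = 0 for 1 ≤ i ≤ n, for every μ in some neighbourhood of μ⋆ in W; and (d) δ₁,…,δ_n are independent at μ⋆. Then for every neighbourhood V of μ⋆ in W and every ρ > 0 there exists μ₀ ∈ V such that the function s ↦ F(s;μ₀) has at least n distinct zeros in the interval (0,ρ). -/
open Topology Filter Set

/-- The real variety `V(δ₀,…,δ_{i−1})` in `W` (the set of `μ ∈ W` where the first `i`
functions vanish; for `i = 0` this is `W` itself). -/
def Vset {N n : ℕ} (W : Set (Fin N → ℝ)) (δ : Fin n → (Fin N → ℝ) → ℝ) (i : ℕ) :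
    Set (Fin N → ℝ) :=
  {μ ∈ W | ∀ j : Fin n, (j : ℕ) < i → δ j μ = 0}

/-- The functions `δ₀,…,δ_{n−1}` are *independent* at `μ⋆ ∈ V(δ₀,…,δ_{n−1})`
(Definition of independence, with neighbourhoods taken in the induced topology of `W`):
(1) every neighbourhood of `μ⋆` in `W` contains two points of `V(δ₀,…,δ_{n−2})` where the
last function `δ_{n−1}` takes values of opposite signs; (2)–(3) for `1 ≤ i ≤ n−1`, if
`μ₀ ∈ V(δ₀,…,δ_{i−1})` and `δ_i(μ₀) ≠ 0`, then every neighbourhood of `μ₀` in `W`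
contains a point `μ ∈ V(δ₀,…,δ_{i−2})` with `δ_{i−1}(μ)·δ_i(μ₀) < 0`. -/
def IndependentAt {N n : ℕ} (W : Set (Fin N → ℝ)) (δ : Fin n → (Fin N → ℝ) → ℝ)
    (μs : Fin N → ℝ) : Prop :=
  (∀ hn : 0 < n, ∀ U ∈ 𝓝[W] μs, ∃ μ₁ ∈ U, ∃ μ₂ ∈ U,
    μ₁ ∈ Vset W δ (n - 1) ∧ μ₂ ∈ Vset W δ (n - 1) ∧
    δ ⟨n - 1, Nat.sub_lt hn one_pos⟩ μ₁ * δ ⟨n - 1, Nat.sub_lt hn one_pos⟩ μ₂ < 0) ∧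
  (∀ i : ℕ, 1 ≤ i → ∀ hi : i < n, ∀ μ₀ ∈ Vset W δ i, δ ⟨i, hi⟩ μ₀ ≠ 0 →
    ∀ U ∈ 𝓝[W] μ₀, ∃ μ ∈ U, μ ∈ Vset W δ (i - 1) ∧
      δ ⟨i - 1, lt_of_le_of_lt (Nat.sub_le i 1) hi⟩ μ * δ ⟨i, hi⟩ μ₀ < 0)

lemma my_pos_trans {x y z : ℝ} (h1 : 0 < x * y) (h2 : 0 < y * z) : 0 < x * z := by
  rcases mul_pos_iff.1 h1 with ⟨a1, a2⟩ | ⟨a1, a2⟩ <;>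
    rcases mul_pos_iff.1 h2 with ⟨b1, b2⟩ | ⟨b1, b2⟩ <;>
    first
      | exact mul_pos a1 b2
      | exact mul_pos_of_neg_of_neg a1 b2
      | linarith

lemma my_sign_opp {x y z : ℝ} (h1 : 0 < x * y) (h2 : z * y < 0) : x * z < 0 := by
  rcases mul_pos_iff.1 h1 with ⟨a1, a2⟩ | ⟨a1, a2⟩ <;>
    rcases mul_neg_iff.1 h2 with ⟨b1, b2⟩ | ⟨b1, b2⟩ <;>
    first
      | exact mul_neg_of_pos_of_neg a1 b1
      | exact mul_neg_of_neg_of_pos a1 b1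
      | linarith

lemma my_trans_sign {a a' b b' : ℝ} (ha : 0 < a' * a) (hb : 0 < b' * b)
    (hab : a * b < 0) : a' * b' < 0 := by
  have h1 : a' * b < 0 := my_sign_opp ha (by linarith [hab] : b * a < 0)
  have h2 : b' * a' < 0 := my_sign_opp hb h1
  linarith [h2]

lemma my_ivt_zeros {g : ℝ → ℝ} {ε ρ : ℝ} (hρε : ρ ≤ ε)
    (hg : ContinuousOn g (Ioo 0 ε)) (m : ℕ) (t : ℕ → ℝ)
    (ht : ∀ j ≤ m, t j ∈ Ioo (0:ℝ) ρ)
    (hmono : ∀ j < m, t j < t (j+1))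
    (halt : ∀ j < m, g (t j) * g (t (j+1)) < 0) :
    ∃ S : Finset ℝ, m ≤ S.card ∧ ∀ s ∈ S, s ∈ Ioo (0:ℝ) ρ ∧ g s = 0 := by
  have hz : ∀ j < m, ∃ z ∈ Ioo (t j) (t (j+1)), g z = 0 := by
    intro j hj
    have h1 := ht j hj.le
    have h2 := ht (j+1) hj
    have hsub : Icc (t j) (t (j+1)) ⊆ Ioo 0 ε :=
      fun x hx => ⟨lt_of_lt_of_le h1.1 hx.1, lt_of_le_of_lt hx.2 (lt_of_lt_of_le h2.2 hρε)⟩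
    have hcont := hg.mono hsub
    have hlt := hmono j hj
    have hne : g (t j) ≠ 0 := by
      intro h
      have := halt j hj
      rw [h, zero_mul] at this
      exact lt_irrefl 0 this
    rcases lt_or_gt_of_ne hne with h | h
    · have hpos : 0 < g (t (j+1)) := by nlinarith [halt j hj]
      obtain ⟨z, hz, hz0⟩ := intermediate_value_Ioo hlt.le hcont (⟨h, hpos⟩ : (0:ℝ) ∈ Ioo (g (t j)) (g (t (j+1))))
      exact ⟨z, hz, hz0⟩
    · have hneg : g (t (j+1)) < 0 := by nlinarith [halt j hj]
      obtain ⟨z, hz, hz0⟩ := intermediate_value_Ioo' hlt.le hcont (⟨hneg, h⟩ : (0:ℝ) ∈ Ioo (g (t (j+1))) (g (t j)))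
      exact ⟨z, hz, hz0⟩
  choose! z hzmem hz0 using hz
  have tm : ∀ a b, a ≤ b → b ≤ m → t a ≤ t b := by
    intro a b hab hbm
    induction b with
    | zero => have : a = 0 := by omega
              simp [this]
    | succ b ih =>
      rcases Nat.lt_or_ge a (b+1) with h | h
      · exact (ih (by omega) (by omega)).trans (hmono b (by omega)).le
      · have : a = b + 1 := by omega
        simp [this]
  have zmono : ∀ a b, a < b → b < m → z a < z b := by
    intro a b hab hbm
    have h1 := (hzmem a (by omega)).2
    have h2 := (hzmem b hbm).1
    have := tm (a+1) b (by omega) (by omega)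
    linarith
  have hinj : Set.InjOn z (Finset.range m) := by
    intro a haa b hbb hab
    simp only [Finset.coe_range, Set.mem_Iio] at haa hbb
    by_contra hne
    rcases Nat.lt_or_ge a b with h | h
    · exact absurd hab (ne_of_lt (zmono a b h hbb))
    · have : b < a := by omega
      exact absurd hab.symm (ne_of_lt (zmono b a this haa))
  refine ⟨(Finset.range m).image z, ?_, ?_⟩
  · rw [Finset.card_image_of_injOn hinj, Finset.card_range]
  · intro s hs
    simp only [Finset.mem_image, Finset.mem_range] at hs
    obtain ⟨j, hj, rfl⟩ := hs
    have h1 := (hzmem j hj).1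
    have h2 := (hzmem j hj).2
    exact ⟨⟨lt_trans (ht j hj.le).1 h1, lt_trans h2 (ht (j+1) hj).2⟩, hz0 j hj⟩

lemma my_dominance {N n : ℕ} {a : ℝ}
    (f : Fin (n + 1) → ℝ → (Fin N → ℝ) → ℝ)
    (δ : Fin n → (Fin N → ℝ) → ℝ)
    (F : ℝ → (Fin N → ℝ) → ℝ)
    (hFdef : ∀ s μ, F s μ =
      (∑ i : Fin n, δ i μ * f i.castSucc s μ) + f (Fin.last n) s μ)
    (μ : Fin N → ℝ) (ha : 0 < a)
    (hpos : ∀ s ∈ Ioo (0:ℝ) a, ∀ i : Fin n, 0 < f i.castSucc s μ)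
    (hrat : ∀ i : Fin n,
      Tendsto (fun s => f i.succ s μ / f i.castSucc s μ) (𝓝[>] (0:ℝ)) (𝓝 0))
    (j : Fin n) (hvan : ∀ i : Fin n, (i : ℕ) < (j : ℕ) → δ i μ = 0)
    (hδj : δ j μ ≠ 0) :
    ∀ᶠ s in 𝓝[>] (0:ℝ), 0 < F s μ * δ j μ := by
  have hIoo : Ioo (0:ℝ) a ∈ 𝓝[>] (0:ℝ) := Ioo_mem_nhdsGT_of_mem ⟨le_refl 0, ha⟩
  have claim : ∀ m : ℕ, (hm : m ≤ n) → (j : ℕ) < m →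
      Tendsto (fun s => f ⟨m, Nat.lt_succ_of_le hm⟩ s μ / f j.castSucc s μ)
        (𝓝[>] (0:ℝ)) (𝓝 0) := by
    intro m
    induction m with
    | zero => intro _ h; omega
    | succ m ih =>
      intro hm hjm
      rcases Nat.lt_or_ge (j : ℕ) m with h | h
      · have hmn : m < n := by omega
        have hrm := hrat ⟨m, hmn⟩
        have key : Tendsto (fun s => (f ⟨m+1, by omega⟩ s μ / f ⟨m, by omega⟩ s μ)
            * (f ⟨m, by omega⟩ s μ / f j.castSucc s μ)) (𝓝[>] (0:ℝ)) (𝓝 0) := by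
          have h2 := ih (by omega) h
          have : Fin.succ (⟨m, hmn⟩ : Fin n) = ⟨m+1, by omega⟩ := rfl
          have hcc : Fin.castSucc (⟨m, hmn⟩ : Fin n) = ⟨m, by omega⟩ := rfl
          rw [this, hcc] at hrm
          simpa using hrm.mul h2
        refine Tendsto.congr' ?_ key
        filter_upwards [hIoo] with s hs
        have hfm : f ⟨m, by omega⟩ s μ ≠ 0 := by
          have := hpos s hs ⟨m, hmn⟩
          exact ne_of_gt (by simpa [Fin.castSucc] using this)
        field_simp
      · have hjme : (j : ℕ) = m := by omega
        have hmn : m < n := by omega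
        have := hrat ⟨m, hmn⟩
        have hs : Fin.succ (⟨m, hmn⟩ : Fin n) = ⟨m+1, by omega⟩ := rfl
        have hcc : Fin.castSucc (⟨m, hmn⟩ : Fin n) = ⟨m, by omega⟩ := rfl
        rw [hs, hcc] at this
        have hcj : j.castSucc = (⟨m, by omega⟩ : Fin (n+1)) := by
          ext; simpa using hjme
        rw [hcj]
        exact this
  set d := δ j μ with hd
  have hT : Tendsto (fun s => F s μ / (d * f j.castSucc s μ)) (𝓝[>] (0:ℝ)) (𝓝 1) := by
    have hterm : ∀ i : Fin n, Tendsto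
        (fun s => (δ i μ / d) * (f i.castSucc s μ / f j.castSucc s μ))
        (𝓝[>] (0:ℝ)) (𝓝 (if i = j then 1 else 0)) := by
      intro i
      rcases lt_trichotomy (i : ℕ) (j : ℕ) with h | h | h
      · have : δ i μ = 0 := hvan i h
        simp only [this, zero_div, zero_mul]
        have hij : i ≠ j := fun he => by simp [he] at h
        simp only [if_neg hij]
        exact tendsto_const_nhds
      · have hij : i = j := Fin.ext h
        subst hij
        simp only [if_pos rfl]
        have : (fun s => (δ i μ / d) * (f i.castSucc s μ / f i.castSucc s μ))
            =ᶠ[𝓝[>] (0:ℝ)] fun _ => 1 := by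
          filter_upwards [hIoo] with s hs
          have := hpos s hs i
          rw [div_self (ne_of_gt this), div_self hδj, one_mul]
        rw [tendsto_congr' this]
        exact tendsto_const_nhds
      · have hij : i ≠ j := fun he => by simp [he] at h
        simp only [if_neg hij]
        have hmle : (i : ℕ) ≤ n := le_of_lt i.isLt
        have hic : i.castSucc = (⟨(i:ℕ), Nat.lt_succ_of_le hmle⟩ : Fin (n+1)) := rfl
        have := claim (i : ℕ) hmle h
        rw [hic]
        simpa using tendsto_const_nhds.mul this
    have hsum : Tendsto (fun s => ∑ i : Fin n,
        (δ i μ / d) * (f i.castSucc s μ / f j.castSucc s μ)) (𝓝[>] (0:ℝ))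
        (𝓝 (∑ i : Fin n, if i = j then 1 else 0)) :=
      tendsto_finset_sum _ (fun i _ => hterm i)
    have hsumval : (∑ i : Fin n, if i = j then (1:ℝ) else 0) = 1 := by simp
    rw [hsumval] at hsum
    have hlast : Tendsto (fun s => (1 / d) * (f (Fin.last n) s μ / f j.castSucc s μ))
        (𝓝[>] (0:ℝ)) (𝓝 0) := by
      have hle : (n : ℕ) ≤ n := le_refl n
      have := claim n hle j.isLt
      have hl : Fin.last n = (⟨n, Nat.lt_succ_of_le hle⟩ : Fin (n+1)) := rfl
      rw [hl]
      simpa using tendsto_const_nhds.mul this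
    have htot := hsum.add hlast
    rw [add_zero] at htot
    refine Tendsto.congr' ?_ htot
    filter_upwards [hIoo] with s hs
    have hfj : f j.castSucc s μ ≠ 0 := ne_of_gt (hpos s hs j)
    rw [hFdef s μ, add_div, Finset.sum_div]
    congr 1
    · refine Finset.sum_congr rfl fun i _ => ?_
      rw [mul_div_mul_comm]
    · rw [one_div_mul_eq_div, div_div, mul_comm]
  have hq : ∀ᶠ s in 𝓝[>] (0:ℝ), 0 < F s μ / (d * f j.castSucc s μ) :=
    hT.eventually (eventually_gt_nhds one_pos)
  filter_upwards [hq, hIoo] with s hs1 hs2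
  have hfj : 0 < f j.castSucc s μ := hpos s hs2 j
  have hdf : d * f j.castSucc s μ ≠ 0 := mul_ne_zero hδj (ne_of_gt hfj)
  have hFv : F s μ = (F s μ / (d * f j.castSucc s μ)) * (d * f j.castSucc s μ) :=
    (div_mul_cancel₀ _ hdf).symm
  rw [hFv]
  have hd2 : 0 < d * d := by
    rcases lt_or_gt_of_ne hδj with h | h
    · exact mul_pos_of_neg_of_neg h h
    · exact mul_pos h h
  nlinarith [mul_pos hs1 hfj]

/-- lower bound for the number of bifurcating zeros: if
`F(s;μ) = Σ_{i} δ_i(μ)·f_i(s;μ) + f_n(s;μ)` with continuous data, `μ⋆` is a common zero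
of the `δ_i`, (a) `F(·;μ⋆)` is not identically zero near `0`, (b) the `f_i` (`i < n`) are
positive near `(0,μ⋆)`, (c) `f_{i+1}/f_i → 0` as `s → 0⁺` near `μ⋆`, and (d) the `δ_i` are
independent at `μ⋆`, then arbitrarily close to `μ⋆` in `W` there are parameters `μ₀` for
which `F(·;μ₀)` has at least `n` distinct zeros in `(0,ρ)`, for every small `ρ > 0`. -/
theorem stmt_3 {N : ℕ} (W : Set (Fin N → ℝ)) (ε : ℝ) (hε : 0 < ε) (n : ℕ)
    (f : Fin (n + 1) → ℝ → (Fin N → ℝ) → ℝ)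
    (δ : Fin n → (Fin N → ℝ) → ℝ)
    (F : ℝ → (Fin N → ℝ) → ℝ)
    (hFdef : ∀ s μ, F s μ =
      (∑ i : Fin n, δ i μ * f i.castSucc s μ) + f (Fin.last n) s μ)
    (hf : ∀ i : Fin (n + 1),
      ContinuousOn (fun q : ℝ × (Fin N → ℝ) => f i q.1 q.2) (Ioo 0 ε ×ˢ W))
    (hδ : ∀ i : Fin n, ContinuousOn (δ i) W)
    (μs : Fin N → ℝ) (hμs : μs ∈ W) (hzero : ∀ i : Fin n, δ i μs = 0)
    (ha : ∀ ρ, 0 < ρ → ρ < ε → ∃ s : ℝ, 0 < s ∧ s < ρ ∧ F s μs ≠ 0)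
    (hb : ∀ᶠ q : ℝ × (Fin N → ℝ) in 𝓝[Ioo 0 ε ×ˢ W] ((0 : ℝ), μs),
      ∀ i : Fin n, 0 < f i.castSucc q.1 q.2)
    (hc : ∀ᶠ μ in 𝓝[W] μs, ∀ i : Fin n,
      Tendsto (fun s => f i.succ s μ / f i.castSucc s μ) (𝓝[>] (0 : ℝ)) (𝓝 0))
    (hd : IndependentAt W δ μs) :
    ∀ V ∈ 𝓝[W] μs, ∀ ρ, 0 < ρ → ρ ≤ ε → ∃ μ₀ ∈ V ∩ W, ∃ S : Finset ℝ,
      n ≤ S.card ∧ ∀ s ∈ S, s ∈ Ioo (0 : ℝ) ρ ∧ F s μ₀ = 0 := by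
  intro V hV ρ hρ hρε
  rcases Nat.eq_zero_or_pos n with hn0 | hn
  · subst hn0
    exact ⟨μs, ⟨mem_of_mem_nhdsWithin hμs hV, hμs⟩, ∅, by simp, by simp⟩
  -- continuity in s for fixed μ
  have contFs : ∀ μ ∈ W, ContinuousOn (fun s => F s μ) (Ioo 0 ε) := by
    intro μ hμ
    have hfi : ∀ i : Fin (n+1), ContinuousOn (fun s => f i s μ) (Ioo 0 ε) := by
      intro i
      exact (hf i).comp ((continuous_id.prodMk continuous_const).continuousOn)
        (fun s hs => ⟨hs, hμ⟩)
    have h2 : ContinuousOn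
        (fun s => (∑ i : Fin n, δ i μ * f i.castSucc s μ) + f (Fin.last n) s μ)
        (Ioo 0 ε) := by
      refine ContinuousOn.add ?_ (hfi (Fin.last n))
      exact continuousOn_finset_sum _ (fun i _ => continuousOn_const.mul (hfi i.castSucc))
    exact h2.congr (fun s _ => hFdef s μ)
  -- continuity in μ for fixed s
  have contFμ : ∀ s ∈ Ioo (0:ℝ) ε, ContinuousOn (fun ν => F s ν) W := by
    intro s hs
    have hfi : ∀ i : Fin (n+1), ContinuousOn (fun ν => f i s ν) W := by
      intro i
      exact (hf i).comp ((continuous_const.prodMk continuous_id).continuousOn)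
        (fun ν hν => ⟨hs, hν⟩)
    have h2 : ContinuousOn
        (fun ν => (∑ i : Fin n, δ i ν * f i.castSucc s ν) + f (Fin.last n) s ν) W := by
      refine ContinuousOn.add ?_ (hfi (Fin.last n))
      exact continuousOn_finset_sum _ (fun i _ => (hδ i).mul (hfi i.castSucc))
    exact h2.congr (fun ν _ => hFdef s ν)
  -- extract uniform positivity from hb
  rw [nhdsWithin_prod_eq] at hb
  obtain ⟨T, hT, Ub, hUb, hTU⟩ := Filter.mem_prod_iff.1 hb
  obtain ⟨OT, hOTopen, hOT0, hOTsub⟩ := mem_nhdsWithin.1 hT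
  obtain ⟨r, hr, hball⟩ := Metric.isOpen_iff.1 hOTopen 0 hOT0
  set a : ℝ := min r ε with hadef
  have hapos : 0 < a := lt_min hr hε
  obtain ⟨Ob, hObopen, hObmem, hObsub⟩ := mem_nhdsWithin.1 hUb
  have hbp : ∀ s ∈ Ioo (0:ℝ) a, ∀ ν ∈ Ob ∩ W, ∀ i : Fin n, 0 < f i.castSucc s ν := by
    intro s hs ν hν i
    have hsr : s < r := lt_of_lt_of_le hs.2 (min_le_left _ _)
    have hsε : s < ε := lt_of_lt_of_le hs.2 (min_le_right _ _)
    have hsT : s ∈ T := by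
      apply hOTsub
      refine ⟨hball ?_, ⟨hs.1, hsε⟩⟩
      simp only [Metric.mem_ball, Real.dist_eq, sub_zero]
      rw [abs_of_pos hs.1]
      exact hsr
    exact hTU (Set.mk_mem_prod hsT (hObsub hν)) i
  -- extract uniform ratio-limits from hc
  obtain ⟨Oc, hOcopen, hOcmem, hOcsub⟩ := mem_nhdsWithin.1 hc
  -- the good region
  set G : Set (Fin N → ℝ) := (Ob ∩ Oc) ∩ W with hGdef
  have hμsG : μs ∈ G := ⟨⟨hObmem, hOcmem⟩, hμs⟩
  have dom : ∀ ν ∈ G, ∀ j : Fin n, (∀ i : Fin n, (i : ℕ) < (j : ℕ) → δ i ν = 0) →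
      δ j ν ≠ 0 → ∀ᶠ s in 𝓝[>] (0:ℝ), 0 < F s ν * δ j ν := by
    intro ν hν j h1 h2
    exact my_dominance f δ F hFdef ν hapos
      (fun s hs i => hbp s hs ν ⟨hν.1.1, hν.2⟩ i)
      (hOcsub ⟨hν.1.2, hν.2⟩) j h1 h2
  -- D k : the (n-k)-th delta
  set D : ℕ → (Fin N → ℝ) → ℝ :=
    fun k ν => if h : n - k < n then δ ⟨n - k, h⟩ ν else 0 with hDdef
  -- the key induction
  have key : ∀ k, 1 ≤ k → k ≤ n → ∀ O : Set (Fin N → ℝ), IsOpen O → μs ∈ O →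
      ∃ μ, (μ ∈ O ∧ μ ∈ G) ∧ (∀ i : Fin n, (i : ℕ) < n - k → δ i μ = 0) ∧
        D k μ ≠ 0 ∧ ∃ t : ℕ → ℝ,
        (∀ j < k, t j ∈ Ioo (0:ℝ) ρ) ∧
        (∀ j, j + 1 < k → t j < t (j+1)) ∧
        (∀ j, j + 1 < k → F (t j) μ * F (t (j+1)) μ < 0) ∧
        F (t 0) μ * D k μ < 0 := by
    intro k hk1
    induction k, hk1 using Nat.le_induction with
    | base =>
      intro h1n O hO hμsO
      have hnn : n - 1 < n := Nat.sub_lt hn one_pos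
      -- seed zero-free point for μs
      obtain ⟨t0, ht0pos, ht0lt, hFne⟩ := ha (ρ/2) (by linarith) (by linarith)
      have ht0ε : t0 ∈ Ioo (0:ℝ) ε := ⟨ht0pos, by linarith⟩
      have hcw : Tendsto (fun ν => F t0 ν) (𝓝[W] μs) (𝓝 (F t0 μs)) :=
        (contFμ t0 ht0ε) μs hμs
      have hev : ∀ᶠ ν in 𝓝[W] μs, 0 < F t0 ν * F t0 μs :=
        (hcw.mul tendsto_const_nhds).eventually
          (eventually_gt_nhds (mul_self_pos.2 hFne))
      have hOmem : ∀ᶠ ν in 𝓝[W] μs, ν ∈ O ∩ Ob ∩ Oc :=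
        mem_nhdsWithin_of_mem_nhds
          (((hO.inter hObopen).inter hOcopen).mem_nhds ⟨⟨hμsO, hObmem⟩, hOcmem⟩)
      have hWmem : ∀ᶠ ν in 𝓝[W] μs, ν ∈ W := self_mem_nhdsWithin
      have hU : {ν | (ν ∈ O ∩ Ob ∩ Oc ∧ ν ∈ W) ∧ 0 < F t0 ν * F t0 μs} ∈ 𝓝[W] μs :=
        ((hOmem.and hWmem).and hev)
      obtain ⟨μ₁, hμ₁U, μ₂, hμ₂U, hV1, hV2, hprod⟩ := hd.1 hn _ hU
      -- pick the one whose δ value has sign opposite to F t0 μs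
      have hpick : ∃ μ, ((μ ∈ O ∩ Ob ∩ Oc ∧ μ ∈ W) ∧ 0 < F t0 μ * F t0 μs) ∧
          μ ∈ Vset W δ (n - 1) ∧ δ ⟨n-1, hnn⟩ μ * F t0 μs < 0 := by
        by_cases hcase : δ ⟨n-1, hnn⟩ μ₁ * F t0 μs < 0
        · exact ⟨μ₁, hμ₁U, hV1, hcase⟩
        · refine ⟨μ₂, hμ₂U, hV2, ?_⟩
          push_neg at hcase
          have hδ1 : δ ⟨n-1, hnn⟩ μ₁ ≠ 0 := by
            intro h
            rw [h, zero_mul] at hprod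
            exact lt_irrefl 0 hprod
          have h1pos : 0 < δ ⟨n-1, hnn⟩ μ₁ * F t0 μs :=
            lt_of_le_of_ne hcase (Ne.symm (mul_ne_zero hδ1 hFne))
          have := my_sign_opp (by linarith [h1pos] : 0 < F t0 μs * δ ⟨n-1, hnn⟩ μ₁)
            (by linarith [hprod] : δ ⟨n-1, hnn⟩ μ₂ * δ ⟨n-1, hnn⟩ μ₁ < 0)
          linarith [this]
      obtain ⟨μ, ⟨⟨hμO, hμW⟩, hμF⟩, hμV, hμsign⟩ := hpick
      have hDval : D 1 μ = δ ⟨n-1, hnn⟩ μ := dif_pos hnn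
      refine ⟨μ, ⟨hμO.1.1, ⟨⟨hμO.1.2, hμO.2⟩, hμW⟩⟩, ?_, ?_, fun _ => t0, ?_, ?_, ?_, ?_⟩
      · exact fun i hi => hμV.2 i hi
      · rw [hDval]
        intro h
        rw [h, zero_mul] at hμsign
        exact lt_irrefl 0 hμsign
      · intro j _; exact ⟨ht0pos, by linarith⟩
      · intro j hj; omega
      · intro j hj; omega
      · rw [hDval]
        exact my_sign_opp hμF hμsign
    | succ k hk IH =>
      intro hk1n O hO hμsO
      obtain ⟨μ, ⟨hμO, hμG⟩, hvan, hDne, t, htmem, htmono, htalt, htsign⟩ :=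
        IH (by omega) O hO hμsO
      have hnk : n - k < n := Nat.sub_lt (by omega) (by omega)
      have hnk1 : n - (k+1) < n := Nat.sub_lt (by omega) (by omega)
      have hDk : D k μ = δ ⟨n - k, hnk⟩ μ := dif_pos hnk
      rw [hDk] at hDne htsign
      -- dominance at μ
      have hdom := dom μ hμG ⟨n - k, hnk⟩ (fun i hi => hvan i hi) hDne
      have ht0ρ := htmem 0 (by omega)
      have hIoo : Ioo (0:ℝ) (t 0) ∈ 𝓝[>] (0:ℝ) :=
        Ioo_mem_nhdsGT_of_mem ⟨le_refl 0, ht0ρ.1⟩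
      obtain ⟨s₁, hs₁dom, hs₁mem⟩ := (hdom.and (eventually_mem_set.2 hIoo)).exists
      -- the extended sequence of points
      set t' : ℕ → ℝ := fun j => if j = 0 then s₁ else t (j-1) with ht'def
      have ht'mem : ∀ j < k + 1, t' j ∈ Ioo (0:ℝ) ρ := by
        intro j hj
        by_cases h0 : j = 0
        · simp only [ht'def, h0, if_pos rfl]
          exact ⟨hs₁mem.1, lt_trans hs₁mem.2 ht0ρ.2⟩
        · simp only [ht'def, if_neg h0]
          exact htmem (j-1) (by omega)
      have ht'mono : ∀ j, j + 1 < k + 1 → t' j < t' (j+1) := by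
        intro j hj
        by_cases h0 : j = 0
        · subst h0
          simp only [ht'def, if_pos rfl, if_neg (one_ne_zero)]
          exact hs₁mem.2
        · simp only [ht'def, if_neg h0, if_neg (Nat.succ_ne_zero j)]
          have : j - 1 + 1 = j := by omega
          rw [show j + 1 - 1 = j from rfl]
          calc t (j-1) < t (j-1+1) := htmono (j-1) (by omega)
            _ = t j := by rw [this]
      have ht'alt : ∀ j, j + 1 < k + 1 → F (t' j) μ * F (t' (j+1)) μ < 0 := by
        intro j hj
        by_cases h0 : j = 0
        · subst h0
          simp only [ht'def, if_pos rfl, if_neg one_ne_zero]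
          exact my_sign_opp hs₁dom htsign
        · simp only [ht'def, if_neg h0, if_neg (Nat.succ_ne_zero j)]
          have h1 : j - 1 + 1 = j := by omega
          rw [show j + 1 - 1 = j from rfl]
          have := htalt (j-1) (by omega)
          rw [h1] at this
          exact this
      -- F values at μ are nonzero at all t' points
      have hFne : ∀ j < k + 1, F (t' j) μ ≠ 0 := by
        intro j hj h
        rcases Nat.lt_or_ge (j+1) (k+1) with hlt | hge
        · have := ht'alt j hlt
          rw [h, zero_mul] at this
          exact lt_irrefl 0 this
        · have hjk : j = k := by omega
          rcases Nat.eq_or_lt_of_le (show 1 ≤ k from hk) with h1 | h1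
          · have hT : t' j = t 0 := by
              simp only [ht'def, if_neg (by omega : j ≠ 0)]
              congr 1
              omega
            rw [hT] at h
            rw [h, zero_mul] at htsign
            exact lt_irrefl 0 htsign
          · have h2 := ht'alt (j-1) (by omega)
            have hj1 : j - 1 + 1 = j := by omega
            rw [hj1, h, mul_zero] at h2
            exact lt_irrefl 0 h2
      -- persistence of signs near μ
      have hμW : μ ∈ W := hμG.2
      have hev : ∀ᶠ ν in 𝓝[W] μ, ∀ j ∈ Finset.range (k+1),
          0 < F (t' j) ν * F (t' j) μ := by
        rw [Filter.eventually_all_finset]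
        intro j hj
        rw [Finset.mem_range] at hj
        have htj : t' j ∈ Ioo (0:ℝ) ε := by
          have := ht'mem j hj
          exact ⟨this.1, lt_of_lt_of_le this.2 hρε⟩
        have hcw : Tendsto (fun ν => F (t' j) ν) (𝓝[W] μ) (𝓝 (F (t' j) μ)) :=
          (contFμ (t' j) htj) μ hμW
        exact (hcw.mul tendsto_const_nhds).eventually
          (eventually_gt_nhds (mul_self_pos.2 (hFne j hj)))
      have hOmem : ∀ᶠ ν in 𝓝[W] μ, ν ∈ O ∩ Ob ∩ Oc :=
        mem_nhdsWithin_of_mem_nhds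
          (((hO.inter hObopen).inter hOcopen).mem_nhds
            ⟨⟨hμO, hμG.1.1⟩, hμG.1.2⟩)
      have hWmem : ∀ᶠ ν in 𝓝[W] μ, ν ∈ W := self_mem_nhdsWithin
      have hU : {ν | (ν ∈ O ∩ Ob ∩ Oc ∧ ν ∈ W) ∧ ∀ j ∈ Finset.range (k+1),
          0 < F (t' j) ν * F (t' j) μ} ∈ 𝓝[W] μ := ((hOmem.and hWmem).and hev)
      -- apply the independence step
      have hμVset : μ ∈ Vset W δ (n - k) := ⟨hμW, fun i hi => hvan i hi⟩
      obtain ⟨μ', hμ'U, hμ'V, hμ'sign⟩ :=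
        hd.2 (n - k) (by omega) hnk μ hμVset hDne _ hU
      obtain ⟨⟨hμ'O, hμ'W⟩, hμ'pers⟩ := hμ'U
      have hDk1 : D (k+1) μ' = δ ⟨n - (k+1), hnk1⟩ μ' := dif_pos hnk1
      have hidx : (⟨n - k - 1, lt_of_le_of_lt (Nat.sub_le (n-k) 1) hnk⟩ : Fin n)
          = ⟨n - (k+1), hnk1⟩ := by
        apply Fin.ext
        simp only []
        omega
      rw [hidx] at hμ'sign
      refine ⟨μ', ⟨hμ'O.1.1, ⟨⟨hμ'O.1.2, hμ'O.2⟩, hμ'W⟩⟩, ?_, ?_, t', ht'mem, ht'mono, ?_, ?_⟩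
      · intro i hi
        exact hμ'V.2 i (by omega)
      · rw [hDk1]
        intro h
        rw [h, zero_mul] at hμ'sign
        exact lt_irrefl 0 hμ'sign
      · intro j hj
        have hpj := hμ'pers j (Finset.mem_range.2 (by omega))
        have hpj1 := hμ'pers (j+1) (Finset.mem_range.2 (by omega))
        exact my_trans_sign hpj hpj1 (ht'alt j hj)
      · rw [hDk1]
        have hp0 := hμ'pers 0 (Finset.mem_range.2 (by omega))
        simp only [ht'def, if_pos rfl] at hp0 ⊢
        -- 0 < F s₁ μ' * F s₁ μ , 0 < F s₁ μ * δ_{n-k} μ , δ_{n-(k+1)} μ' * δ_{n-k} μ < 0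
        have h1 : 0 < F s₁ μ' * δ ⟨n - k, hnk⟩ μ := my_pos_trans hp0 hs₁dom
        exact my_sign_opp h1 hμ'sign
  -- conclude: apply key at k = n
  obtain ⟨OV, hOVopen, hOVmem, hOVsub⟩ := mem_nhdsWithin.1 hV
  obtain ⟨μ, ⟨hμOV, hμG⟩, _, hDne, t, htmem, htmono, htalt, htsign⟩ :=
    key n (by omega) le_rfl OV hOVopen hOVmem
  have hμW : μ ∈ W := hμG.2
  have h0n : n - n < n := by omega
  have hDn : D n μ = δ ⟨n - n, h0n⟩ μ := dif_pos h0n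
  rw [hDn] at hDne htsign
  have hdom := dom μ hμG ⟨n - n, h0n⟩ (fun i hi => by
    have h' : ((⟨n - n, h0n⟩ : Fin n) : ℕ) = n - n := rfl
    rw [h'] at hi
    exact absurd hi (by omega)) hDne
  have ht0ρ := htmem 0 (by omega)
  have hIoo : Ioo (0:ℝ) (t 0) ∈ 𝓝[>] (0:ℝ) :=
    Ioo_mem_nhdsGT_of_mem ⟨le_refl 0, ht0ρ.1⟩
  obtain ⟨s₀, hs₀dom, hs₀mem⟩ := (hdom.and (eventually_mem_set.2 hIoo)).exists
  set t' : ℕ → ℝ := fun j => if j = 0 then s₀ else t (j-1) with ht'def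
  have hzeros : ∃ S : Finset ℝ, n ≤ S.card ∧ ∀ s ∈ S, s ∈ Ioo (0:ℝ) ρ ∧ F s μ = 0 := by
    apply my_ivt_zeros hρε (contFs μ hμW) n t'
    · intro j hj
      by_cases h0 : j = 0
      · simp only [ht'def, h0, if_pos rfl]
        exact ⟨hs₀mem.1, lt_trans hs₀mem.2 ht0ρ.2⟩
      · simp only [ht'def, if_neg h0]
        exact htmem (j-1) (by omega)
    · intro j hj
      by_cases h0 : j = 0
      · subst h0
        simp only [ht'def, if_pos rfl, if_neg one_ne_zero]
        exact hs₀mem.2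
      · simp only [ht'def, if_neg h0, if_neg (Nat.succ_ne_zero j)]
        have h1 : j - 1 + 1 = j := by omega
        rw [show j + 1 - 1 = j from rfl]
        calc t (j-1) < t (j-1+1) := htmono (j-1) (by omega)
          _ = t j := by rw [h1]
    · intro j hj
      by_cases h0 : j = 0
      · subst h0
        simp only [ht'def, if_pos rfl, if_neg one_ne_zero]
        exact my_sign_opp hs₀dom htsign
      · simp only [ht'def, if_neg h0, if_neg (Nat.succ_ne_zero j)]
        have h1 : j - 1 + 1 = j := by omega
        rw [show j + 1 - 1 = j from rfl]
        have := htalt (j-1) (by omega)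
        rw [h1] at this
        exact this
  obtain ⟨S, hS1, hS2⟩ := hzeros
  exact ⟨μ, ⟨hOVsub ⟨hμOV, hμW⟩, hμW⟩, S, hS1, hS2⟩
end

section
/- Let L ≥ 0 and n ∈ ℕ, and let 0ₙ denote the origin of ℝⁿ. Suppose f(s; μ₁,…,μₙ) ∈ F_L^∞(0ₙ) satisfies f(s; μ₁,…,μ_{k−1}, 0,…,0) ≡ 0 for some k ∈ {1,2,…,n} (i.e., f vanishes identically whenever the last n−k+1 parameter variables are zero). Then there exist functions f_k,…,f_n ∈ F_L^∞(0ₙ) such that f = Σ_{i=k}^{n} μ_i·f_i. -/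
/-!
Hadamard's lemma in the variables `μ_k, …, μ_n`, uniformly in `s`. Let `S_t` multiply these
variables by `t`. Since `f(s; S_0 μ) = 0`,
`f(s; μ) = ∫₀¹ d/dt f(s; S_t μ) dt = ∑_{i ≥ k} μ_i f_i(s; μ)` with
`f_i(s; μ) = ∫₀¹ ∂_{μ_i} f(s; S_t μ) dt`.
Differentiating under the integral sign, `∂_s^{l₀} ∂_μ^l f_i(s; μ)` is an integral over
`t ∈ (0, 1]` of `∂_s^{l₀} ∂_μ^{l + e_i} f(s; S_t μ)` against a weight of modulus at most `1`
(a product of powers of `t`); symmetry of second derivatives lets `∂_{μ_i}` join the other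
derivatives. As `‖S_t μ‖ ≤ ‖μ‖`, the flatness bound `C s^(L - l₀)` of `f`
passes to every `f_i`.
-/

open Topology Filter Set

/-- Partial derivative of `ψ(s;μ)` with respect to the variable `s`. -/
noncomputable def pderivS {N : ℕ} (ψ : ℝ → (Fin N → ℝ) → ℝ) : ℝ → (Fin N → ℝ) → ℝ :=
  fun s μ => deriv (fun t => ψ t μ) s

/-- Partial derivative of `ψ(s;μ)` with respect to the parameter `μ j`. -/
noncomputable def pderivMu {N : ℕ} (j : Fin N) (ψ : ℝ → (Fin N → ℝ) → ℝ) :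
    ℝ → (Fin N → ℝ) → ℝ :=
  fun s μ => deriv (fun t => ψ s (Function.update μ j t)) (μ j)

/-- Iterated partial derivative `∂_s^{l₀} ∂_{μ₁}^{l 0} ⋯ ∂_{μ_N}^{l (N-1)} ψ`. -/
noncomputable def pderivMulti {N : ℕ} (l₀ : ℕ) (l : Fin N → ℕ)
    (ψ : ℝ → (Fin N → ℝ) → ℝ) : ℝ → (Fin N → ℝ) → ℝ :=
  pderivS^[l₀] (((List.ofFn fun j : Fin N => (pderivMu j)^[l j]).foldr (· ∘ ·) id) ψ)

/-- The class `F_L^∞(μ₀)` of functions `(L,∞)`-flat with respect to `s` at `μ₀`. -/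
def MemF {N : ℕ} (L : ℝ) (μ₀ : Fin N → ℝ) (ψ : ℝ → (Fin N → ℝ) → ℝ) : Prop :=
  (∃ s₁ > (0 : ℝ), ∃ V : Set (Fin N → ℝ), IsOpen V ∧ μ₀ ∈ V ∧
    ContDiffOn ℝ (⊤ : ℕ∞) (fun q : ℝ × (Fin N → ℝ) => ψ q.1 q.2) (Ioo 0 s₁ ×ˢ V)) ∧
  ∀ (l₀ : ℕ) (l : Fin N → ℕ), ∃ V ∈ 𝓝 μ₀, ∃ C : ℝ, ∃ s₀ > (0 : ℝ),
    ∀ s ∈ Ioo (0 : ℝ) s₀, ∀ μ ∈ V,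
      |pderivMulti l₀ l ψ s μ| ≤ C * s ^ (L - (l₀ : ℝ))

open scoped ContDiff
open MeasureTheory
open Function (uncurry)

universe u

section DirDeriv

variable {E F : Type*} [NormedAddCommGroup E] [NormedSpace ℝ E]
  [NormedAddCommGroup F] [NormedSpace ℝ F] {U : Set E} {Φ Ψ : E → F}

noncomputable def dirDeriv (v : E) (Φ : E → F) : E → F := fun x => fderiv ℝ Φ x v

noncomputable def iterDirDeriv (vs : List E) (Φ : E → F) : E → F := vs.foldr dirDeriv Φ

lemma iterDirDeriv_append (vs ws : List E) (Φ : E → F) :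
    iterDirDeriv (vs ++ ws) Φ = iterDirDeriv vs (iterDirDeriv ws Φ) :=
  List.foldr_append

lemma ContDiffOn.dirDeriv (hU : IsOpen U) (hΦ : ContDiffOn ℝ ∞ Φ U) (v : E) :
    ContDiffOn ℝ ∞ (dirDeriv v Φ) U :=
  (ContinuousLinearMap.apply ℝ F v).contDiff.comp_contDiffOn
    (hΦ.fderiv_of_isOpen hU (m := ∞) (by simp))

lemma ContDiffOn.iterDirDeriv (hU : IsOpen U) (hΦ : ContDiffOn ℝ ∞ Φ U) :
    ∀ vs : List E, ContDiffOn ℝ ∞ (iterDirDeriv vs Φ) U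
  | [] => hΦ
  | v :: vs => (hΦ.iterDirDeriv hU vs).dirDeriv hU v

lemma Set.EqOn.dirDeriv (hU : IsOpen U) (h : EqOn Φ Ψ U) (v : E) :
    EqOn (dirDeriv v Φ) (dirDeriv v Ψ) U := fun x hx => by
  simp only [_root_.dirDeriv, (Filter.eventuallyEq_of_mem (hU.mem_nhds hx) h).fderiv_eq]

lemma dirDeriv_dirDeriv_eq_fderiv_fderiv (hU : IsOpen U) (hΦ : ContDiffOn ℝ ∞ Φ U)
    {x : E} (hx : x ∈ U) (u v : E) :
    dirDeriv u (dirDeriv v Φ) x = fderiv ℝ (fderiv ℝ Φ) x u v := by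
  have hd : DifferentiableAt ℝ (fderiv ℝ Φ) x :=
    ((hΦ.fderiv_of_isOpen hU (m := ∞) (by simp)).differentiableOn (by simp)).differentiableAt
      (hU.mem_nhds hx)
  exact congrArg (· u) ((ContinuousLinearMap.apply ℝ F v).hasFDerivAt.comp x
    hd.hasFDerivAt).fderiv

lemma dirDeriv_comm (hU : IsOpen U) (hΦ : ContDiffOn ℝ ∞ Φ U) {x : E} (hx : x ∈ U)
    (u v : E) : dirDeriv u (dirDeriv v Φ) x = dirDeriv v (dirDeriv u Φ) x := by
  rw [dirDeriv_dirDeriv_eq_fderiv_fderiv hU hΦ hx, dirDeriv_dirDeriv_eq_fderiv_fderiv hU hΦ hx]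
  exact (hΦ.contDiffAt (hU.mem_nhds hx)).isSymmSndFDerivAt (by simpa using ENat.LEInfty.out) u v

lemma iterDirDeriv_perm (hU : IsOpen U) (hΦ : ContDiffOn ℝ ∞ Φ U) {vs ws : List E}
    (h : vs.Perm ws) : EqOn (iterDirDeriv vs Φ) (iterDirDeriv ws Φ) U := by
  induction h with
  | nil => exact fun _ _ => rfl
  | cons v _ ih => exact ih.dirDeriv hU v
  | swap u v vs => exact fun x hx => dirDeriv_comm hU (hΦ.iterDirDeriv hU vs) hx v u
  | trans _ _ ih₁ ih₂ => exact fun x hx => (ih₁ hx).trans (ih₂ hx)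

lemma HasDerivAt.deriv_comp_eq_dirDeriv (hU : IsOpen U) (h : EqOn Ψ Φ U)
    (hΦ : ContDiffOn ℝ ∞ Φ U) {γ : ℝ → E} {v : E} {t : ℝ} (hγ : HasDerivAt γ v t)
    (ht : γ t ∈ U) : _root_.deriv (Ψ ∘ γ) t = dirDeriv v Φ (γ t) := by
  have hΦγ : Ψ ∘ γ =ᶠ[𝓝 t] Φ ∘ γ :=
    Filter.eventuallyEq_of_mem (hγ.continuousAt.preimage_mem_nhds (hU.mem_nhds ht))
      fun _ hs => h hs
  have hΦd : DifferentiableAt ℝ Φ (γ t) :=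
    (hΦ.differentiableOn (by simp)).differentiableAt (hU.mem_nhds ht)
  rw [hΦγ.deriv_eq]
  exact (hΦd.hasFDerivAt.comp_hasDerivAt t hγ).deriv

end DirDeriv

section PartialDerivs

variable {n : ℕ} {W : Set (ℝ × (Fin n → ℝ))}

def sDir : ℝ × (Fin n → ℝ) := (1, 0)

def muDir (j : Fin n) : ℝ × (Fin n → ℝ) := (0, Pi.single j 1)

abbrev ActsAsOn (W : Set (ℝ × (Fin n → ℝ)))
    (D : (ℝ → (Fin n → ℝ) → ℝ) → ℝ → (Fin n → ℝ) → ℝ) (vs : List (ℝ × (Fin n → ℝ))) :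
    Prop :=
  ∀ ψ Φ, EqOn (uncurry ψ) Φ W → ContDiffOn ℝ ∞ Φ W →
    EqOn (uncurry (D ψ)) (iterDirDeriv vs Φ) W

lemma actsAsOn_pderivS (hW : IsOpen W) : ActsAsOn W pderivS [sDir] := by
  rintro ψ Φ h hΦ ⟨s, μ⟩ hq
  exact ((hasDerivAt_id s).prodMk (hasDerivAt_const s μ)).deriv_comp_eq_dirDeriv hW h hΦ hq

lemma actsAsOn_pderivMu (hW : IsOpen W) (j : Fin n) : ActsAsOn W (pderivMu j) [muDir j] := by
  rintro ψ Φ h hΦ ⟨s, μ⟩ hq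
  have hγ := (hasDerivAt_const (μ j) s).prodMk (hasDerivAt_update μ j (μ j))
  have := hγ.deriv_comp_eq_dirDeriv hW h hΦ (by simpa using hq)
  rwa [Function.update_eq_self] at this

lemma actsAsOn_id : ActsAsOn W id [] := fun _ _ h _ => h

lemma ActsAsOn.comp (hW : IsOpen W) {D D'} {vs ws : List (ℝ × (Fin n → ℝ))}
    (hD : ActsAsOn W D vs) (hD' : ActsAsOn W D' ws) : ActsAsOn W (D ∘ D') (vs ++ ws) :=
  fun ψ Φ h hΦ => by
    rw [iterDirDeriv_append]
    exact hD _ _ (hD' ψ Φ h hΦ) (hΦ.iterDirDeriv hW ws)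

lemma ActsAsOn.iterate (hW : IsOpen W) {D} {v : ℝ × (Fin n → ℝ)} (hD : ActsAsOn W D [v]) :
    ∀ m : ℕ, ActsAsOn W D^[m] (List.replicate m v)
  | 0 => actsAsOn_id
  | m + 1 => by
    rw [Function.iterate_succ', List.replicate_succ]
    exact hD.comp hW (hD.iterate hW m)

lemma ActsAsOn.foldr_comp (hW : IsOpen W) {ι : Type*} {D : ι → _}
    {vs : ι → List (ℝ × (Fin n → ℝ))} (hD : ∀ i, ActsAsOn W (D i) (vs i)) :
    ∀ is : List ι, ActsAsOn W ((is.map D).foldr (· ∘ ·) id) (is.map vs).flatten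
  | [] => actsAsOn_id
  | i :: is => (hD i).comp hW (ActsAsOn.foldr_comp hW hD is)

def muIndices (l : Fin n → ℕ) : List (Fin n) := (List.ofFn fun j => List.replicate (l j) j).flatten

noncomputable def multiDirs (l₀ : ℕ) (l : Fin n → ℕ) : List (ℝ × (Fin n → ℝ)) :=
  List.replicate l₀ sDir ++ (muIndices l).map muDir

lemma actsAsOn_pderivMulti (hW : IsOpen W) (l₀ : ℕ) (l : Fin n → ℕ) :
    ActsAsOn W (pderivMulti l₀ l) (multiDirs l₀ l) := by
  have hmu := ActsAsOn.foldr_comp hW (fun j => (actsAsOn_pderivMu hW j).iterate hW (l j))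
    (List.finRange n)
  rw [← List.ofFn_eq_map] at hmu
  have hdirs : ((List.finRange n).map fun j => List.replicate (l j) (muDir j)).flatten =
      (muIndices l).map muDir := by
    simp [muIndices, List.map_flatten, List.ofFn_eq_map, Function.comp_def, List.map_replicate]
  rw [hdirs] at hmu
  exact ((actsAsOn_pderivS hW).iterate hW l₀).comp hW hmu

lemma count_muIndices [DecidableEq (Fin n)] (l : Fin n → ℕ) (j : Fin n) :
    (muIndices l).count j = l j := by
  simp [muIndices, List.count_flatten, List.map_ofFn, List.sum_ofFn, List.count_replicate,
    Finset.sum_ite_eq']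

lemma multiDirs_append_perm (l₀ : ℕ) (l : Fin n → ℕ) (i : Fin n) :
    (multiDirs l₀ l ++ [muDir i]).Perm (multiDirs l₀ (Function.update l i (l i + 1))) := by
  classical
  have hidx : (muIndices l ++ [i]).Perm (muIndices (Function.update l i (l i + 1))) := by
    rw [List.perm_iff_count]
    intro j
    rcases eq_or_ne j i with rfl | hj
    · simp [count_muIndices]
    · simp [count_muIndices, hj, Ne.symm hj]
  rw [multiDirs, multiDirs, List.append_assoc]
  exact List.Perm.append_left _ (by simpa using hidx.map muDir)

end PartialDerivs

section ParamIntegral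

lemma exists_ball_bound_of_continuousOn_prod {X E F : Type*} [TopologicalSpace X]
    [NormedAddCommGroup E] [NormedSpace ℝ E] [FiniteDimensional ℝ E] [NormedAddCommGroup F]
    {K : Set X} {U : Set E} {g : X × E → F} (hK : IsCompact K) (hU : IsOpen U)
    (hg : ContinuousOn g (K ×ˢ U)) {x : E} (hx : x ∈ U) :
    ∃ ε > 0, Metric.ball x ε ⊆ U ∧ ∃ C, ∀ p ∈ K ×ˢ Metric.ball x ε, ‖g p‖ ≤ C := by
  obtain ⟨δ, hδ, hδU⟩ := Metric.isOpen_iff.1 hU x hx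
  have hsub : Metric.closedBall x (δ / 2) ⊆ U :=
    (Metric.closedBall_subset_ball (by linarith)).trans hδU
  obtain ⟨C, hC⟩ := (hK.prod (isCompact_closedBall x (δ / 2))).exists_bound_of_continuousOn
    (hg.mono (prod_mono le_rfl hsub))
  exact ⟨δ / 2, by positivity, Metric.ball_subset_closedBall.trans hsub, C,
    fun p hp => hC p (prod_mono le_rfl Metric.ball_subset_closedBall hp)⟩

variable {E F G : Type u} [NormedAddCommGroup E] [NormedSpace ℝ E]
  [NormedAddCommGroup F] [NormedSpace ℝ F] [NormedAddCommGroup G] [NormedSpace ℝ G]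
  {A : ℝ → E →L[ℝ] E} {B : ℝ → F →L[ℝ] G} {U : Set E} {Φ : E → F}

noncomputable def paramIntegral (A : ℝ → E →L[ℝ] E) (B : ℝ → F →L[ℝ] G) (Φ : E → F) (x : E) :
    G :=
  ∫ t in Ioc (0 : ℝ) 1, B t (Φ (A t x))

noncomputable def derivFamily (A : ℝ → E →L[ℝ] E) (B : ℝ → F →L[ℝ] G) :
    ℝ → (E →L[ℝ] F) →L[ℝ] (E →L[ℝ] G) := fun t =>
  (ContinuousLinearMap.compL ℝ E F G (B t)).comp ((ContinuousLinearMap.compL ℝ E E F).flip (A t))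

lemma continuous_derivFamily (hA : Continuous A) (hB : Continuous B) :
    Continuous (derivFamily A B) :=
  ((ContinuousLinearMap.compL ℝ E F G).continuous.comp hB).clm_comp
    ((ContinuousLinearMap.compL ℝ E E F).flip.continuous.comp hA)

lemma continuousOn_paramIntegrand (hA : Continuous A)
    (hAU : ∀ t ∈ Icc (0 : ℝ) 1, MapsTo (A t) U U) (hB : Continuous B) (hΦ : ContinuousOn Φ U) :
    ContinuousOn (fun p : ℝ × E => B p.1 (Φ (A p.1 p.2))) (Icc 0 1 ×ˢ U) :=
  (hB.comp continuous_fst).continuousOn.clm_apply <|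
    hΦ.comp ((hA.comp continuous_fst).clm_apply continuous_snd).continuousOn
      fun p hp => hAU p.1 hp.1 hp.2

lemma continuousOn_paramIntegrand_slice (hA : Continuous A)
    (hAU : ∀ t ∈ Icc (0 : ℝ) 1, MapsTo (A t) U U) (hB : Continuous B) (hΦ : ContinuousOn Φ U)
    {x : E} (hx : x ∈ U) : ContinuousOn (fun t => B t (Φ (A t x))) (Icc 0 1) :=
  (continuousOn_paramIntegrand hA hAU hB hΦ).comp (Continuous.prodMk_left x).continuousOn
    fun _ ht => ⟨ht, hx⟩

lemma aestronglyMeasurable_paramIntegrand (hA : Continuous A)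
    (hAU : ∀ t ∈ Icc (0 : ℝ) 1, MapsTo (A t) U U) (hB : Continuous B) (hΦ : ContinuousOn Φ U)
    {x : E} (hx : x ∈ U) :
    AEStronglyMeasurable (fun t => B t (Φ (A t x))) (volume.restrict (Ioc 0 1)) :=
  ContinuousOn.aestronglyMeasurable
    ((continuousOn_paramIntegrand_slice hA hAU hB hΦ hx).mono Ioc_subset_Icc_self)
    measurableSet_Ioc

lemma integrableOn_paramIntegrand (hA : Continuous A)
    (hAU : ∀ t ∈ Icc (0 : ℝ) 1, MapsTo (A t) U U) (hB : Continuous B) (hΦ : ContinuousOn Φ U)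
    {x : E} (hx : x ∈ U) : IntegrableOn (fun t => B t (Φ (A t x))) (Ioc 0 1) :=
  (continuousOn_paramIntegrand_slice hA hAU hB hΦ hx).integrableOn_Icc.mono_set
    Ioc_subset_Icc_self

lemma continuousOn_paramIntegral [FiniteDimensional ℝ E] (hA : Continuous A) (hU : IsOpen U)
    (hAU : ∀ t ∈ Icc (0 : ℝ) 1, MapsTo (A t) U U) (hB : Continuous B) (hΦ : ContinuousOn Φ U) :
    ContinuousOn (paramIntegral A B Φ) U := by
  intro x hx
  have hcont := continuousOn_paramIntegrand hA hAU hB hΦ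
  obtain ⟨ε, hε, hεU, C, hC⟩ := exists_ball_bound_of_continuousOn_prod isCompact_Icc hU hcont hx
  refine (continuousAt_of_dominated (bound := fun _ => C) ?_ ?_ ?_ ?_).continuousWithinAt
  · filter_upwards [Metric.ball_mem_nhds x hε] with y hy
    exact aestronglyMeasurable_paramIntegrand hA hAU hB hΦ (hεU hy)
  · filter_upwards [Metric.ball_mem_nhds x hε] with y hy
    exact (ae_restrict_iff' measurableSet_Ioc).2 <| .of_forall fun t ht =>
      hC (t, y) ⟨Ioc_subset_Icc_self ht, hy⟩
  · exact integrableOn_const (by simp)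
  · refine (ae_restrict_iff' measurableSet_Ioc).2 <| .of_forall fun t ht => ?_
    exact (B t).continuous.continuousAt.comp <|
      (hΦ.continuousAt (hU.mem_nhds (hAU t (Ioc_subset_Icc_self ht) hx))).comp
        (A t).continuous.continuousAt

lemma hasFDerivAt_paramIntegral [FiniteDimensional ℝ E] (hA : Continuous A) (hU : IsOpen U)
    (hAU : ∀ t ∈ Icc (0 : ℝ) 1, MapsTo (A t) U U) (hB : Continuous B)
    (hΦ : ContDiffOn ℝ 1 Φ U) {x : E} (hx : x ∈ U) :
    HasFDerivAt (paramIntegral A B Φ) (paramIntegral A (derivFamily A B) (fderiv ℝ Φ) x) x := by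
  have hΦ' : ContinuousOn (fderiv ℝ Φ) U := hΦ.continuousOn_fderiv_of_isOpen hU le_rfl
  have hB' := continuous_derivFamily hA hB
  obtain ⟨ε, hε, hεU, C, hC⟩ := exists_ball_bound_of_continuousOn_prod isCompact_Icc hU
    (continuousOn_paramIntegrand hA hAU hB' hΦ') hx
  refine hasFDerivAt_integral_of_dominated_of_fderiv_le (μ := volume.restrict (Ioc 0 1))
    (F := fun y t => B t (Φ (A t y)))
    (F' := fun y t => derivFamily A B t (fderiv ℝ Φ (A t y))) (bound := fun _ => C)
    (Metric.ball_mem_nhds x hε) ?_ (integrableOn_paramIntegrand hA hAU hB hΦ.continuousOn hx)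
    (aestronglyMeasurable_paramIntegrand hA hAU hB' hΦ' hx) ?_ (integrableOn_const (by simp)) ?_
  · filter_upwards [Metric.ball_mem_nhds x hε] with y hy
    exact aestronglyMeasurable_paramIntegrand hA hAU hB hΦ.continuousOn (hεU hy)
  · exact (ae_restrict_iff' measurableSet_Ioc).2 <| .of_forall fun t ht y hy =>
      hC (t, y) ⟨Ioc_subset_Icc_self ht, hy⟩
  · refine (ae_restrict_iff' measurableSet_Ioc).2 <| .of_forall fun t ht y hy => ?_
    have hAy : A t y ∈ U := hAU t (Ioc_subset_Icc_self ht) (hεU hy)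
    have hΦd : HasFDerivAt Φ (fderiv ℝ Φ (A t y)) (A t y) :=
      ((hΦ.differentiableOn one_ne_zero).differentiableAt (hU.mem_nhds hAy)).hasFDerivAt
    exact (B t).hasFDerivAt.comp y (hΦd.comp y (A t).hasFDerivAt)

lemma contDiffOn_paramIntegral_of_nat [FiniteDimensional ℝ E] (hA : Continuous A)
    (hU : IsOpen U) (hAU : ∀ t ∈ Icc (0 : ℝ) 1, MapsTo (A t) U U) (m : ℕ) :
    ∀ {F G : Type u} [NormedAddCommGroup F] [NormedSpace ℝ F] [NormedAddCommGroup G]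
      [NormedSpace ℝ G] {B : ℝ → F →L[ℝ] G} {Φ : E → F}, Continuous B →
      ContDiffOn ℝ m Φ U → ContDiffOn ℝ m (paramIntegral A B Φ) U := by
  induction m with
  | zero =>
    intro F G _ _ _ _ B Φ hB hΦ
    exact contDiffOn_zero.2 (continuousOn_paramIntegral hA hU hAU hB hΦ.continuousOn)
  | succ m ih =>
    intro F G _ _ _ _ B Φ hB hΦ
    have hΦ1 : ContDiffOn ℝ 1 Φ U := hΦ.of_le (by exact_mod_cast Nat.le_add_left 1 m)
    have hderiv : EqOn (fderiv ℝ (paramIntegral A B Φ))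
        (paramIntegral A (derivFamily A B) (fderiv ℝ Φ)) U := fun x hx =>
      (hasFDerivAt_paramIntegral hA hU hAU hB hΦ1 hx).fderiv
    rw [Nat.cast_succ, contDiffOn_succ_iff_fderiv_of_isOpen hU]
    refine ⟨fun x hx =>
      (hasFDerivAt_paramIntegral hA hU hAU hB hΦ1 hx).differentiableAt.differentiableWithinAt,
      by simp, (ih (continuous_derivFamily hA hB) (hΦ.fderiv_of_isOpen hU le_rfl)).congr hderiv⟩

lemma contDiffOn_paramIntegral [FiniteDimensional ℝ E] (hA : Continuous A) (hU : IsOpen U)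
    (hAU : ∀ t ∈ Icc (0 : ℝ) 1, MapsTo (A t) U U) (hB : Continuous B)
    (hΦ : ContDiffOn ℝ ∞ Φ U) : ContDiffOn ℝ ∞ (paramIntegral A B Φ) U :=
  contDiffOn_infty.2 fun m =>
    contDiffOn_paramIntegral_of_nat hA hU hAU m hB (hΦ.of_le (by exact_mod_cast le_top))

end ParamIntegral

section WeightedIntegral

variable {E F : Type u} [NormedAddCommGroup E] [NormedSpace ℝ E]
  [NormedAddCommGroup F] [NormedSpace ℝ F] {A : ℝ → E →L[ℝ] E} {U : Set E} {Φ : E → F}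
  {c : ℝ → ℝ}

noncomputable def weightedIntegral (A : ℝ → E →L[ℝ] E) (c : ℝ → ℝ) (Φ : E → F) (x : E) : F :=
  ∫ t in Ioc (0 : ℝ) 1, c t • Φ (A t x)

lemma weightedIntegral_eq_paramIntegral :
    weightedIntegral A c Φ = paramIntegral A (fun t => c t • ContinuousLinearMap.id ℝ F) Φ :=
  rfl

lemma continuous_smul_id (hc : Continuous c) :
    Continuous fun t => c t • ContinuousLinearMap.id ℝ F :=
  hc.smul continuous_const

lemma weightedIntegral_congr (hAU : ∀ t ∈ Icc (0 : ℝ) 1, MapsTo (A t) U U) {Ψ : E → F}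
    (h : EqOn Φ Ψ U) {x : E} (hx : x ∈ U) :
    weightedIntegral A c Φ x = weightedIntegral A c Ψ x :=
  setIntegral_congr_fun measurableSet_Ioc fun t ht => by
    rw [h (hAU t (Ioc_subset_Icc_self ht) hx)]

lemma contDiffOn_weightedIntegral [FiniteDimensional ℝ E] (hA : Continuous A) (hU : IsOpen U)
    (hAU : ∀ t ∈ Icc (0 : ℝ) 1, MapsTo (A t) U U) (hc : Continuous c)
    (hΦ : ContDiffOn ℝ ∞ Φ U) : ContDiffOn ℝ ∞ (weightedIntegral A c Φ) U :=
  contDiffOn_paramIntegral hA hU hAU (continuous_smul_id hc) hΦ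

lemma dirDeriv_weightedIntegral_of_eigen [FiniteDimensional ℝ E] (hA : Continuous A)
    (hU : IsOpen U) (hAU : ∀ t ∈ Icc (0 : ℝ) 1, MapsTo (A t) U U) (hc : Continuous c)
    (hΦ : ContDiffOn ℝ 1 Φ U) {v : E} {w : ℝ → ℝ} (hv : ∀ t, A t v = w t • v) {x : E}
    (hx : x ∈ U) :
    dirDeriv v (weightedIntegral A c Φ) x =
      weightedIntegral A (fun t => c t * w t) (dirDeriv v Φ) x := by
  have hB := continuous_smul_id (F := F) hc
  have hint := integrableOn_paramIntegrand hA hAU (continuous_derivFamily hA hB)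
    (hΦ.continuousOn_fderiv_of_isOpen hU le_rfl) hx
  rw [dirDeriv, weightedIntegral_eq_paramIntegral,
    (hasFDerivAt_paramIntegral hA hU hAU hB hΦ hx).fderiv, paramIntegral,
    ContinuousLinearMap.integral_apply hint]
  refine setIntegral_congr_fun measurableSet_Ioc fun t _ => ?_
  simp [derivFamily, dirDeriv, hv, mul_smul]

lemma iterDirDeriv_weightedIntegral_of_eigen [FiniteDimensional ℝ E] (hA : Continuous A)
    (hU : IsOpen U) (hAU : ∀ t ∈ Icc (0 : ℝ) 1, MapsTo (A t) U U) (hΦ : ContDiffOn ℝ ∞ Φ U)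
    (hc : Continuous c) {vs : List E}
    (hvs : ∀ v ∈ vs, ∃ w : ℝ → ℝ, Continuous w ∧ (∀ t ∈ Ioc (0 : ℝ) 1, |w t| ≤ 1) ∧
      ∀ t, A t v = w t • v) :
    ∃ c' : ℝ → ℝ, Continuous c' ∧ (∀ t ∈ Ioc (0 : ℝ) 1, |c' t| ≤ |c t|) ∧
      EqOn (iterDirDeriv vs (weightedIntegral A c Φ))
        (weightedIntegral A c' (iterDirDeriv vs Φ)) U := by
  induction vs with
  | nil => exact ⟨c, hc, fun _ _ => le_rfl, fun _ _ => rfl⟩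
  | cons v vs ih =>
    obtain ⟨c₁, hc₁, hc₁c, heq⟩ := ih fun u hu => hvs u (List.mem_cons_of_mem v hu)
    obtain ⟨w, hw, hw1, hv⟩ := hvs v List.mem_cons_self
    refine ⟨fun t => c₁ t * w t, hc₁.mul hw, fun t ht => ?_, fun x hx => ?_⟩
    · rw [abs_mul]
      exact (mul_le_of_le_one_right (abs_nonneg _) (hw1 t ht)).trans (hc₁c t ht)
    · exact (heq.dirDeriv hU v hx).trans <| dirDeriv_weightedIntegral_of_eigen hA hU hAU hc₁
        ((hΦ.iterDirDeriv hU vs).of_le (by exact_mod_cast le_top)) hv hx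

lemma norm_weightedIntegral_le (hc : ∀ t ∈ Ioc (0 : ℝ) 1, |c t| ≤ 1) {x : E} {M : ℝ}
    (hM : ∀ t ∈ Ioc (0 : ℝ) 1, ‖Φ (A t x)‖ ≤ M) : ‖weightedIntegral A c Φ x‖ ≤ M := by
  have hbound : ∀ t ∈ Ioc (0 : ℝ) 1, ‖c t • Φ (A t x)‖ ≤ M := fun t ht => by
    rw [norm_smul, Real.norm_eq_abs]
    exact (mul_le_of_le_one_left (norm_nonneg _) (hc t ht)).trans (hM t ht)
  simpa [weightedIntegral] using
    norm_setIntegral_le_of_norm_le_const (μ := volume) measure_Ioc_lt_top hbound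

end WeightedIntegral

section TailScaling

variable {n : ℕ} (p : Fin n → Prop) [DecidablePred p]

noncomputable def tailProj : (ℝ × (Fin n → ℝ)) →L[ℝ] (ℝ × (Fin n → ℝ)) :=
  (0 : (ℝ × (Fin n → ℝ)) →L[ℝ] ℝ).prod <| ContinuousLinearMap.pi fun j =>
    if p j then (ContinuousLinearMap.proj j).comp (ContinuousLinearMap.snd ℝ ℝ _) else 0

noncomputable def tailScaling (t : ℝ) : (ℝ × (Fin n → ℝ)) →L[ℝ] (ℝ × (Fin n → ℝ)) :=
  ContinuousLinearMap.id ℝ _ + (t - 1) • tailProj p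

variable {p}

@[simp] lemma tailScaling_apply_fst (t : ℝ) (q : ℝ × (Fin n → ℝ)) :
    (tailScaling p t q).1 = q.1 := by
  simp [tailScaling, tailProj]

@[simp] lemma tailScaling_apply_snd (t : ℝ) (q : ℝ × (Fin n → ℝ)) (j : Fin n) :
    (tailScaling p t q).2 j = if p j then t * q.2 j else q.2 j := by
  by_cases hj : p j <;> simp [tailScaling, tailProj, hj]; ring

lemma tailScaling_zero_apply (q : ℝ × (Fin n → ℝ)) :
    tailScaling p 0 q = (q.1, fun j => if p j then 0 else q.2 j) := by
  ext j <;> simp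

lemma continuous_tailScaling : Continuous (tailScaling p) :=
  continuous_const.add ((continuous_id.sub continuous_const).smul continuous_const)

lemma tailScaling_one : tailScaling p 1 = ContinuousLinearMap.id ℝ _ := by
  simp [tailScaling]

lemma hasDerivAt_tailScaling_apply (q : ℝ × (Fin n → ℝ)) (t : ℝ) :
    HasDerivAt (fun t => tailScaling p t q) (tailProj p q) t := by
  simpa [tailScaling] using ((hasDerivAt_id t).sub_const 1).smul_const (tailProj p q)

lemma tailProj_eq_sum (q : ℝ × (Fin n → ℝ)) :
    tailProj p q = ∑ i ∈ Finset.univ.filter p, q.2 i • muDir i := by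
  ext j
  · simp [tailProj, muDir, Prod.fst_sum]
  · by_cases hj : p j <;>
      simp [tailProj, muDir, Prod.snd_sum, Finset.sum_apply, Pi.single_apply, hj]

lemma norm_tailScaling_apply_snd_le {t : ℝ} (ht : t ∈ Icc (0 : ℝ) 1) (q : ℝ × (Fin n → ℝ)) :
    ‖(tailScaling p t q).2‖ ≤ ‖q.2‖ := by
  refine pi_norm_le_iff_of_nonneg (norm_nonneg _) |>.2 fun j => ?_
  refine le_trans ?_ (norm_le_pi_norm q.2 j)
  rw [tailScaling_apply_snd]
  split_ifs
  · rw [norm_mul, Real.norm_of_nonneg ht.1]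
    exact mul_le_of_le_one_left (norm_nonneg _) ht.2
  · rfl

lemma mapsTo_tailScaling {S : Set ℝ} {r t : ℝ} (ht : t ∈ Icc (0 : ℝ) 1) :
    MapsTo (tailScaling p t) (S ×ˢ Metric.ball (0 : Fin n → ℝ) r)
      (S ×ˢ Metric.ball (0 : Fin n → ℝ) r) := fun q hq =>
  ⟨by simpa using hq.1, by
    simpa using (norm_tailScaling_apply_snd_le ht q).trans_lt (mem_ball_zero_iff.1 hq.2)⟩

lemma norm_ite_zero_le (μ : Fin n → ℝ) : ‖fun j => if p j then 0 else μ j‖ ≤ ‖μ‖ := by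
  simpa [tailScaling_zero_apply] using
    norm_tailScaling_apply_snd_le (p := p) ⟨le_rfl, zero_le_one⟩ ((0 : ℝ), μ)

lemma tailScaling_sDir (t : ℝ) : tailScaling p t sDir = (1 : ℝ) • sDir := by
  ext j <;> simp [sDir]

lemma tailScaling_muDir (t : ℝ) (j : Fin n) :
    tailScaling p t (muDir j) = (if p j then t else 1) • muDir j := by
  ext i
  · split_ifs <;> simp [muDir]
  · by_cases hi : i = j
    · subst hi; by_cases hi : p i <;> simp [muDir, hi]
    · by_cases hj : p j <;> simp [muDir, hi, hj]

lemma exists_tailScaling_multiDirs_eq_smul (l₀ : ℕ) (l : Fin n → ℕ) :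
    ∀ v ∈ multiDirs l₀ l, ∃ w : ℝ → ℝ, Continuous w ∧ (∀ t ∈ Ioc (0 : ℝ) 1, |w t| ≤ 1) ∧
      ∀ t, tailScaling p t v = w t • v := by
  intro v hv
  rcases List.mem_append.1 hv with hv | hv
  · rw [List.eq_of_mem_replicate hv]
    exact ⟨fun _ => 1, continuous_const, by simp, tailScaling_sDir⟩
  · obtain ⟨j, -, rfl⟩ := List.mem_map.1 hv
    refine ⟨fun t => if p j then t else 1, ?_, fun t ht => ?_, fun t => tailScaling_muDir t j⟩
    · split_ifs
      exacts [continuous_id, continuous_const]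
    · split_ifs
      · rw [abs_of_pos ht.1]; exact ht.2
      · simp

end TailScaling

section Hadamard

variable {n : ℕ} {p : Fin n → Prop} [DecidablePred p] {U : Set (ℝ × (Fin n → ℝ))}
  {f : ℝ → (Fin n → ℝ) → ℝ}

noncomputable def hadamardCoeff (p : Fin n → Prop) [DecidablePred p] (f : ℝ → (Fin n → ℝ) → ℝ)
    (i : Fin n) : ℝ → (Fin n → ℝ) → ℝ :=
  fun s μ => weightedIntegral (tailScaling p) 1 (dirDeriv (muDir i) (uncurry f)) (s, μ)

lemma eq_sum_mul_hadamardCoeff (hU : IsOpen U)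
    (hAU : ∀ t ∈ Icc (0 : ℝ) 1, MapsTo (tailScaling p t) U U) (hf : ContDiffOn ℝ 1 (uncurry f) U)
    {s : ℝ} {μ : Fin n → ℝ} (hq : (s, μ) ∈ U) (h0 : f s (fun j => if p j then 0 else μ j) = 0) :
    f s μ = ∑ i ∈ Finset.univ.filter p, μ i * hadamardCoeff p f i s μ := by
  set q : ℝ × (Fin n → ℝ) := (s, μ)
  have hγU : ∀ t ∈ Icc (0 : ℝ) 1, tailScaling p t q ∈ U := fun t ht => hAU t ht hq
  have hD : ContinuousOn (fun t => fderiv ℝ (uncurry f) (tailScaling p t q)) (Icc 0 1) :=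
    (hf.continuousOn_fderiv_of_isOpen hU le_rfl).comp
      (continuous_tailScaling.clm_apply continuous_const).continuousOn hγU
  have hFTC : ∫ t in (0 : ℝ)..1, fderiv ℝ (uncurry f) (tailScaling p t q) (tailProj p q) =
      f s μ := by
    rw [intervalIntegral.integral_eq_sub_of_hasDerivAt
      (f := fun t => uncurry f (tailScaling p t q)) (fun t ht => ?_)
      ((hD.clm_apply continuousOn_const).intervalIntegrable_of_Icc zero_le_one)]
    · simp [tailScaling_one, tailScaling_zero_apply, h0, q]
    · rw [uIcc_of_le zero_le_one] at ht
      exact ((hf.differentiableOn one_ne_zero).differentiableAt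
        (hU.mem_nhds (hγU t ht))).hasFDerivAt.comp_hasDerivAt t (hasDerivAt_tailScaling_apply q t)
  have hint : ∀ i, IntegrableOn (fun t => fderiv ℝ (uncurry f) (tailScaling p t q) (muDir i))
      (Ioc 0 1) := fun i =>
    (hD.clm_apply continuousOn_const).integrableOn_Icc.mono_set Ioc_subset_Icc_self
  rw [← hFTC, intervalIntegral.integral_of_le zero_le_one, tailProj_eq_sum]
  simp only [map_sum, map_smul, smul_eq_mul]
  rw [integral_finsetSum _ fun i _ => (hint i).const_mul _]
  refine Finset.sum_congr rfl fun i _ => ?_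
  simp [hadamardCoeff, weightedIntegral, dirDeriv, integral_const_mul]
  rfl

lemma contDiffOn_uncurry_hadamardCoeff (hU : IsOpen U)
    (hAU : ∀ t ∈ Icc (0 : ℝ) 1, MapsTo (tailScaling p t) U U) (hf : ContDiffOn ℝ ∞ (uncurry f) U)
    (i : Fin n) : ContDiffOn ℝ ∞ (uncurry (hadamardCoeff p f i)) U :=
  contDiffOn_weightedIntegral continuous_tailScaling hU hAU continuous_const (hf.dirDeriv hU _)

lemma exists_pderivMulti_hadamardCoeff_eq (hU : IsOpen U)
    (hAU : ∀ t ∈ Icc (0 : ℝ) 1, MapsTo (tailScaling p t) U U) (hf : ContDiffOn ℝ ∞ (uncurry f) U)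
    (i : Fin n) (l₀ : ℕ) (l : Fin n → ℕ) :
    ∃ c : ℝ → ℝ, (∀ t ∈ Ioc (0 : ℝ) 1, |c t| ≤ 1) ∧ ∀ q ∈ U,
      pderivMulti l₀ l (hadamardCoeff p f i) q.1 q.2 =
        weightedIntegral (tailScaling p) c
          (uncurry (pderivMulti l₀ (Function.update l i (l i + 1)) f)) q := by
  obtain ⟨c, -, hc1, hc⟩ := iterDirDeriv_weightedIntegral_of_eigen continuous_tailScaling hU hAU
    (hf.dirDeriv hU (muDir i)) (c := 1) continuous_const (exists_tailScaling_multiDirs_eq_smul l₀ l)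
  have hpartial : EqOn (iterDirDeriv (multiDirs l₀ l) (dirDeriv (muDir i) (uncurry f)))
      (uncurry (pderivMulti l₀ (Function.update l i (l i + 1)) f)) U := fun x hx =>
    (congrFun (iterDirDeriv_append _ [muDir i] (uncurry f)) x).symm.trans <|
    (iterDirDeriv_perm hU hf (multiDirs_append_perm l₀ l i) hx).trans
      (actsAsOn_pderivMulti hU l₀ _ f _ (fun _ _ => rfl) hf hx).symm
  refine ⟨c, fun t ht => by simpa using hc1 t ht, fun q hq => ?_⟩
  rw [← weightedIntegral_congr hAU hpartial hq, ← hc hq]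
  exact actsAsOn_pderivMulti hU l₀ l _ _ (fun _ _ => rfl)
    (contDiffOn_uncurry_hadamardCoeff hU hAU hf i) hq

lemma MemF.exists_contDiffOn_prod_ball {L : ℝ} (hf : MemF L 0 f) :
    ∃ s₁ > (0 : ℝ), ∃ r > (0 : ℝ),
      ContDiffOn ℝ ∞ (uncurry f) (Ioo 0 s₁ ×ˢ Metric.ball (0 : Fin n → ℝ) r) := by
  obtain ⟨⟨s₁, hs₁, V, hVo, hV0, hfV⟩, -⟩ := hf
  obtain ⟨r, hr, hrV⟩ := Metric.isOpen_iff.1 hVo 0 hV0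
  exact ⟨s₁, hs₁, r, hr, hfV.mono (prod_mono le_rfl hrV)⟩

theorem MemF.hadamardCoeff {L : ℝ} (hf : MemF L 0 f) (i : Fin n) :
    MemF L 0 (hadamardCoeff p f i) := by
  obtain ⟨s₁, hs₁, r, hr, hfU⟩ := hf.exists_contDiffOn_prod_ball
  have hU : IsOpen (Ioo 0 s₁ ×ˢ Metric.ball (0 : Fin n → ℝ) r) :=
    isOpen_Ioo.prod Metric.isOpen_ball
  have hAU : ∀ t ∈ Icc (0 : ℝ) 1, MapsTo (tailScaling p t) (Ioo 0 s₁ ×ˢ Metric.ball 0 r)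
      (Ioo 0 s₁ ×ˢ Metric.ball 0 r) := fun t ht => mapsTo_tailScaling ht
  refine ⟨⟨s₁, hs₁, _, Metric.isOpen_ball, Metric.mem_ball_self hr,
    contDiffOn_uncurry_hadamardCoeff hU hAU hfU i⟩, fun l₀ l => ?_⟩
  obtain ⟨V, hV, C, s₀, hs₀, hC⟩ := hf.2 l₀ (Function.update l i (l i + 1))
  obtain ⟨r', hr', hr'V⟩ := Metric.mem_nhds_iff.1 hV
  obtain ⟨c, hc1, hc⟩ := exists_pderivMulti_hadamardCoeff_eq hU hAU hfU i l₀ l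
  refine ⟨Metric.ball 0 (min r r'), Metric.ball_mem_nhds 0 (lt_min hr hr'), C, min s₁ s₀,
    lt_min hs₁ hs₀, fun s hs μ hμ => ?_⟩
  have hμ' := mem_ball_zero_iff.1 hμ
  rw [← Real.norm_eq_abs, hc (s, μ) ⟨⟨hs.1, hs.2.trans_le (min_le_left _ _)⟩,
    mem_ball_zero_iff.2 (hμ'.trans_le (min_le_left _ _))⟩]
  refine norm_weightedIntegral_le hc1 fun t ht => ?_
  have hμt : (tailScaling p t (s, μ)).2 ∈ V := hr'V <| mem_ball_zero_iff.2 <|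
    (norm_tailScaling_apply_snd_le (Ioc_subset_Icc_self ht) _).trans_lt
      (hμ'.trans_le (min_le_right _ _))
  simpa [Function.uncurry_def] using hC s ⟨hs.1, hs.2.trans_le (min_le_right _ _)⟩ _ hμt

end Hadamard

-- `Fin n` is `0`-based: the paper's `μ_k, …, μ_n` are the coordinates `j` with `k - 1 ≤ j`.
theorem stmt_5_general {n : ℕ} (L : ℝ) (k : ℕ)
    (f : ℝ → (Fin n → ℝ) → ℝ) (hf : MemF L (0 : Fin n → ℝ) f)
    (hvanish : ∃ s₀ > (0 : ℝ), ∃ V ∈ 𝓝 (0 : Fin n → ℝ),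
      ∀ s ∈ Ioo (0 : ℝ) s₀, ∀ μ ∈ V,
        (∀ j : Fin n, k - 1 ≤ (j : ℕ) → μ j = 0) → f s μ = 0) :
    ∃ g : Fin n → ℝ → (Fin n → ℝ) → ℝ,
      (∀ i : Fin n, k - 1 ≤ (i : ℕ) → MemF L (0 : Fin n → ℝ) (g i)) ∧
      ∃ s₀ > (0 : ℝ), ∃ V ∈ 𝓝 (0 : Fin n → ℝ), ∀ s ∈ Ioo (0 : ℝ) s₀, ∀ μ ∈ V,
        f s μ = ∑ i ∈ Finset.univ.filter (fun i : Fin n => k - 1 ≤ (i : ℕ)),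
          μ i * g i s μ := by
  obtain ⟨s₁, hs₁, r, hr, hfU⟩ := hf.exists_contDiffOn_prod_ball
  obtain ⟨s₀, hs₀, V, hV, hvan⟩ := hvanish
  obtain ⟨r', hr', hr'V⟩ := Metric.mem_nhds_iff.1 hV
  refine ⟨hadamardCoeff (fun j : Fin n => k - 1 ≤ (j : ℕ)) f, fun i _ => hf.hadamardCoeff i,
    min s₁ s₀, lt_min hs₁ hs₀, Metric.ball 0 (min r r'), Metric.ball_mem_nhds 0 (lt_min hr hr'),
    fun s hs μ hμ => ?_⟩
  have hμ' := mem_ball_zero_iff.1 hμ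
  refine eq_sum_mul_hadamardCoeff (isOpen_Ioo.prod Metric.isOpen_ball)
    (fun t ht => mapsTo_tailScaling ht) (hfU.of_le (by exact_mod_cast le_top))
    ⟨⟨hs.1, hs.2.trans_le (min_le_left _ _)⟩, mem_ball_zero_iff.2 (hμ'.trans_le (min_le_left _ _))⟩
    (hvan s ⟨hs.1, hs.2.trans_le (min_le_right _ _)⟩ _ (hr'V ?_) fun j hj => by simp [hj])
  exact mem_ball_zero_iff.2 ((norm_ite_zero_le μ).trans_lt (hμ'.trans_le (min_le_right _ _)))

/-- division in the class of flat functions: let `L ≥ 0`, `n ∈ ℕ` and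
`f ∈ F_L^∞(0ₙ)`. If `f(s;μ)` vanishes (for `s > 0` small and `μ` near `0ₙ`) whenever the
last `n−k+1` parameter variables `μ_k,…,μ_n` are zero (variables indexed 1-based; in
`Fin n` these are the indices `j` with `k − 1 ≤ j`), then `f = Σ_{i=k}^{n} μ_i·f_i` for
some `f_k,…,f_n ∈ F_L^∞(0ₙ)`. -/
theorem stmt_5 {n : ℕ} (L : ℝ) (hL : 0 ≤ L) (k : ℕ) (hk1 : 1 ≤ k) (hkn : k ≤ n)
    (f : ℝ → (Fin n → ℝ) → ℝ) (hf : MemF L (0 : Fin n → ℝ) f)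
    (hvanish : ∃ s₀ > (0 : ℝ), ∃ V ∈ 𝓝 (0 : Fin n → ℝ),
      ∀ s ∈ Ioo (0 : ℝ) s₀, ∀ μ ∈ V,
        (∀ j : Fin n, k - 1 ≤ (j : ℕ) → μ j = 0) → f s μ = 0) :
    ∃ g : Fin n → ℝ → (Fin n → ℝ) → ℝ,
      (∀ i : Fin n, k - 1 ≤ (i : ℕ) → MemF L (0 : Fin n → ℝ) (g i)) ∧
      ∃ s₀ > (0 : ℝ), ∃ V ∈ 𝓝 (0 : Fin n → ℝ), ∀ s ∈ Ioo (0 : ℝ) s₀, ∀ μ ∈ V,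
        f s μ = ∑ i ∈ Finset.univ.filter (fun i : Fin n => k - 1 ≤ (i : ℕ)),
          μ i * g i s μ :=
  stmt_5_general L k f hf hvanish
end

section
/- Let a ∈ (−2,0), set b = −a, let ε₁ ∈ ℝ and ε₂ = −2ε₁, and assume ε₂² < 4b(2−b). Set α₁ = √(4b(2−b) − ε₂²), r₁(x,y) = 2by + (2−b) + ε₂x, and define H₁(x,y) = y^a·(r₁(x,y)² + α₁²x²)·exp(−(2ε₂/α₁)·arctan(α₁x/r₁(x,y))) on the open set D = {(x,y) ∈ ℝ² : y > 0 and r₁(x,y) > 0}. Then H₁ is a first integral on D of the quadratic system ẋ = (b−2)/4 + ε₁x + (1−b)y + ax² + ε₂xy + by², ẏ = −2xy; that is, for all (x,y) ∈ D, ∂ₓH₁(x,y)·((b−2)/4 + ε₁x + (1−b)y + ax² + ε₂xy + by²) + ∂_yH₁(x,y)·(−2xy) = 0. -/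
/-!
For `r₁ > 0`, `arctan (α₁ x / r₁)` is the argument of `z = r₁ + i α₁ x`, so
`H₁ = y ^ a * |z|² * exp (c * arg z)` with `c = -2ε₂/α₁`. The derivative of `arg z` carries a
factor `1 / |z|²` that cancels against `|z|²`, hence both partial derivatives of `H₁` are
`y ^ a * exp (c * arg z)` times a rational function of `x, y`, and the first-integral identity becomes
a polynomial identity once `α₁² = 4b(2 - b) - ε₂²` is substituted.
-/

open Real

theorem hasDerivAt_arctan_div {f g : ℝ → ℝ} {f' g' x : ℝ} (hf : HasDerivAt f f' x)
    (hg : HasDerivAt g g' x) (hgx : g x ≠ 0) :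
    HasDerivAt (fun t => arctan (f t / g t)) ((f' * g x - f x * g') / (g x ^ 2 + f x ^ 2)) x := by
  refine (hf.div hg hgx).arctan.congr_deriv ?_
  have : g x ^ 2 + f x ^ 2 ≠ 0 := by positivity
  simp only [Pi.div_apply]
  field_simp

theorem hasDerivAt_sq_add_sq_mul_exp_arctan_div (c : ℝ) {f g : ℝ → ℝ} {f' g' x : ℝ}
    (hf : HasDerivAt f f' x) (hg : HasDerivAt g g' x) (hgx : g x ≠ 0) :
    HasDerivAt (fun t => (g t ^ 2 + f t ^ 2) * exp (c * arctan (f t / g t)))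
      (exp (c * arctan (f x / g x)) * (2 * (g x * g' + f x * f') + c * (f' * g x - f x * g'))) x := by
  refine (((hg.pow 2).add (hf.pow 2)).mul
    ((hasDerivAt_arctan_div hf hg hgx).const_mul c).exp).congr_deriv ?_
  have : g x ^ 2 + f x ^ 2 ≠ 0 := by positivity
  simp only [Pi.add_apply, Pi.pow_apply]
  field_simp
  ring

section AffineArgument

variable {a α c k m n : ℝ}

theorem hasDerivAt_rpow_mul_sq_add_sq_mul_exp_arctan_in_x (y : ℝ) {x : ℝ}
    (hr : m * y + k + n * x ≠ 0) :
    HasDerivAt (fun t => y ^ a * ((m * y + k + n * t) ^ 2 + α ^ 2 * t ^ 2) *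
        exp (c * arctan (α * t / (m * y + k + n * t))))
      (y ^ a * exp (c * arctan (α * x / (m * y + k + n * x))) *
        (2 * ((m * y + k + n * x) * n + α ^ 2 * x) + c * α * (m * y + k + n * x - x * n))) x := by
  have hr' : HasDerivAt (fun t => m * y + k + n * t) n x := by
    simpa using ((hasDerivAt_id' x).const_mul n).const_add (m * y + k)
  refine (((hasDerivAt_sq_add_sq_mul_exp_arctan_div c ((hasDerivAt_id' x).const_mul α) hr'
    hr).const_mul (y ^ a)).congr_deriv ?_).congr_of_eventuallyEq (.of_forall fun t => ?_) <;> ring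

theorem hasDerivAt_rpow_mul_sq_add_sq_mul_exp_arctan_in_y (x : ℝ) {y : ℝ} (hy : 0 < y)
    (hr : m * y + k + n * x ≠ 0) :
    HasDerivAt (fun t => t ^ a * ((m * t + k + n * x) ^ 2 + α ^ 2 * x ^ 2) *
        exp (c * arctan (α * x / (m * t + k + n * x))))
      (y ^ a * exp (c * arctan (α * x / (m * y + k + n * x))) *
        (a * ((m * y + k + n * x) ^ 2 + α ^ 2 * x ^ 2) / y +
          2 * m * (m * y + k + n * x) - c * α * m * x)) y := by
  have hr' : HasDerivAt (fun t => m * t + k + n * x) m y := by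
    simpa [add_assoc] using ((hasDerivAt_id' y).const_mul m).add_const (k + n * x)
  refine (((hasDerivAt_rpow_const (p := a) (Or.inl hy.ne')).fun_mul
    (hasDerivAt_sq_add_sq_mul_exp_arctan_div c (hasDerivAt_const y (α * x)) hr'
      hr)).congr_deriv ?_).congr_of_eventuallyEq (.of_forall fun t => ?_)
  · rw [rpow_sub_one hy.ne']
    field_simp
    ring
  · ring

end AffineArgument

theorem stmt_7_general (a e1 : ℝ) :
    let b : ℝ := -a
    let e2 : ℝ := -2 * e1
    e2 ^ 2 < 4 * b * (2 - b) →
    let α : ℝ := Real.sqrt (4 * b * (2 - b) - e2 ^ 2)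
    let r : ℝ → ℝ → ℝ := fun x y => 2 * b * y + (2 - b) + e2 * x
    let H : ℝ → ℝ → ℝ := fun x y =>
      y ^ a * ((r x y) ^ 2 + α ^ 2 * x ^ 2) *
        Real.exp (-(2 * e2 / α) * Real.arctan (α * x / r x y))
    ∀ x y : ℝ, 0 < y → 0 < r x y →
      deriv (fun t => H t y) x *
          ((b - 2) / 4 + e1 * x + (1 - b) * y + a * x ^ 2 + e2 * (x * y) + b * y ^ 2) +
        deriv (fun t => H x t) y * (-2 * x * y) = 0 := by
  intro b e2 he α r H x y hy hr
  have hα2 : α ^ 2 = 4 * b * (2 - b) - e2 ^ 2 := sq_sqrt (sub_pos.2 he).le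
  have hα : α ≠ 0 := (sqrt_pos.2 (sub_pos.2 he)).ne'
  rw [show deriv (fun t => H t y) x = _ from
      (hasDerivAt_rpow_mul_sq_add_sq_mul_exp_arctan_in_x y hr.ne').deriv,
    show deriv (fun t => H x t) y = _ from
      (hasDerivAt_rpow_mul_sq_add_sq_mul_exp_arctan_in_y x hy hr.ne').deriv]
  generalize exp (-(2 * e2 / α) * arctan (α * x / r x y)) = E
  field_simp
  simp only [b, e2] at hα2 ⊢
  linear_combination 2 * x * y ^ a * E *
    (-a - 2 + 4 * e1 * x + 4 * (1 + a) * y - 8 * e1 * x * y - 4 * a * y ^ 2) * hα2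

/-- for `a ∈ (−2,0)`, `b = −a`, `ε₂ = −2ε₁` with `ε₂² < 4b(2−b)`, the
function `H₁(x,y) = y^a·(r₁(x,y)² + α₁²x²)·exp(−(2ε₂/α₁)·arctan(α₁x/r₁(x,y)))`, where
`α₁ = √(4b(2−b) − ε₂²)` and `r₁(x,y) = 2by + (2−b) + ε₂x`, is a first integral on
`D = {y > 0, r₁ > 0}` of the quadratic system
`ẋ = (b−2)/4 + ε₁x + (1−b)y + ax² + ε₂xy + by²`, `ẏ = −2xy`. -/
theorem stmt_7 (a e1 : ℝ) (ha1 : -2 < a) (ha2 : a < 0) :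
    let b : ℝ := -a
    let e2 : ℝ := -2 * e1
    e2 ^ 2 < 4 * b * (2 - b) →
    let α : ℝ := Real.sqrt (4 * b * (2 - b) - e2 ^ 2)
    let r : ℝ → ℝ → ℝ := fun x y => 2 * b * y + (2 - b) + e2 * x
    let H : ℝ → ℝ → ℝ := fun x y =>
      y ^ a * ((r x y) ^ 2 + α ^ 2 * x ^ 2) *
        Real.exp (-(2 * e2 / α) * Real.arctan (α * x / r x y))
    ∀ x y : ℝ, 0 < y → 0 < r x y →
      deriv (fun t => H t y) x *
          ((b - 2) / 4 + e1 * x + (1 - b) * y + a * x ^ 2 + e2 * (x * y) + b * y ^ 2) +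
        deriv (fun t => H x t) y * (-2 * x * y) = 0 :=
  stmt_7_general a e1
end

section
/- Let a ∈ (−2,0), b ∈ (0,2), and let ε₁ ∈ ℝ satisfy ε₁² < a(b−2). Then the function z ↦ −2z/((b−2)/4 + ε₁z + az²) + 2z/((b−2)/4 − ε₁z + az²) is Lebesgue integrable on (0,+∞) and ∫₀^{+∞} ( −2z/((b−2)/4 + ε₁z + az²) + 2z/((b−2)/4 − ε₁z + az²) ) dz = −2πε₁/(a·√(a(b−2) − ε₁²)). -/
open MeasureTheory Real Set Filter Topology


private lemma aux_key (x e1 P Q : ℝ) (hP : P ≠ 0) (hQ : Q ≠ 0) (hPQ : P - Q = 2 * e1 * x) :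
    -2 * x / P + 2 * x / Q = 4 * e1 * x ^ 2 / (P * Q) := by
  rw [div_add_div _ _ hP hQ]
  congr 1
  linear_combination (2 * x) * hPQ

private lemma aux_deriv_eq (a e1 s x P Q : ℝ) (ha : a ≠ 0) (hs : s ≠ 0) (hP : P ≠ 0) (hQ : Q ≠ 0)
    (hsP : s ^ 2 + (2 * a * x + e1) ^ 2 = 4 * a * P)
    (hsQ : s ^ 2 + (2 * a * x - e1) ^ 2 = 4 * a * Q) :
    -2 * x / P + 2 * x / Q
      = ((-e1 + 2 * a * x) / Q - (e1 + 2 * a * x) / P) / a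
        + 2 * e1 / (a * s) * (1 / (1 + ((2 * a * x + e1) / s) ^ 2) * (2 * a / s)
          + 1 / (1 + ((2 * a * x - e1) / s) ^ 2) * (2 * a / s)) := by
  have h1 : 1 + ((2 * a * x + e1) / s) ^ 2 = 4 * a * P / s ^ 2 := by
    field_simp
    linear_combination hsP
  have h2 : 1 + ((2 * a * x - e1) / s) ^ 2 = 4 * a * Q / s ^ 2 := by
    field_simp
    linear_combination hsQ
  rw [h1, h2]
  have h4P : 4 * a * P ≠ 0 := by positivity
  have h4Q : 4 * a * Q ≠ 0 := by positivity
  field_simp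
  ring

set_option maxHeartbeats 1000000 in
/-- for `a ∈ (−2,0)`, `b ∈ (0,2)` and `ε₁² < a(b−2)`, the function
`z ↦ −2z/((b−2)/4 + ε₁z + az²) + 2z/((b−2)/4 − ε₁z + az²)` is Lebesgue integrable on
`(0,+∞)` and its integral equals `−2πε₁/(a·√(a(b−2) − ε₁²))`. -/
theorem stmt_9 (a b e1 : ℝ) (ha1 : -2 < a) (ha2 : a < 0) (hb1 : 0 < b) (hb2 : b < 2)
    (h1 : e1 ^ 2 < a * (b - 2)) :
    IntegrableOn (fun z : ℝ =>
      -2 * z / ((b - 2) / 4 + e1 * z + a * z ^ 2) +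
        2 * z / ((b - 2) / 4 - e1 * z + a * z ^ 2)) (Ioi 0) ∧
    ∫ z in Ioi (0 : ℝ), (-2 * z / ((b - 2) / 4 + e1 * z + a * z ^ 2) +
        2 * z / ((b - 2) / 4 - e1 * z + a * z ^ 2)) =
      -2 * π * e1 / (a * Real.sqrt (a * (b - 2) - e1 ^ 2)) := by
  have ha : a ≠ 0 := ha2.ne
  have hd : 0 < a * (b - 2) - e1 ^ 2 := by nlinarith
  set s : ℝ := Real.sqrt (a * (b - 2) - e1 ^ 2) with hs_def
  have hs : 0 < s := Real.sqrt_pos.mpr hd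
  have hs2 : s ^ 2 = a * (b - 2) - e1 ^ 2 := Real.sq_sqrt hd.le
  have hP : ∀ x : ℝ, (b - 2) / 4 + e1 * x + a * x ^ 2 < 0 := by
    intro x; nlinarith [sq_nonneg (2 * a * x + e1)]
  have hQ : ∀ x : ℝ, (b - 2) / 4 - e1 * x + a * x ^ 2 < 0 := by
    intro x; nlinarith [sq_nonneg (2 * a * x - e1)]
  set f : ℝ → ℝ := fun z =>
      -2 * z / ((b - 2) / 4 + e1 * z + a * z ^ 2) +
        2 * z / ((b - 2) / 4 - e1 * z + a * z ^ 2) with hf_def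
  set F : ℝ → ℝ := fun z =>
      (Real.log ((b - 2) / 4 - e1 * z + a * z ^ 2)
        - Real.log ((b - 2) / 4 + e1 * z + a * z ^ 2)) / a
      + 2 * e1 / (a * s) *
        (Real.arctan ((2 * a * z + e1) / s) + Real.arctan ((2 * a * z - e1) / s)) with hF_def
  -- derivative of F is f
  have hderiv : ∀ x : ℝ, HasDerivAt F (f x) x := by
    intro x
    have hPx := hP x
    have hQx := hQ x
    have h4P : s ^ 2 + (2 * a * x + e1) ^ 2 = 4 * a * ((b - 2) / 4 + e1 * x + a * x ^ 2) := by
      rw [hs2]; ring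
    have h4Q : s ^ 2 + (2 * a * x - e1) ^ 2 = 4 * a * ((b - 2) / 4 - e1 * x + a * x ^ 2) := by
      rw [hs2]; ring
    have hQd : HasDerivAt (fun z : ℝ => (b - 2) / 4 - e1 * z + a * z ^ 2)
        (-e1 + 2 * a * x) x := by
      have : HasDerivAt (fun z : ℝ => (b - 2) / 4 - e1 * z + a * z ^ 2)
          (0 - e1 * 1 + a * (2 * x)) x := by
        exact (((hasDerivAt_const x ((b-2)/4)).sub ((hasDerivAt_id x).const_mul e1)).add
          (((hasDerivAt_pow 2 x)).const_mul a)).congr_deriv (by ring)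
      simpa using this.congr_deriv (by ring)
    have hPd : HasDerivAt (fun z : ℝ => (b - 2) / 4 + e1 * z + a * z ^ 2)
        (e1 + 2 * a * x) x := by
      have : HasDerivAt (fun z : ℝ => (b - 2) / 4 + e1 * z + a * z ^ 2)
          (0 + e1 * 1 + a * (2 * x)) x := by
        exact (((hasDerivAt_const x ((b-2)/4)).add ((hasDerivAt_id x).const_mul e1)).add
          (((hasDerivAt_pow 2 x)).const_mul a)).congr_deriv (by ring)
      simpa using this.congr_deriv (by ring)
    have hlogQ : HasDerivAt (fun z : ℝ => Real.log ((b - 2) / 4 - e1 * z + a * z ^ 2))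
        ((-e1 + 2 * a * x) / ((b - 2) / 4 - e1 * x + a * x ^ 2)) x := by
      simpa [div_eq_mul_inv, mul_comm] using hQd.log hQx.ne
    have hlogP : HasDerivAt (fun z : ℝ => Real.log ((b - 2) / 4 + e1 * z + a * z ^ 2))
        ((e1 + 2 * a * x) / ((b - 2) / 4 + e1 * x + a * x ^ 2)) x := by
      simpa [div_eq_mul_inv, mul_comm] using hPd.log hPx.ne
    have hu1 : HasDerivAt (fun z : ℝ => (2 * a * z + e1) / s) (2 * a / s) x := by
      have : HasDerivAt (fun z : ℝ => 2 * a * z + e1) (2 * a) x := by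
        simpa using ((hasDerivAt_id x).const_mul (2 * a)).add_const e1
      exact this.div_const s
    have hu2 : HasDerivAt (fun z : ℝ => (2 * a * z - e1) / s) (2 * a / s) x := by
      have : HasDerivAt (fun z : ℝ => 2 * a * z - e1) (2 * a) x := by
        simpa using ((hasDerivAt_id x).const_mul (2 * a)).sub_const e1
      exact this.div_const s
    have harc1 : HasDerivAt (fun z : ℝ => Real.arctan ((2 * a * z + e1) / s))
        (1 / (1 + ((2 * a * x + e1) / s) ^ 2) * (2 * a / s)) x := hu1.arctan
    have harc2 : HasDerivAt (fun z : ℝ => Real.arctan ((2 * a * z - e1) / s))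
        (1 / (1 + ((2 * a * x - e1) / s) ^ 2) * (2 * a / s)) x := hu2.arctan
    have hF' : HasDerivAt F
        (((-e1 + 2 * a * x) / ((b - 2) / 4 - e1 * x + a * x ^ 2)
          - (e1 + 2 * a * x) / ((b - 2) / 4 + e1 * x + a * x ^ 2)) / a
        + 2 * e1 / (a * s) *
          (1 / (1 + ((2 * a * x + e1) / s) ^ 2) * (2 * a / s)
            + 1 / (1 + ((2 * a * x - e1) / s) ^ 2) * (2 * a / s))) x :=
      ((hlogQ.sub hlogP).div_const a).add ((harc1.add harc2).const_mul (2 * e1 / (a * s)))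
    convert hF' using 1
    simp only [hf_def]
    exact aux_deriv_eq a e1 s x _ _ ha hs.ne' hPx.ne hQx.ne h4P h4Q
  -- continuity of F
  have hFc : Continuous F := by
    refine continuous_iff_continuousAt.mpr fun x => (hderiv x).continuousAt
  -- limit of F at infinity
  have hlim : Tendsto F atTop (𝓝 (-2 * π * e1 / (a * s))) := by
    have hloglim : Tendsto (fun z : ℝ =>
        Real.log ((b - 2) / 4 - e1 * z + a * z ^ 2)
          - Real.log ((b - 2) / 4 + e1 * z + a * z ^ 2)) atTop (𝓝 0) := by
      have h1lim : Tendsto (fun z : ℝ =>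
          ((b - 2) / 4 - e1 * z + a * z ^ 2) / ((b - 2) / 4 + e1 * z + a * z ^ 2))
          atTop (𝓝 1) := by
        have hg : Tendsto (fun t : ℝ =>
            ((b - 2) / 4 * t ^ 2 - e1 * t + a) / ((b - 2) / 4 * t ^ 2 + e1 * t + a))
            (𝓝 0) (𝓝 1) := by
          have : ContinuousAt (fun t : ℝ =>
              ((b - 2) / 4 * t ^ 2 - e1 * t + a) / ((b - 2) / 4 * t ^ 2 + e1 * t + a)) 0 := by
            apply ContinuousAt.div (by fun_prop) (by fun_prop)
            simpa using ha
          have h0 : ((b - 2) / 4 * (0:ℝ) ^ 2 - e1 * 0 + a) / ((b - 2) / 4 * (0:ℝ) ^ 2 + e1 * 0 + a) = 1 := by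
            simp [div_self ha]
          simpa [ContinuousAt, h0, div_self ha] using this
        have hcomp := hg.comp tendsto_inv_atTop_zero
        apply hcomp.congr'
        filter_upwards [eventually_gt_atTop (0:ℝ)] with z hz
        have hzne : z ≠ 0 := hz.ne'
        have hden : (b - 2) / 4 * (z⁻¹) ^ 2 + e1 * z⁻¹ + a
            = ((b - 2) / 4 + e1 * z + a * z ^ 2) / z ^ 2 := by
          field_simp
        have hnum : (b - 2) / 4 * (z⁻¹) ^ 2 - e1 * z⁻¹ + a
            = ((b - 2) / 4 - e1 * z + a * z ^ 2) / z ^ 2 := by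
          field_simp
        simp only [Function.comp]
        rw [hden, hnum, div_div_div_cancel_right₀ (pow_ne_zero 2 hzne)]
      have := (Real.continuousAt_log one_ne_zero).tendsto.comp h1lim
      rw [Real.log_one] at this
      apply this.congr'
      filter_upwards [eventually_gt_atTop (0:ℝ)] with z _
      simp only [Function.comp]
      rw [Real.log_div (hQ z).ne (hP z).ne]
    have harclim1 : Tendsto (fun z : ℝ => Real.arctan ((2 * a * z + e1) / s))
        atTop (𝓝 (-(π / 2))) := by
      have hbot : Tendsto (fun z : ℝ => (2 * a * z + e1) / s) atTop atBot := by
        apply Tendsto.atBot_div_const hs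
        apply tendsto_atBot_add_const_right
        exact tendsto_id.const_mul_atTop_of_neg (by linarith)
      exact Real.tendsto_arctan_atBot.mono_right nhdsWithin_le_nhds |>.comp hbot
    have harclim2 : Tendsto (fun z : ℝ => Real.arctan ((2 * a * z - e1) / s))
        atTop (𝓝 (-(π / 2))) := by
      have hbot : Tendsto (fun z : ℝ => (2 * a * z - e1) / s) atTop atBot := by
        apply Tendsto.atBot_div_const hs
        apply tendsto_atBot_add_const_right
        exact tendsto_id.const_mul_atTop_of_neg (by linarith)
      exact Real.tendsto_arctan_atBot.mono_right nhdsWithin_le_nhds |>.comp hbot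
    have : Tendsto F atTop
        (𝓝 (0 / a + 2 * e1 / (a * s) * (-(π / 2) + -(π / 2)))) :=
      (hloglim.div_const a).add ((harclim1.add harclim2).const_mul _)
    convert this using 2
    field_simp
    ring
  -- value at 0
  have hF0 : F 0 = 0 := by
    have : (2 * a * (0:ℝ) - e1) / s = -((2 * a * (0:ℝ) + e1) / s) := by ring
    simp only [hF_def]
    rw [this]
    simp [Real.arctan_neg]
  -- sign of integrand on Ioi 0
  have hderiv' : ∀ x ∈ Ici (0:ℝ), HasDerivAt F (f x) x := fun x _ => hderiv x
  have key : ∀ x : ℝ, f x = 4 * e1 * x ^ 2 /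
      (((b - 2) / 4 + e1 * x + a * x ^ 2) * ((b - 2) / 4 - e1 * x + a * x ^ 2)) := by
    intro x
    simp only [hf_def]
    exact aux_key x e1 _ _ (hP x).ne (hQ x).ne (by ring)
  have hPQpos : ∀ x : ℝ,
      0 < ((b - 2) / 4 + e1 * x + a * x ^ 2) * ((b - 2) / 4 - e1 * x + a * x ^ 2) :=
    fun x => mul_pos_of_neg_of_neg (hP x) (hQ x)
  rcases le_or_gt 0 e1 with he | he
  · have hsign : ∀ x ∈ Ioi (0:ℝ), 0 ≤ f x := by
      intro x _
      rw [key x]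
      exact div_nonneg (by positivity) (hPQpos x).le
    refine ⟨integrableOn_Ioi_deriv_of_nonneg' hderiv' hsign hlim, ?_⟩
    have := integral_Ioi_of_hasDerivAt_of_nonneg' hderiv' hsign hlim
    rw [hF0, sub_zero] at this
    exact this
  · have hsign : ∀ x ∈ Ioi (0:ℝ), f x ≤ 0 := by
      intro x _
      rw [key x]
      apply div_nonpos_of_nonpos_of_nonneg _ (hPQpos x).le
      nlinarith [sq_nonneg x]
    refine ⟨integrableOn_Ioi_deriv_of_nonpos' hderiv' hsign hlim, ?_⟩
    have := integral_Ioi_of_hasDerivAt_of_nonpos' hderiv' hsign hlim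
    rw [hF0, sub_zero] at this
    exact this
end

section
/- Let a ∈ (−2,0), b ∈ (0,2), and let ε₂ ∈ ℝ satisfy ε₂² < 4b(a+2). Then the function h(z) = (1/z)·( 2/(a+2) − 2/((a+2) + ε₂z + bz²) ) − 2z/((a+2)z² + ε₂z + b), which extends continuously to z = 0 (with value 2ε₂/(a+2)²), satisfies ∫_{−1}^{1} h(z) dz = 2πε₂/((a+2)·√(4b(a+2) − ε₂²)). -/
/-!
Write `A = a + 2`, `q₁(z) = bz² + ε₂z + A` and `q₂(z) = Az² + ε₂z + b`, both positive since their
discriminants are negative. As `(1/z)(2/A − 2/q₁(z)) = 2(ε₂ + bz)/(A q₁(z))`, the function `h` is a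
rational function without real poles. Splitting its numerators along `q₁'` and `q₂'` gives the
primitive `A⁻¹ log (q₁/q₂) + 2ε₂/(AΔ) · (arctan ((2bz + ε₂)/Δ) + arctan ((2Az + ε₂)/Δ))` with
`Δ = √(4Ab − ε₂²)`. Since `q₁(±1) = q₂(±1)` the logarithms cancel, and by the arctangent addition
formula the four boundary arctangents add up to `π`.
-/

open MeasureTheory Real

lemma quadratic_pos_of_sq_lt {p q r : ℝ} (hp : 0 < p) (h : q ^ 2 < 4 * p * r) (z : ℝ) :
    0 < p * z ^ 2 + q * z + r := by
  nlinarith [sq_nonneg (2 * p * z + q)]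

lemma hasDerivAt_quadratic (p q r z : ℝ) :
    HasDerivAt (fun z => p * z ^ 2 + q * z + r) (2 * p * z + q) z := by
  refine ((((hasDerivAt_pow 2 z).const_mul p).add ((hasDerivAt_id' z).const_mul q)).add_const
    r).congr_deriv ?_
  norm_num
  ring

lemma hasDerivAt_arctan_quadratic {p q r Δ : ℝ} (hp : p ≠ 0) (hΔ : 0 < Δ)
    (hΔsq : Δ ^ 2 = 4 * p * r - q ^ 2) (z : ℝ) :
    HasDerivAt (fun z => arctan ((2 * p * z + q) / Δ)) (Δ / (2 * (p * z ^ 2 + q * z + r))) z := by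
  have hQ : p * z ^ 2 + q * z + r ≠ 0 := by
    intro h0
    have : (2 * p * z + q) ^ 2 + Δ ^ 2 = 4 * p * (p * z ^ 2 + q * z + r) := by
      rw [hΔsq]; ring
    rw [h0, mul_zero] at this
    nlinarith [sq_nonneg (2 * p * z + q)]
  have hlin : HasDerivAt (fun z => (2 * p * z + q) / Δ) (2 * p / Δ) z := by
    simpa using (((hasDerivAt_id z).const_mul (2 * p)).add_const q).div_const Δ
  have hden : 1 + ((2 * p * z + q) / Δ) ^ 2 = 4 * p * (p * z ^ 2 + q * z + r) / Δ ^ 2 := by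
    field_simp
    linear_combination hΔsq
  convert hlin.arctan using 1
  rw [hden]
  field_simp
  ring

lemma arctan_add_arctan_of_add_pos {u v : ℝ} (h : 0 < u + v) :
    arctan u + arctan v = π / 2 - arctan ((1 - u * v) / (u + v)) := by
  set s := arctan u + arctan v with hs
  have hs_pos : 0 < s := by
    have := arctan_strictMono (show -v < u by linarith)
    rw [arctan_neg] at this
    linarith
  have hs_lt : s < π := by linarith [arctan_lt_pi_div_two u, arctan_lt_pi_div_two v]
  have hcos : cos s = (1 - u * v) / (√(1 + u ^ 2) * √(1 + v ^ 2)) := by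
    rw [hs, cos_add, cos_arctan, sin_arctan, cos_arctan, sin_arctan]
    field_simp
  have hsin : sin s = (u + v) / (√(1 + u ^ 2) * √(1 + v ^ 2)) := by
    rw [hs, sin_add, cos_arctan, sin_arctan, cos_arctan, sin_arctan]
    field_simp
  have htan : tan (π / 2 - s) = (1 - u * v) / (u + v) := by
    rw [tan_pi_div_two_sub, tan_eq_sin_div_cos, inv_div, hsin, hcos,
      div_div_div_cancel_right₀ (by positivity)]
  rw [← htan, arctan_tan (by linarith) (by linarith)]
  ring

lemma arctan_add_arctan_quadratic {p q r Δ : ℝ} (hp : 0 < p) (hΔ : 0 < Δ)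
    (hΔsq : Δ ^ 2 = 4 * p * r - q ^ 2) :
    arctan ((2 * p + q) / Δ) + arctan ((2 * p - q) / Δ) = π / 2 - arctan ((r - p) / Δ) := by
  have hsum : (2 * p + q) / Δ + (2 * p - q) / Δ = 4 * p / Δ := by ring
  rw [arctan_add_arctan_of_add_pos (by rw [hsum]; positivity), hsum]
  congr 2
  rw [div_eq_div_iff (by positivity) hΔ.ne']
  field_simp
  linear_combination hΔsq

section Integrand

variable {A b e : ℝ}

noncomputable def regularIntegrand (A b e z : ℝ) : ℝ :=
  2 * (e + b * z) / (A * (b * z ^ 2 + e * z + A)) - 2 * z / (A * z ^ 2 + e * z + b)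

noncomputable def regularIntegrandPrimitive (A b e Δ z : ℝ) : ℝ :=
  A⁻¹ * (log (b * z ^ 2 + e * z + A) - log (A * z ^ 2 + e * z + b)) +
    2 * e / (A * Δ) * (arctan ((2 * b * z + e) / Δ) + arctan ((2 * A * z + e) / Δ))

lemma regularIntegrand_zero (hA : A ≠ 0) : regularIntegrand A b e 0 = 2 * e / A ^ 2 := by
  simp only [regularIntegrand, mul_zero, add_zero, ne_eq, OfNat.ofNat_ne_zero, not_false_eq_true,
    zero_pow, zero_add, zero_div, sub_zero]
  field_simp

lemma regularIntegrand_eq_of_ne_zero {z : ℝ} (hz : z ≠ 0) (hA : A ≠ 0)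
    (hq : b * z ^ 2 + e * z + A ≠ 0) :
    regularIntegrand A b e z =
      1 / z * (2 / A - 2 / (A + e * z + b * z ^ 2)) - 2 * z / (A * z ^ 2 + e * z + b) := by
  rw [regularIntegrand, show A + e * z + b * z ^ 2 = b * z ^ 2 + e * z + A by ring]
  congr 1
  generalize hQ : b * z ^ 2 + e * z + A = Q at hq ⊢
  field_simp
  linear_combination hQ

lemma continuous_regularIntegrand (hA : 0 < A) (hb : 0 < b) (he : e ^ 2 < 4 * b * A) :
    Continuous (regularIntegrand A b e) := by
  have hq₁ := quadratic_pos_of_sq_lt hb he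
  have hq₂ := quadratic_pos_of_sq_lt (q := e) (r := b) hA (by linarith)
  refine .sub (.div (by fun_prop) (by fun_prop) fun z => ?_)
    (.div (by fun_prop) (by fun_prop) fun z => ?_)
  · exact (mul_pos hA (hq₁ z)).ne'
  · exact (hq₂ z).ne'

lemma hasDerivAt_regularIntegrandPrimitive {Δ : ℝ} (hA : 0 < A) (hb : 0 < b) (hΔ : 0 < Δ)
    (hΔsq : Δ ^ 2 = 4 * b * A - e ^ 2) (z : ℝ) :
    HasDerivAt (regularIntegrandPrimitive A b e Δ) (regularIntegrand A b e z) z := by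
  have hq₁ := quadratic_pos_of_sq_lt (q := e) (r := A) hb (by nlinarith) z
  have hq₂ := quadratic_pos_of_sq_lt (q := e) (r := b) hA (by nlinarith) z
  have hlog₁ := (hasDerivAt_quadratic b e A z).log hq₁.ne'
  have hlog₂ := (hasDerivAt_quadratic A e b z).log hq₂.ne'
  have hatan₁ := hasDerivAt_arctan_quadratic hb.ne' hΔ hΔsq z
  have hatan₂ :=
    hasDerivAt_arctan_quadratic (q := e) (r := b) hA.ne' hΔ (by linear_combination hΔsq) z
  refine (((hlog₁.sub hlog₂).const_mul A⁻¹).add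
    ((hatan₁.add hatan₂).const_mul (2 * e / (A * Δ)))).congr_deriv ?_
  simp only [regularIntegrand]
  field_simp
  ring

lemma regularIntegrandPrimitive_one_sub_neg_one {Δ : ℝ} (hA : 0 < A) (hb : 0 < b) (hΔ : 0 < Δ)
    (hΔsq : Δ ^ 2 = 4 * b * A - e ^ 2) :
    regularIntegrandPrimitive A b e Δ 1 - regularIntegrandPrimitive A b e Δ (-1) =
      2 * π * e / (A * Δ) := by
  have hb' := arctan_add_arctan_quadratic hb hΔ hΔsq
  have hA' := arctan_add_arctan_quadratic (q := e) (r := b) hA hΔ (by linear_combination hΔsq)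
  rw [show (b - A) / Δ = -((A - b) / Δ) by ring, arctan_neg] at hA'
  have hlog : ∀ z : ℝ, z ^ 2 = 1 →
      log (b * z ^ 2 + e * z + A) - log (A * z ^ 2 + e * z + b) = 0 := by
    intro z hz
    rw [sub_eq_zero, hz]
    ring_nf
  have harg : ∀ p : ℝ, (2 * p * 1 + e) / Δ = (2 * p + e) / Δ ∧
      (2 * p * (-1) + e) / Δ = -((2 * p - e) / Δ) := fun p => ⟨by ring, by ring⟩
  simp only [regularIntegrandPrimitive, hlog 1 (by norm_num), hlog (-1) (by norm_num), (harg b).1,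
    (harg b).2, (harg A).1, (harg A).2, arctan_neg]
  linear_combination (2 * e / (A * Δ)) * (hb' + hA')

end Integrand

theorem stmt_10_general (a b e2 : ℝ) (ha1 : -2 < a) (hb1 : 0 < b)
    (h2 : e2 ^ 2 < 4 * b * (a + 2)) :
    let h : ℝ → ℝ := fun z =>
      if z = 0 then 2 * e2 / (a + 2) ^ 2
      else (1 / z) * (2 / (a + 2) - 2 / ((a + 2) + e2 * z + b * z ^ 2)) -
        2 * z / ((a + 2) * z ^ 2 + e2 * z + b)
    Continuous h ∧
    ∫ z in (-1 : ℝ)..1, h z =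
      2 * π * e2 / ((a + 2) * Real.sqrt (4 * b * (a + 2) - e2 ^ 2)) := by
  intro h
  have hA : 0 < a + 2 := by linarith
  have hh : h = regularIntegrand (a + 2) b e2 := by
    funext z
    by_cases hz : z = 0
    · simp only [h, hz, if_true, regularIntegrand_zero hA.ne']
    · simp only [h, hz, if_false]
      exact (regularIntegrand_eq_of_ne_zero hz hA.ne' (quadratic_pos_of_sq_lt hb1 h2 z).ne').symm
  have hcont := continuous_regularIntegrand hA hb1 h2
  refine ⟨hh ▸ hcont, ?_⟩
  have hΔ : 0 < √(4 * b * (a + 2) - e2 ^ 2) := sqrt_pos.2 (by linarith)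
  have hΔsq : √(4 * b * (a + 2) - e2 ^ 2) ^ 2 = 4 * b * (a + 2) - e2 ^ 2 := sq_sqrt (by linarith)
  rw [hh, intervalIntegral.integral_eq_sub_of_hasDerivAt
    (fun z _ => hasDerivAt_regularIntegrandPrimitive hA hb1 hΔ hΔsq z)
    (hcont.intervalIntegrable _ _)]
  exact regularIntegrandPrimitive_one_sub_neg_one hA hb1 hΔ hΔsq

/-- for `a ∈ (−2,0)`, `b ∈ (0,2)` and `ε₂² < 4b(a+2)`, the function
`h(z) = (1/z)·(2/(a+2) − 2/((a+2) + ε₂z + bz²)) − 2z/((a+2)z² + ε₂z + b)`, extended at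
`z = 0` by the value `2ε₂/(a+2)²`, is continuous and satisfies
`∫_{−1}^{1} h(z) dz = 2πε₂/((a+2)·√(4b(a+2) − ε₂²))`. -/
theorem stmt_10 (a b e2 : ℝ) (ha1 : -2 < a) (ha2 : a < 0) (hb1 : 0 < b) (hb2 : b < 2)
    (h2 : e2 ^ 2 < 4 * b * (a + 2)) :
    let h : ℝ → ℝ := fun z =>
      if z = 0 then 2 * e2 / (a + 2) ^ 2
      else (1 / z) * (2 / (a + 2) - 2 / ((a + 2) + e2 * z + b * z ^ 2)) -
        2 * z / ((a + 2) * z ^ 2 + e2 * z + b)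
    Continuous h ∧
    ∫ z in (-1 : ℝ)..1, h z =
      2 * π * e2 / ((a + 2) * Real.sqrt (4 * b * (a + 2) - e2 ^ 2)) :=
  stmt_10_general a b e2 ha1 hb1 h2
end

section
/- Let a ∈ (−2,−1) and η > 0. Then the function u ↦ ((1 + ηu²)^{−2−1/a} − 1)·u^{2/a} is Lebesgue integrable on (0,+∞) and ∫₀^{+∞} ((1 + ηu²)^{−2−1/a} − 1)·u^{2/a} du = (√π/4)·(Γ((a+2)/(2a))/Γ((2a+1)/a))·η^{−(a+2)/(2a)}, where Γ denotes the Euler Gamma function. -/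
/-!
The value is the analytic continuation in `p` of the Beta-type integral
`∫₀^∞ u^p (1 + ηu²)^(-s) du = η^(-(p+1)/2) Γ((p+1)/2) Γ(s - (p+1)/2) / (2 Γ(s))`
from `p > -1` to `-3 < p < -1`, the subtraction of `1` making the integral converge at `0`.
Integrating by parts against `u^(p+1)`, whose boundary terms vanish, trades the regularized
integrand for `u^(p+2) (1 + ηu²)^(-s-1)`, which is convergent and becomes the Beta integral
`B((p+3)/2, s - (p+1)/2)` under `x = ηu²/(1 + ηu²)`; `Γ(z+1) = zΓ(z)` then cancels the factors
produced by the integration by parts. The theorem is the case `p = 2/a`, `s = 2 + 1/a`.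
-/

open MeasureTheory Real Set Filter Topology

lemma ofReal_rpow_mul_one_sub_rpow {x : ℝ} (hx : x ∈ Ioo (0:ℝ) 1) (q r : ℝ) :
    ((x ^ (q - 1) * (1 - x) ^ (r - 1) : ℝ) : ℂ) =
      (x : ℂ) ^ ((q : ℂ) - 1) * (1 - (x : ℂ)) ^ ((r : ℂ) - 1) := by
  push_cast [Complex.ofReal_cpow hx.1.le, Complex.ofReal_cpow (sub_nonneg.2 hx.2.le)]
  rfl

theorem integrableOn_Ioo_rpow_mul_one_sub_rpow {q r : ℝ} (hq : 0 < q) (hr : 0 < r) :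
    IntegrableOn (fun x : ℝ => x ^ (q - 1) * (1 - x) ^ (r - 1)) (Ioo 0 1) := by
  have h := (Complex.betaIntegral_convergent (u := q) (v := r) (by simpa) (by simpa))
  rw [intervalIntegrable_iff_integrableOn_Ioo_of_le zero_le_one] at h
  exact (by simpa using (h.congr_fun (fun x hx => (ofReal_rpow_mul_one_sub_rpow hx q r).symm)
    measurableSet_Ioo).re : Integrable _ _)

theorem integral_Ioo_rpow_mul_one_sub_rpow {q r : ℝ} (hq : 0 < q) (hr : 0 < r) :
    ∫ x in Ioo (0:ℝ) 1, x ^ (q - 1) * (1 - x) ^ (r - 1) = Gamma q * Gamma r / Gamma (q + r) := by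
  apply Complex.ofReal_injective
  rw [← integral_complex_ofReal, setIntegral_congr_fun measurableSet_Ioo
    (fun x hx => ofReal_rpow_mul_one_sub_rpow hx q r), ← integral_Ioc_eq_integral_Ioo,
    ← intervalIntegral.integral_of_le zero_le_one, ← Complex.betaIntegral,
    Complex.betaIntegral_eq_Gamma_mul_div _ _ (by simpa) (by simpa)]
  push_cast [← Complex.ofReal_add, Complex.Gamma_ofReal]
  rfl

section BetaSubstitution

variable {η : ℝ}

theorem hasDerivAt_mul_sq_div_one_add_mul_sq (hη : 0 ≤ η) (u : ℝ) :
    HasDerivAt (fun u : ℝ => η * u ^ 2 / (1 + η * u ^ 2))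
      (2 * η * u / (1 + η * u ^ 2) ^ 2) u := by
  have hB : 1 + η * u ^ 2 ≠ 0 := by positivity
  refine (((hasDerivAt_pow 2 u).const_mul η).fun_div
    (((hasDerivAt_pow 2 u).const_mul η).const_add 1) hB).congr_deriv ?_
  field_simp
  ring

theorem strictMonoOn_mul_sq_div_one_add_mul_sq (hη : 0 < η) :
    StrictMonoOn (fun u : ℝ => η * u ^ 2 / (1 + η * u ^ 2)) (Ici 0) := by
  intro u hu v hv huv
  simp only
  rw [div_lt_div_iff₀ (by positivity) (by positivity)]
  have : u ^ 2 < v ^ 2 := pow_lt_pow_left₀ huv hu two_ne_zero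
  nlinarith

theorem image_mul_sq_div_one_add_mul_sq_Ioi (hη : 0 < η) :
    (fun u : ℝ => η * u ^ 2 / (1 + η * u ^ 2)) '' Ioi 0 = Ioo 0 1 := by
  ext x
  constructor
  · rintro ⟨u, hu, rfl⟩
    have : 0 < η * u ^ 2 := by have := hu.out; positivity
    exact ⟨by positivity, (div_lt_one (by positivity)).2 (by linarith)⟩
  · rintro ⟨hx0, hx1⟩
    refine ⟨√(x / (η * (1 - x))), Real.sqrt_pos.2 (div_pos hx0 (by nlinarith)), ?_⟩
    have h1x : 0 < 1 - x := by linarith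
    simp only
    rw [Real.sq_sqrt (div_pos hx0 (by positivity)).le]
    field_simp
    ring

theorem abs_deriv_smul_beta_integrand (hη : 0 < η) {u : ℝ} (hu : 0 < u) (q r : ℝ) :
    |2 * η * u / (1 + η * u ^ 2) ^ 2| •
        ((η * u ^ 2 / (1 + η * u ^ 2)) ^ (q - 1) * (1 - η * u ^ 2 / (1 + η * u ^ 2)) ^ (r - 1)) =
      2 * η ^ q * (u ^ (2 * q - 1) * (1 + η * u ^ 2) ^ (-(q + r))) := by
  set B := 1 + η * u ^ 2
  have hB0 : 0 < B := by positivity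
  have h1 : 1 - η * u ^ 2 / B = B⁻¹ := by field_simp; ring
  have hu2 : (u ^ 2) ^ (q - 1) = u ^ (2 * q - 2) := by
    rw [← Real.rpow_natCast, ← Real.rpow_mul hu.le]; push_cast; ring_nf
  have hηq : η ^ q = η * η ^ (q - 1) := by
    rw [mul_comm, ← Real.rpow_add_one hη.ne', sub_add_cancel]
  have huq : u ^ (2 * q - 1) = u * u ^ (2 * q - 2) := by
    rw [mul_comm u, ← Real.rpow_add_one hu.ne']; ring_nf
  have hBqr : B ^ (-(q + r)) = (B ^ 2 * B ^ (q - 1) * B ^ (r - 1))⁻¹ := by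
    rw [Real.rpow_neg hB0.le, ← Real.rpow_natCast, ← Real.rpow_add hB0, ← Real.rpow_add hB0]
    ring_nf
  rw [smul_eq_mul, abs_of_pos (by positivity), h1, Real.inv_rpow hB0.le,
    Real.div_rpow (by positivity) hB0.le, Real.mul_rpow hη.le (by positivity), hu2, hηq, huq, hBqr]
  field_simp

theorem integral_Ioi_rpow_mul_one_add_mul_sq_rpow_neg (hη : 0 < η) {q r : ℝ} (hq : 0 < q)
    (hr : 0 < r) :
    IntegrableOn (fun u : ℝ => u ^ (2 * q - 1) * (1 + η * u ^ 2) ^ (-(q + r))) (Ioi 0) ∧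
      ∫ u in Ioi (0 : ℝ), u ^ (2 * q - 1) * (1 + η * u ^ 2) ^ (-(q + r)) =
        Gamma q * Gamma r / (2 * η ^ q * Gamma (q + r)) := by
  have hderiv : ∀ u ∈ Ioi (0 : ℝ), HasDerivWithinAt (fun u : ℝ => η * u ^ 2 / (1 + η * u ^ 2))
      (2 * η * u / (1 + η * u ^ 2) ^ 2) (Ioi 0) u := fun u _ =>
    (hasDerivAt_mul_sq_div_one_add_mul_sq hη.le u).hasDerivWithinAt
  have hinj := (strictMonoOn_mul_sq_div_one_add_mul_sq hη).injOn.mono Ioi_subset_Ici_self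
  have hint := integrableOn_image_iff_integrableOn_abs_deriv_smul measurableSet_Ioi hderiv hinj
    fun x : ℝ => x ^ (q - 1) * (1 - x) ^ (r - 1)
  have hval := integral_image_eq_integral_abs_deriv_smul measurableSet_Ioi hderiv hinj
    fun x : ℝ => x ^ (q - 1) * (1 - x) ^ (r - 1)
  rw [image_mul_sq_div_one_add_mul_sq_Ioi hη, integral_Ioo_rpow_mul_one_sub_rpow hq hr,
    setIntegral_congr_fun measurableSet_Ioi
      (fun u hu => abs_deriv_smul_beta_integrand hη hu q r), integral_const_mul] at hval
  rw [image_mul_sq_div_one_add_mul_sq_Ioi hη] at hint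
  have hc : 2 * η ^ q ≠ 0 := by positivity
  refine ⟨(integrable_const_mul_iff (IsUnit.mk0 _ hc) _).1
    ((hint.1 (integrableOn_Ioo_rpow_mul_one_sub_rpow hq hr)).congr_fun
      (fun u hu => abs_deriv_smul_beta_integrand hη hu q r) measurableSet_Ioi), ?_⟩
  rw [mul_comm (2 * η ^ q), ← div_div, hval]
  field_simp

end BetaSubstitution

theorem one_sub_one_add_rpow_neg_le {x s : ℝ} (hx : 0 ≤ x) (hs : 0 ≤ s) :
    1 - (1 + x) ^ (-s) ≤ s * x := by
  have hlog : log (1 + x) ≤ x := by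
    linarith [Real.log_le_sub_one_of_pos (by linarith : 0 < 1 + x)]
  -- `1 - e^(-t) ≤ t` for `t = s log(1 + x) ≤ s x`
  have hexp := Real.add_one_le_exp (log (1 + x) * -s)
  rw [← Real.rpow_def_of_pos (by linarith)] at hexp
  nlinarith [mul_le_mul_of_nonneg_left hlog hs]

section Regularized

variable {η s p : ℝ}

theorem abs_one_add_mul_sq_rpow_neg_sub_one_le_mul_sq (hη : 0 ≤ η) (hs : 0 ≤ s) (u : ℝ) :
    |(1 + η * u ^ 2) ^ (-s) - 1| ≤ s * η * u ^ 2 := by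
  have hle : (1 + η * u ^ 2) ^ (-s) ≤ 1 :=
    Real.rpow_le_one_of_one_le_of_nonpos (by nlinarith [sq_nonneg u]) (by linarith)
  rw [abs_of_nonpos (by linarith), neg_sub, mul_assoc]
  exact one_sub_one_add_rpow_neg_le (by positivity) hs

theorem abs_one_add_mul_sq_rpow_neg_sub_one_le_one (hη : 0 ≤ η) (hs : 0 ≤ s) (u : ℝ) :
    |(1 + η * u ^ 2) ^ (-s) - 1| ≤ 1 := by
  have hle : (1 + η * u ^ 2) ^ (-s) ≤ 1 :=
    Real.rpow_le_one_of_one_le_of_nonpos (by nlinarith [sq_nonneg u]) (by linarith)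
  have hpos : 0 < (1 + η * u ^ 2) ^ (-s) := Real.rpow_pos_of_pos (by positivity) _
  rw [abs_of_nonpos (by linarith)]
  linarith

theorem abs_one_add_mul_sq_rpow_neg_sub_one_mul_rpow_le (hη : 0 ≤ η) (hs : 0 ≤ s) {u : ℝ}
    (hu : 0 < u) (p : ℝ) :
    |((1 + η * u ^ 2) ^ (-s) - 1) * u ^ p| ≤ min (s * η * u ^ (p + 2)) (u ^ p) := by
  have hup : 0 < u ^ p := Real.rpow_pos_of_pos hu p
  rw [abs_mul, abs_of_pos hup, Real.rpow_add hu, Real.rpow_two, le_min_iff]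
  constructor
  · nlinarith [abs_one_add_mul_sq_rpow_neg_sub_one_le_mul_sq hη hs u]
  · nlinarith [abs_one_add_mul_sq_rpow_neg_sub_one_le_one hη hs u]

theorem continuousOn_one_add_mul_sq_rpow_neg_sub_one_mul_rpow (hη : 0 ≤ η) (s p : ℝ) :
    ContinuousOn (fun u : ℝ => ((1 + η * u ^ 2) ^ (-s) - 1) * u ^ p) (Ioi 0) := fun u hu =>
  (((ContinuousAt.rpow_const (by fun_prop) (Or.inl (by positivity))).sub continuousAt_const).mul
    (Real.continuousAt_rpow_const _ _ (Or.inl hu.out.ne'))).continuousWithinAt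

theorem integrableOn_Ioi_one_add_mul_sq_rpow_neg_sub_one_mul_rpow (hη : 0 ≤ η) (hs : 0 ≤ s)
    (hp3 : -3 < p) (hp1 : p < -1) :
    IntegrableOn (fun u : ℝ => ((1 + η * u ^ 2) ^ (-s) - 1) * u ^ p) (Ioi 0) := by
  have hcont := continuousOn_one_add_mul_sq_rpow_neg_sub_one_mul_rpow hη s p
  rw [← Ioc_union_Ioi_eq_Ioi zero_le_one]
  refine IntegrableOn.union ?_ ?_
  · have hdom : IntegrableOn (fun u : ℝ => s * η * u ^ (p + 2)) (Ioc 0 1) :=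
      ((intervalIntegrable_iff_integrableOn_Ioc_of_le zero_le_one).1
        (intervalIntegral.intervalIntegrable_rpow' (by linarith))).const_mul _
    refine hdom.mono' ((hcont.mono Ioc_subset_Ioi_self).aestronglyMeasurable measurableSet_Ioc)
      ((ae_restrict_iff' measurableSet_Ioc).2 (ae_of_all _ fun u hu => ?_))
    rw [Real.norm_eq_abs]
    exact (abs_one_add_mul_sq_rpow_neg_sub_one_mul_rpow_le hη hs hu.1 p).trans (min_le_left _ _)
  · refine (integrableOn_Ioi_rpow_of_lt hp1 zero_lt_one).mono'
      ((hcont.mono (Ioi_subset_Ioi zero_le_one)).aestronglyMeasurable measurableSet_Ioi)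
      ((ae_restrict_iff' measurableSet_Ioi).2 (ae_of_all _ fun u hu => ?_))
    rw [Real.norm_eq_abs]
    exact (abs_one_add_mul_sq_rpow_neg_sub_one_mul_rpow_le hη hs
      (lt_trans zero_lt_one hu) p).trans (min_le_right _ _)

theorem tendsto_one_add_mul_sq_rpow_neg_sub_one_mul_rpow_nhdsGT_zero (hη : 0 ≤ η) (hs : 0 ≤ s)
    (hp : -2 < p) :
    Tendsto (fun u : ℝ => ((1 + η * u ^ 2) ^ (-s) - 1) * u ^ p) (𝓝[>] 0) (𝓝 0) := by
  have hbound : Tendsto (fun u : ℝ => s * η * u ^ (p + 2)) (𝓝[>] 0) (𝓝 0) := by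
    have h := ((Real.continuousAt_rpow_const 0 (p + 2) (Or.inr (by linarith))).tendsto.const_mul
      (s * η)).mono_left (nhdsWithin_le_nhds (s := Ioi 0))
    rwa [Real.zero_rpow (by linarith), mul_zero] at h
  refine squeeze_zero_norm' ?_ hbound
  filter_upwards [self_mem_nhdsWithin] with u hu
  exact (abs_one_add_mul_sq_rpow_neg_sub_one_mul_rpow_le hη hs hu p).trans (min_le_left _ _)

theorem tendsto_one_add_mul_sq_rpow_neg_sub_one_mul_rpow_atTop (hη : 0 ≤ η) (hs : 0 ≤ s)
    (hp : p < 0) :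
    Tendsto (fun u : ℝ => ((1 + η * u ^ 2) ^ (-s) - 1) * u ^ p) atTop (𝓝 0) := by
  have hbound : Tendsto (fun u : ℝ => u ^ p) atTop (𝓝 0) := by
    simpa using tendsto_rpow_neg_atTop (neg_pos.2 hp)
  refine squeeze_zero_norm' ?_ hbound
  filter_upwards [eventually_gt_atTop 0] with u hu
  exact (abs_one_add_mul_sq_rpow_neg_sub_one_mul_rpow_le hη hs hu p).trans (min_le_right _ _)

theorem hasDerivAt_one_add_mul_sq_rpow_neg_sub_one_mul_rpow (hη : 0 ≤ η) {u : ℝ} (hu : 0 < u)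
    (s p : ℝ) :
    HasDerivAt (fun u : ℝ => ((1 + η * u ^ 2) ^ (-s) - 1) * u ^ (p + 1))
      ((p + 1) * (((1 + η * u ^ 2) ^ (-s) - 1) * u ^ p)
        - 2 * η * s * (u ^ (p + 2) * (1 + η * u ^ 2) ^ (-(s + 1)))) u := by
  have hB : 0 < 1 + η * u ^ 2 := by positivity
  have hbase : HasDerivAt (fun u : ℝ => 1 + η * u ^ 2) (η * (2 * u)) u := by
    simpa using ((hasDerivAt_pow 2 u).const_mul η).const_add 1
  refine (((hbase.rpow_const (p := -s) (Or.inl hB.ne')).sub_const 1).mul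
    (Real.hasDerivAt_rpow_const (p := p + 1) (Or.inl hu.ne'))).congr_deriv ?_
  rw [show -s - 1 = -(s + 1) by ring, add_sub_cancel_right, Real.rpow_add hu p 1,
    Real.rpow_add hu p 2, Real.rpow_one, Real.rpow_two]
  ring

theorem add_one_mul_integral_Ioi_one_add_mul_sq_rpow_neg_sub_one_mul_rpow (hη : 0 ≤ η) (hs : 0 ≤ s)
    (hp3 : -3 < p) (hp1 : p < -1)
    (hG : IntegrableOn (fun u : ℝ => u ^ (p + 2) * (1 + η * u ^ 2) ^ (-(s + 1))) (Ioi 0)) :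
    (p + 1) * ∫ u in Ioi (0 : ℝ), ((1 + η * u ^ 2) ^ (-s) - 1) * u ^ p =
      2 * η * s * ∫ u in Ioi (0 : ℝ), u ^ (p + 2) * (1 + η * u ^ 2) ^ (-(s + 1)) := by
  have hf := integrableOn_Ioi_one_add_mul_sq_rpow_neg_sub_one_mul_rpow hη hs hp3 hp1
  have hcont : ContinuousWithinAt (fun u : ℝ => ((1 + η * u ^ 2) ^ (-s) - 1) * u ^ (p + 1))
      (Ici 0) 0 := by
    rw [← continuousWithinAt_Ioi_iff_Ici, ContinuousWithinAt]
    simpa using tendsto_one_add_mul_sq_rpow_neg_sub_one_mul_rpow_nhdsGT_zero hη hs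
      (p := p + 1) (by linarith)
  have hFTC := integral_Ioi_of_hasDerivAt_of_tendsto hcont
    (fun u hu => hasDerivAt_one_add_mul_sq_rpow_neg_sub_one_mul_rpow hη hu s p)
    ((hf.const_mul _).sub (hG.const_mul _))
    (tendsto_one_add_mul_sq_rpow_neg_sub_one_mul_rpow_atTop hη hs (p := p + 1) (by linarith))
  rw [integral_sub (hf.const_mul _) (hG.const_mul _), integral_const_mul, integral_const_mul]
    at hFTC
  simp only [ne_eq, OfNat.ofNat_ne_zero, not_false_eq_true, zero_pow, mul_zero, add_zero,
    Real.one_rpow, sub_self, zero_mul] at hFTC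
  linarith

theorem integral_Ioi_one_add_mul_sq_rpow_neg_sub_one_mul_rpow (hη : 0 < η) (hs : 0 < s)
    (hp3 : -3 < p) (hp1 : p < -1) :
    ∫ u in Ioi (0 : ℝ), ((1 + η * u ^ 2) ^ (-s) - 1) * u ^ p =
      η ^ (-(p + 1) / 2) * Gamma ((p + 1) / 2) * Gamma (s - (p + 1) / 2) / (2 * Gamma s) := by
  obtain ⟨hGint, hGval⟩ := integral_Ioi_rpow_mul_one_add_mul_sq_rpow_neg hη
    (q := (p + 1) / 2 + 1) (r := s - (p + 1) / 2) (by linarith) (by linarith)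
  rw [show 2 * ((p + 1) / 2 + 1) - 1 = p + 2 by ring,
    show (p + 1) / 2 + 1 + (s - (p + 1) / 2) = s + 1 by ring] at hGint hGval
  have hIBP := add_one_mul_integral_Ioi_one_add_mul_sq_rpow_neg_sub_one_mul_rpow hη.le hs.le hp3 hp1 hGint
  rw [hGval, Real.Gamma_add_one (by linarith), Real.Gamma_add_one hs.ne',
    Real.rpow_add_one hη.ne'] at hIBP
  have hp : p + 1 ≠ 0 := by linarith
  have hΓ : Gamma s ≠ 0 := (Real.Gamma_pos_of_pos hs).ne'
  have hη' : η ^ ((p + 1) / 2) ≠ 0 := by positivity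
  rw [neg_div, Real.rpow_neg hη.le, ← mul_right_inj' hp, hIBP]
  field_simp

end Regularized

/-- for `a ∈ (−2,−1)` and `η > 0`, the function
`u ↦ ((1 + ηu²)^{−2−1/a} − 1)·u^{2/a}` is Lebesgue integrable on `(0,+∞)` and
`∫₀^{+∞} ((1 + ηu²)^{−2−1/a} − 1)·u^{2/a} du
  = (√π/4)·(Γ((a+2)/(2a))/Γ((2a+1)/a))·η^{−(a+2)/(2a)}`. -/
theorem stmt_12 (a η : ℝ) (ha1 : -2 < a) (ha2 : a < -1) (hη : 0 < η) :
    IntegrableOn (fun u : ℝ =>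
      ((1 + η * u ^ 2) ^ (-2 - 1 / a) - 1) * u ^ (2 / a)) (Ioi 0) ∧
    ∫ u in Ioi (0 : ℝ), ((1 + η * u ^ 2) ^ (-2 - 1 / a) - 1) * u ^ (2 / a) =
      (Real.sqrt π / 4) * (Real.Gamma ((a + 2) / (2 * a)) / Real.Gamma ((2 * a + 1) / a)) *
        η ^ (-(a + 2) / (2 * a)) := by
  have ha0 : a ≠ 0 := by linarith
  have hs : 0 < 2 + 1 / a := by
    have : -1 < 1 / a := by rw [lt_div_iff_of_neg (by linarith)]; linarith
    linarith
  have hp3 : -3 < 2 / a := by rw [lt_div_iff_of_neg (by linarith)]; linarith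
  have hp1 : 2 / a < -1 := by rw [div_lt_iff_of_neg (by linarith)]; linarith
  rw [show -2 - 1 / a = -(2 + 1 / a) by ring]
  refine ⟨integrableOn_Ioi_one_add_mul_sq_rpow_neg_sub_one_mul_rpow hη.le hs.le hp3 hp1, ?_⟩
  rw [integral_Ioi_one_add_mul_sq_rpow_neg_sub_one_mul_rpow hη hs hp3 hp1, neg_div, neg_div,
    show 2 + 1 / a - (2 / a + 1) / 2 = 1 / 2 + 1 by ring, Real.Gamma_add_one one_half_pos.ne',
    Real.Gamma_one_half_eq, show (2 / a + 1) / 2 = (a + 2) / (2 * a) by field_simp; ring,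
    show 2 + 1 / a = (2 * a + 1) / a by field_simp]
  ring
end

section
/- Let a ∈ (−1,0) and η > 0. Then the function u ↦ ((1 + ηu²)^{−(2a+3)/(a+2)} − 1)·u^{−2/(a+2)} is Lebesgue integrable on (0,+∞) and ∫₀^{+∞} ((1 + ηu²)^{−(2a+3)/(a+2)} − 1)·u^{−2/(a+2)} du = (√π/4)·(Γ(a/(2(a+2)))/Γ((2a+3)/(a+2)))·η^{−a/(2(a+2))}, where Γ denotes the Euler Gamma function. -/
/-!
Integrating by parts against `x ^ (p + 1) / (p + 1)` turns the integral of
`((1 + η x²)^(-s) - 1) x^p`, for `-3 < p < -1`, into `2 s η / (p + 1)` times the convergent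
integral of `x^(p+2) (1 + η x²)^(-s-1)`; the substitutions `y = x²`, `y = η y'` and
`y = t / (1 - t)` reduce the latter to Euler's Beta integral. The outcome is the formula
`η^(-(p+1)/2) Γ((p+1)/2) Γ(s - (p+1)/2) / (2 Γ(s))`, the same as for `∫ x^p (1 + η x²)^(-s)`
when `-1 < p`. The theorem is the case `p = -2/(a+2)`, `s = (2a+3)/(a+2)`, where
`s - (p+1)/2 = 3/2`.
-/

open MeasureTheory Real Set Filter Topology

theorem integral_rpow_mul_one_sub_rpow {b c : ℝ} (hb : 0 < b) (hc : 0 < c) :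
    ∫ t in (0 : ℝ)..1, t ^ (b - 1) * (1 - t) ^ (c - 1) = Gamma b * Gamma c / Gamma (b + c) := by
  apply Complex.ofReal_injective
  rw [← intervalIntegral.integral_ofReal]
  push_cast [← Complex.Gamma_ofReal]
  rw [← Complex.betaIntegral_eq_Gamma_mul_div _ _ (by simpa) (by simpa), Complex.betaIntegral]
  refine intervalIntegral.integral_congr fun t ht => ?_
  rw [uIcc_of_le zero_le_one] at ht
  push_cast [Complex.ofReal_cpow ht.1, Complex.ofReal_cpow (sub_nonneg.2 ht.2)]
  ring_nf

theorem image_div_one_sub_Ioo : (fun t : ℝ => t / (1 - t)) '' Ioo 0 1 = Ioi 0 := by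
  refine Subset.antisymm ?_ fun y (hy : 0 < y) => ⟨y / (1 + y), ?_, ?_⟩
  · rintro _ ⟨t, ⟨ht0, ht1⟩, rfl⟩
    exact div_pos ht0 (sub_pos.2 ht1)
  · exact ⟨by positivity, (div_lt_one (by positivity)).2 (by linarith)⟩
  · field_simp
    ring

theorem integral_Ioi_rpow_mul_one_add_rpow {b c : ℝ} (hb : 0 < b) (hc : 0 < c) :
    ∫ x in Ioi 0, x ^ (b - 1) * (1 + x) ^ (-(b + c)) = Gamma b * Gamma c / Gamma (b + c) := by
  have hderiv : ∀ t ∈ Ioo (0 : ℝ) 1,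
      HasDerivWithinAt (fun t => t / (1 - t)) (((1 - t) ^ 2)⁻¹) (Ioo 0 1) t := by
    intro t ⟨_, ht1⟩
    refine (((hasDerivAt_id t).div ((hasDerivAt_id t).const_sub 1) (sub_pos.2 ht1).ne').congr_deriv
      ?_).hasDerivWithinAt
    simp
  have hinj : InjOn (fun t : ℝ => t / (1 - t)) (Ioo 0 1) := by
    rintro t ⟨_, ht1⟩ t' ⟨_, ht1'⟩ h
    have := (sub_pos.2 ht1).ne'
    have := (sub_pos.2 ht1').ne'
    field_simp at h
    linarith
  rw [← image_div_one_sub_Ioo,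
    integral_image_eq_integral_abs_deriv_smul measurableSet_Ioo hderiv hinj,
    ← integral_rpow_mul_one_sub_rpow hb hc, intervalIntegral.integral_of_le zero_le_one,
    integral_Ioc_eq_integral_Ioo]
  refine setIntegral_congr_fun measurableSet_Ioo fun t ⟨ht0, ht1⟩ => ?_
  have h1t : 0 < 1 - t := sub_pos.2 ht1
  have : 1 + t / (1 - t) = (1 - t)⁻¹ := by field_simp; ring
  rw [this, smul_eq_mul, abs_of_pos (by positivity), div_rpow ht0.le h1t.le, inv_rpow h1t.le,
    ← rpow_neg h1t.le, div_eq_mul_inv, ← rpow_neg h1t.le, ← rpow_natCast, ← rpow_neg h1t.le,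
    mul_left_comm, mul_assoc, ← rpow_add h1t, ← rpow_add h1t]
  congr 2
  push_cast
  ring

theorem integral_Ioi_rpow_mul_one_add_mul_rpow {b c η : ℝ} (hb : 0 < b) (hc : 0 < c)
    (hη : 0 < η) :
    ∫ x in Ioi 0, x ^ (b - 1) * (1 + η * x) ^ (-(b + c)) =
      η ^ (-b) * (Gamma b * Gamma c / Gamma (b + c)) := by
  have hsubst := integral_comp_mul_left_Ioi (fun x => x ^ (b - 1) * (1 + x) ^ (-(b + c))) 0 hη
  rw [mul_zero, integral_Ioi_rpow_mul_one_add_rpow hb hc, smul_eq_mul] at hsubst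
  have hscale : ∀ x ∈ Ioi (0 : ℝ), (η * x) ^ (b - 1) * (1 + η * x) ^ (-(b + c)) =
      η ^ (b - 1) * (x ^ (b - 1) * (1 + η * x) ^ (-(b + c))) := fun x hx => by
    rw [mul_rpow hη.le (le_of_lt hx), mul_assoc]
  rw [setIntegral_congr_fun measurableSet_Ioi hscale, integral_const_mul,
    eq_inv_mul_iff_mul_eq₀ hη.ne', ← mul_assoc] at hsubst
  have hη_cancel : η ^ (-b) * (η * η ^ (b - 1)) = 1 := by
    rw [rpow_sub_one hη.ne', rpow_neg hη.le]
    field_simp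
  rw [← hsubst, ← mul_assoc, hη_cancel, one_mul]

theorem integral_Ioi_rpow_mul_one_add_mul_sq_rpow {p s η : ℝ} (hp : -1 < p) (hps : p + 1 < 2 * s)
    (hη : 0 < η) :
    ∫ x in Ioi 0, x ^ p * (1 + η * x ^ 2) ^ (-s) =
      η ^ (-((p + 1) / 2)) * (Gamma ((p + 1) / 2) * Gamma (s - (p + 1) / 2) / (2 * Gamma s)) := by
  have hsubst := integral_comp_rpow_Ioi
    (fun y => y ^ ((p + 1) / 2 - 1) * (1 + η * y) ^ (-((p + 1) / 2 + (s - (p + 1) / 2))))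
    two_ne_zero
  rw [integral_Ioi_rpow_mul_one_add_mul_rpow (by linarith) (by linarith) hη] at hsubst
  have hsq : ∀ x ∈ Ioi (0 : ℝ), (|(2 : ℝ)| * x ^ ((2 : ℝ) - 1)) •
      ((x ^ (2 : ℝ)) ^ ((p + 1) / 2 - 1) *
        (1 + η * x ^ (2 : ℝ)) ^ (-((p + 1) / 2 + (s - (p + 1) / 2)))) =
      2 * (x ^ p * (1 + η * x ^ 2) ^ (-s)) := fun x (hx : 0 < x) => by
    rw [add_sub_cancel, smul_eq_mul, abs_two, ← rpow_mul hx.le, rpow_two,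
      show (2 : ℝ) - 1 = 1 by norm_num, rpow_one, show 2 * ((p + 1) / 2 - 1) = p - 1 by ring,
      rpow_sub_one hx.ne']
    field_simp
  rw [setIntegral_congr_fun measurableSet_Ioi hsq, integral_const_mul, add_sub_cancel] at hsubst
  linear_combination hsubst / 2

-- The substitutions above need no integrability hypotheses, so the nonzero value of the
-- integral already forces integrability.
theorem integrableOn_rpow_mul_one_add_mul_sq_rpow {p s η : ℝ} (hp : -1 < p) (hps : p + 1 < 2 * s)
    (hη : 0 < η) : IntegrableOn (fun x => x ^ p * (1 + η * x ^ 2) ^ (-s)) (Ioi 0) := by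
  refine Integrable.of_integral_ne_zero ?_
  rw [integral_Ioi_rpow_mul_one_add_mul_sq_rpow hp hps hη]
  have := Gamma_pos_of_pos (show 0 < (p + 1) / 2 by linarith)
  have := Gamma_pos_of_pos (show 0 < s - (p + 1) / 2 by linarith)
  have := Gamma_pos_of_pos (show 0 < s by linarith)
  positivity

theorem abs_one_add_rpow_neg_sub_one_le_mul {s u : ℝ} (hs : 0 ≤ s) (hu : 0 ≤ u) :
    |(1 + u) ^ (-s) - 1| ≤ s * u := by
  have upper : (1 + u) ^ (-s) ≤ 1 := rpow_le_one_of_one_le_of_nonpos (by linarith) (by linarith)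
  have lower : 1 - s * u ≤ (1 + u) ^ (-s) := by
    rw [rpow_def_of_pos (by linarith)]
    have := log_le_sub_one_of_pos (show 0 < 1 + u by linarith)
    have := add_one_le_exp (log (1 + u) * -s)
    nlinarith
  rw [abs_of_nonpos (by linarith)]
  linarith

theorem abs_one_add_rpow_neg_sub_one_le_one {s u : ℝ} (hs : 0 ≤ s) (hu : 0 ≤ u) :
    |(1 + u) ^ (-s) - 1| ≤ 1 := by
  have := rpow_nonneg (show 0 ≤ 1 + u by linarith) (-s)
  have := rpow_le_one_of_one_le_of_nonpos (show 1 ≤ 1 + u by linarith) (neg_nonpos.2 hs)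
  rw [abs_le]
  constructor <;> linarith

theorem integrableOn_one_add_mul_sq_rpow_sub_one_mul_rpow {p s η : ℝ} (hp3 : -3 < p)
    (hp1 : p < -1) (hs : 0 ≤ s) (hη : 0 ≤ η) :
    IntegrableOn (fun x => ((1 + η * x ^ 2) ^ (-s) - 1) * x ^ p) (Ioi 0) := by
  have hcont : ContinuousOn (fun x => ((1 + η * x ^ 2) ^ (-s) - 1) * x ^ p) (Ioi 0) :=
    fun x (hx : 0 < x) =>
      ((((continuousAt_const.add (continuousAt_const.mul (continuousAt_id.pow 2))).rpow_const
        (Or.inl (show 1 + η * x ^ 2 ≠ 0 by positivity))).sub continuousAt_const).mul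
        (continuousAt_id.rpow_const (Or.inl hx.ne'))).continuousWithinAt
  rw [← Ioc_union_Ioi_eq_Ioi zero_le_one]
  refine IntegrableOn.union ?_ ?_
  · refine Integrable.mono' (g := fun x => s * η * x ^ (p + 2))
      ((intervalIntegral.intervalIntegrable_rpow' (by linarith)).1.const_mul _)
      ((hcont.mono Ioc_subset_Ioi_self).aestronglyMeasurable measurableSet_Ioc) ?_
    filter_upwards [ae_restrict_mem measurableSet_Ioc] with x ⟨hx, _⟩
    rw [norm_mul, norm_of_nonneg (rpow_nonneg hx.le p), rpow_add hx, rpow_two, Real.norm_eq_abs]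
    have := abs_one_add_rpow_neg_sub_one_le_mul hs (show 0 ≤ η * x ^ 2 by positivity)
    have := rpow_nonneg hx.le p
    nlinarith
  · refine Integrable.mono' (g := fun x => x ^ p) (integrableOn_Ioi_rpow_of_lt hp1 one_pos)
      ((hcont.mono (Ioi_subset_Ioi zero_le_one)).aestronglyMeasurable measurableSet_Ioi) ?_
    filter_upwards [ae_restrict_mem measurableSet_Ioi] with x (hx : 1 < x)
    rw [norm_mul, norm_of_nonneg (rpow_nonneg (by linarith) p), Real.norm_eq_abs]
    exact mul_le_of_le_one_left (rpow_nonneg (by linarith) p)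
      (abs_one_add_rpow_neg_sub_one_le_one hs (show 0 ≤ η * x ^ 2 by positivity))

theorem integral_Ioi_one_add_mul_sq_rpow_sub_one_mul_rpow_eq_mul_integral {p s η : ℝ}
    (hp3 : -3 < p) (hp1 : p < -1) (hs : 0 ≤ s) (hη : 0 < η) :
    ∫ x in Ioi 0, ((1 + η * x ^ 2) ^ (-s) - 1) * x ^ p =
      2 * s * η / (p + 1) * ∫ x in Ioi 0, x ^ (p + 2) * (1 + η * x ^ 2) ^ (-(s + 1)) := by
  set u : ℝ → ℝ := fun x => (1 + η * x ^ 2) ^ (-s) - 1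
  set v : ℝ → ℝ := fun x => x ^ (p + 1) / (p + 1)
  have hp : p + 1 ≠ 0 := by linarith
  have hu : ∀ x ∈ Ioi (0 : ℝ),
      HasDerivAt u (-(2 * s * η) * x * (1 + η * x ^ 2) ^ (-(s + 1))) x := by
    intro x _
    have := (((hasDerivAt_pow 2 x).const_mul η).const_add 1).rpow_const (p := -s)
      (Or.inl (by positivity))
    refine (this.sub_const 1).congr_deriv ?_
    rw [show -s - 1 = -(s + 1) by ring]
    push_cast
    ring
  have hv : ∀ x ∈ Ioi (0 : ℝ), HasDerivAt v (x ^ p) x := by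
    intro x (hx : 0 < x)
    refine ((hasDerivAt_rpow_const (p := p + 1) (Or.inl hx.ne')).div_const (p + 1)).congr_deriv ?_
    rw [add_sub_cancel_right]
    field_simp
  have hu'v : EqOn (fun x => -(2 * s * η) * x * (1 + η * x ^ 2) ^ (-(s + 1)) * v x)
      (fun x => -(2 * s * η / (p + 1)) * (x ^ (p + 2) * (1 + η * x ^ 2) ^ (-(s + 1))))
      (Ioi 0) := by
    intro x (hx : 0 < x)
    simp only [v]
    rw [show p + 2 = p + 1 + 1 by ring, rpow_add_one hx.ne' (p + 1)]
    field_simp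
  have hnorm : ∀ x > 0, ‖(u * v) x‖ = |u x| * (x ^ (p + 1) / |p + 1|) := fun x hx => by
    rw [Pi.mul_apply, norm_mul, norm_div, norm_of_nonneg (rpow_nonneg hx.le _)]
    rfl
  have hzero : Tendsto (u * v) (𝓝[>] 0) (𝓝 0) := by
    refine squeeze_zero_norm' (a := fun x => s * η / |p + 1| * x ^ (p + 3)) ?_ ?_
    · filter_upwards [self_mem_nhdsWithin] with x (hx : 0 < x)
      have hu_le := mul_le_mul_of_nonneg_right
        (abs_one_add_rpow_neg_sub_one_le_mul hs (show 0 ≤ η * x ^ 2 by positivity))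
        (show 0 ≤ x ^ (p + 1) / |p + 1| by positivity)
      rw [hnorm x hx, show p + 3 = p + 1 + 2 by ring, rpow_add hx (p + 1), rpow_two]
      exact hu_le.trans_eq (by ring)
    · have hpow : Tendsto (fun x : ℝ => x ^ (p + 3)) (𝓝[>] 0) (𝓝 0) := by
        have := (continuous_rpow_const (show 0 ≤ p + 3 by linarith)).tendsto 0
        rw [zero_rpow (by linarith)] at this
        exact this.mono_left nhdsWithin_le_nhds
      simpa using hpow.const_mul (s * η / |p + 1|)
  have hinfty : Tendsto (u * v) atTop (𝓝 0) := by
    refine squeeze_zero_norm' (a := fun x => x ^ (p + 1) / |p + 1|) ?_ ?_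
    · filter_upwards [eventually_gt_atTop 0] with x hx
      rw [hnorm x hx]
      exact mul_le_of_le_one_left (by positivity)
        (abs_one_add_rpow_neg_sub_one_le_one hs (show 0 ≤ η * x ^ 2 by positivity))
    · simpa using (tendsto_rpow_neg_atTop (show 0 < -(p + 1) by linarith)).div_const |p + 1|
  rw [integral_Ioi_mul_deriv_eq_deriv_mul hu hv
    (integrableOn_one_add_mul_sq_rpow_sub_one_mul_rpow hp3 hp1 hs hη.le)
    (IntegrableOn.congr_fun ((integrableOn_rpow_mul_one_add_mul_sq_rpow (by linarith)
      (by linarith) hη).const_mul _) hu'v.symm measurableSet_Ioi) hzero hinfty,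
    setIntegral_congr_fun measurableSet_Ioi hu'v, integral_const_mul]
  ring

theorem integral_Ioi_one_add_mul_sq_rpow_sub_one_mul_rpow {p s η : ℝ} (hp3 : -3 < p)
    (hp1 : p < -1) (hs : 0 < s) (hη : 0 < η) :
    ∫ x in Ioi 0, ((1 + η * x ^ 2) ^ (-s) - 1) * x ^ p =
      η ^ (-((p + 1) / 2)) * (Gamma ((p + 1) / 2) * Gamma (s - (p + 1) / 2) / (2 * Gamma s)) := by
  have hp : p + 1 ≠ 0 := by linarith
  have := (Gamma_pos_of_pos hs).ne'
  rw [integral_Ioi_one_add_mul_sq_rpow_sub_one_mul_rpow_eq_mul_integral hp3 hp1 hs.le hη,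
    integral_Ioi_rpow_mul_one_add_mul_sq_rpow (by linarith) (by linarith) hη,
    show (p + 2 + 1) / 2 = (p + 1) / 2 + 1 by ring,
    show s + 1 - ((p + 1) / 2 + 1) = s - (p + 1) / 2 by ring,
    Gamma_add_one (div_ne_zero hp two_ne_zero), Gamma_add_one hs.ne', neg_add, rpow_add hη,
    rpow_neg_one]
  field_simp

theorem Gamma_three_div_two : Gamma (3 / 2) = √π / 2 := by
  rw [show (3 : ℝ) / 2 = 1 / 2 + 1 by norm_num, Gamma_add_one (by norm_num), Gamma_one_half_eq]
  ring

/-- for `a ∈ (−1,0)` and `η > 0`, the function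
`u ↦ ((1 + ηu²)^{−(2a+3)/(a+2)} − 1)·u^{−2/(a+2)}` is Lebesgue integrable on `(0,+∞)` and
`∫₀^{+∞} ((1 + ηu²)^{−(2a+3)/(a+2)} − 1)·u^{−2/(a+2)} du
  = (√π/4)·(Γ(a/(2(a+2)))/Γ((2a+3)/(a+2)))·η^{−a/(2(a+2))}`. -/
theorem stmt_14 (a η : ℝ) (ha1 : -1 < a) (ha2 : a < 0) (hη : 0 < η) :
    IntegrableOn (fun u : ℝ =>
      ((1 + η * u ^ 2) ^ (-(2 * a + 3) / (a + 2)) - 1) * u ^ (-2 / (a + 2))) (Ioi 0) ∧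
    ∫ u in Ioi (0 : ℝ),
        ((1 + η * u ^ 2) ^ (-(2 * a + 3) / (a + 2)) - 1) * u ^ (-2 / (a + 2)) =
      (Real.sqrt π / 4) *
        (Real.Gamma (a / (2 * (a + 2))) / Real.Gamma ((2 * a + 3) / (a + 2))) *
        η ^ (-a / (2 * (a + 2))) := by
  have ha : 0 < a + 2 := by linarith
  have hp3 : -3 < -2 / (a + 2) := by rw [lt_div_iff₀ ha]; linarith
  have hp1 : -2 / (a + 2) < -1 := by rw [div_lt_iff₀ ha]; linarith
  have hs : 0 < (2 * a + 3) / (a + 2) := div_pos (by linarith) ha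
  rw [neg_div (a + 2) (2 * a + 3)]
  refine ⟨integrableOn_one_add_mul_sq_rpow_sub_one_mul_rpow hp3 hp1 hs.le hη.le, ?_⟩
  rw [integral_Ioi_one_add_mul_sq_rpow_sub_one_mul_rpow hp3 hp1 hs hη,
    show (-2 / (a + 2) + 1) / 2 = a / (2 * (a + 2)) by field_simp; ring,
    show (2 * a + 3) / (a + 2) - a / (2 * (a + 2)) = 3 / 2 by field_simp; ring,
    Gamma_three_div_two, neg_div]
  ring
end
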